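/- arXiv:2401.09024 — 11 statements merged into one kernel-verified Lean document; each statement's English description precedes it below -/
import Mathlib

section
/- Under the derivative formulas for a timelike surface with parallel normalized mean curvature vector field, the following two integrability conditions hold on D: x(λ₂) + y(ν) + 2γ₁λ₂ = 0 and x(ν) + y(λ₁) + 2γ₂λ₁ = 0. -/
noncomputable section

/-- ℝ⁴ as the space of quadruples of reals. -/
abbrev V4 := Fin 4 → ℝ

/-- The Minkowski inner product of signature (3,1) on ℝ⁴. -/
def mink (p q : V4) : ℝ := p 0 * q 0 + p 1 * q 1 + p 2 * q 2 - p 3 * q 3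

/-- Partial derivative with respect to the first coordinate `u` of `ℝ × ℝ`. -/
def pu {E : Type*} [NormedAddCommGroup E] [NormedSpace ℝ E]
    (g : ℝ × ℝ → E) (p : ℝ × ℝ) : E := fderiv ℝ g p (1, 0)

/-- Partial derivative with respect to the second coordinate `v` of `ℝ × ℝ`. -/
def pv {E : Type*} [NormedAddCommGroup E] [NormedSpace ℝ E]
    (g : ℝ × ℝ → E) (p : ℝ × ℝ) : E := fderiv ℝ g p (0, 1)

lemma diffAt {E : Type*} [NormedAddCommGroup E] [NormedSpace ℝ E]
    {g : ℝ × ℝ → E} {D : Set (ℝ × ℝ)} {p : ℝ × ℝ} (hD : IsOpen D) (hp : p ∈ D)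
    (h : ContDiffOn ℝ (⊤ : ℕ∞) g D) : DifferentiableAt ℝ g p :=
  (h.contDiffAt (hD.mem_nhds hp)).differentiableAt (by simp)

lemma fderiv_smul_apply' (c : ℝ × ℝ → ℝ) (g : ℝ × ℝ → V4) (p w : ℝ × ℝ)
    (hc : DifferentiableAt ℝ c p) (hg : DifferentiableAt ℝ g p) :
    fderiv ℝ (fun q => c q • g q) p w
      = (fderiv ℝ c p w) • g p + c p • (fderiv ℝ g p w) := by
  rw [fderiv_fun_smul hc hg]
  simp [ContinuousLinearMap.smulRight_apply]
  abel

lemma big (c a b : ℝ × ℝ → ℝ) (g h : ℝ × ℝ → V4) (p w : ℝ × ℝ)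
    (dc : DifferentiableAt ℝ c p) (da : DifferentiableAt ℝ a p)
    (db : DifferentiableAt ℝ b p) (dg : DifferentiableAt ℝ g p)
    (dh : DifferentiableAt ℝ h p) :
    fderiv ℝ (fun q => c q • (a q • g q + b q • h q)) p w
      = (fderiv ℝ c p w) • (a p • g p + b p • h p)
        + c p • ((fderiv ℝ a p w) • g p + a p • fderiv ℝ g p w
            + ((fderiv ℝ b p w) • h p + b p • fderiv ℝ h p w)) := by
  rw [fderiv_smul_apply' c (fun q => a q • g q + b q • h q) _ _ dc ((da.smul dg).add (db.smul dh))]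
  congr 1
  rw [fderiv_fun_add (f := fun q => a q • g q) (g := fun q => b q • h q) (da.smul dg)
      (db.smul dh), ContinuousLinearMap.add_apply,
    fderiv_smul_apply' _ _ _ _ da dg, fderiv_smul_apply' _ _ _ _ db dh]

lemma symm_piece {n₁ : ℝ × ℝ → V4} {D : Set (ℝ × ℝ)} {p : ℝ × ℝ} (hD : IsOpen D) (hp : p ∈ D)
    (hn₁ : ContDiffOn ℝ (⊤ : ℕ∞) n₁ D) :
    fderiv ℝ (pu n₁) p (0, 1) = fderiv ℝ (pv n₁) p (1, 0) := by
  have hat : ContDiffAt ℝ (⊤ : ℕ∞) n₁ p := hn₁.contDiffAt (hD.mem_nhds hp)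
  have hd2 : DifferentiableAt ℝ (fderiv ℝ n₁) p :=
    (hat.fderiv_right (m := (⊤ : ℕ∞)) (by simp)).differentiableAt (by simp)
  have hsym := hat.isSymmSndFDerivAt (by rw [minSmoothness_of_isRCLikeNormedField]; exact WithTop.coe_le_coe.mpr le_top)
  have h1 : fderiv ℝ (pu n₁) p = (fderiv ℝ (fderiv ℝ n₁) p).flip ((1 : ℝ), (0 : ℝ)) := by
    have := fderiv_clm_apply (c := fderiv ℝ n₁) (u := fun _ => ((1 : ℝ), (0 : ℝ))) hd2
      (differentiableAt_const _)
    show fderiv ℝ (fun y => fderiv ℝ n₁ y (1, 0)) p = _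
    simpa [pu, fderiv_const_apply] using this
  have h2 : fderiv ℝ (pv n₁) p = (fderiv ℝ (fderiv ℝ n₁) p).flip ((0 : ℝ), (1 : ℝ)) := by
    have := fderiv_clm_apply (c := fderiv ℝ n₁) (u := fun _ => ((0 : ℝ), (1 : ℝ))) hd2
      (differentiableAt_const _)
    show fderiv ℝ (fun y => fderiv ℝ n₁ y (0, 1)) p = _
    simpa [pv, fderiv_const_apply] using this
  rw [h1, h2]
  exact hsym _ _


/-- Under the derivative formulas for a timelike surface with parallel
normalized mean curvature vector field, the integrability conditions
`x(lam₂) + y(ν) + 2γ₁lam₂ = 0` and `x(ν) + y(lam₁) + 2γ₂lam₁ = 0` hold on `D`,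
where `x(g) = g_u/f` and `y(g) = g_v/f`. -/
theorem integrability_conditions_first
    (D : Set (ℝ × ℝ)) (hD : IsOpen D)
    (f γ₁ γ₂ ν lam₁ lam₂ μ₁ μ₂ : ℝ × ℝ → ℝ) (x y n₁ n₂ : ℝ × ℝ → V4)
    (hf : ContDiffOn ℝ (⊤ : ℕ∞) f D) (hfpos : ∀ p ∈ D, 0 < f p)
    (hx : ContDiffOn ℝ (⊤ : ℕ∞) x D) (hy : ContDiffOn ℝ (⊤ : ℕ∞) y D)
    (hn₁ : ContDiffOn ℝ (⊤ : ℕ∞) n₁ D) (hn₂ : ContDiffOn ℝ (⊤ : ℕ∞) n₂ D)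
    (hν : ContDiffOn ℝ (⊤ : ℕ∞) ν D) (hlam₁ : ContDiffOn ℝ (⊤ : ℕ∞) lam₁ D) (hlam₂ : ContDiffOn ℝ (⊤ : ℕ∞) lam₂ D)
    (hμ₁ : ContDiffOn ℝ (⊤ : ℕ∞) μ₁ D) (hμ₂ : ContDiffOn ℝ (⊤ : ℕ∞) μ₂ D)
    -- x, y, n₁, n₂ are linearly independent at every point of D
    (hli : ∀ p ∈ D, LinearIndependent ℝ ![x p, y p, n₁ p, n₂ p])
    -- γ₁ = f_u/f², γ₂ = f_v/f²
    (hγ₁ : ∀ p ∈ D, γ₁ p = pu f p / (f p) ^ 2)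
    (hγ₂ : ∀ p ∈ D, γ₂ p = pv f p / (f p) ^ 2)
    -- the derivative formulas
    (hxu : ∀ p ∈ D, pu x p = f p • (γ₁ p • x p + lam₁ p • n₁ p + μ₁ p • n₂ p))
    (hxv : ∀ p ∈ D, pv x p = f p • ((-γ₂ p) • x p - ν p • n₁ p))
    (hyu : ∀ p ∈ D, pu y p = f p • ((-γ₁ p) • y p - ν p • n₁ p))
    (hyv : ∀ p ∈ D, pv y p = f p • (γ₂ p • y p + lam₂ p • n₁ p + μ₂ p • n₂ p))
    (hn₁u : ∀ p ∈ D, pu n₁ p = f p • ((-ν p) • x p + lam₁ p • y p))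
    (hn₁v : ∀ p ∈ D, pv n₁ p = f p • (lam₂ p • x p - ν p • y p))
    (hn₂u : ∀ p ∈ D, pu n₂ p = f p • (μ₁ p • y p))
    (hn₂v : ∀ p ∈ D, pv n₂ p = f p • (μ₂ p • x p))
    :
    ∀ p ∈ D,
      pu lam₂ p / f p + pv ν p / f p + 2 * γ₁ p * lam₂ p = 0 ∧
      pu ν p / f p + pv lam₁ p / f p + 2 * γ₂ p * lam₁ p = 0 := by
  
  intro p hp
  have hmem : D ∈ nhds p := hD.mem_nhds hp
  have df := diffAt hD hp hf
  have dx := diffAt hD hp hx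
  have dy := diffAt hD hp hy
  have dν := diffAt hD hp hν
  have dl₁ := diffAt hD hp hlam₁
  have dl₂ := diffAt hD hp hlam₂
  -- eventual equalities
  have hA : pu n₁ =ᶠ[nhds p] (fun q => f q • ((fun q => -ν q) q • x q + lam₁ q • y q)) := by
    filter_upwards [hmem] with q hq
    simpa using hn₁u q hq
  have hB : pv n₁ =ᶠ[nhds p] (fun q => f q • (lam₂ q • x q + (fun q => -ν q) q • y q)) := by
    filter_upwards [hmem] with q hq
    simpa [sub_eq_add_neg, neg_smul] using hn₁v q hq
  have EA : fderiv ℝ (pu n₁) p (0, 1)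
      = (pv f p) • ((-ν p) • x p + lam₁ p • y p)
        + f p • ((-(pv ν p)) • x p + (-ν p) • pv x p
            + ((pv lam₁ p) • y p + lam₁ p • pv y p)) := by
    rw [hA.fderiv_eq]
    have := big f (fun q => -ν q) lam₁ x y p (0, 1) df dν.neg dl₁ dx dy
    rw [this, fderiv_fun_neg]
    simp only [ContinuousLinearMap.neg_apply]
    rfl
  have EB : fderiv ℝ (pv n₁) p (1, 0)
      = (pu f p) • (lam₂ p • x p + (-ν p) • y p)
        + f p • ((pu lam₂ p) • x p + lam₂ p • pu x p
            + ((-(pu ν p)) • y p + (-ν p) • pu y p)) := by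
    rw [hB.fderiv_eq]
    have := big f lam₂ (fun q => -ν q) x y p (1, 0) df dl₂ dν.neg dx dy
    rw [this, fderiv_fun_neg]
    simp only [ContinuousLinearMap.neg_apply]
    rfl
  have heq : fderiv ℝ (pu n₁) p (0, 1) = fderiv ℝ (pv n₁) p (1, 0) := symm_piece hD hp hn₁
  rw [EA, EB, hxv p hp, hyv p hp, hxu p hp, hyu p hp] at heq
  set F := f p
  set G1 := γ₁ p
  set G2 := γ₂ p
  set N := ν p
  set L1 := lam₁ p
  set L2 := lam₂ p
  -- coefficients
  have hEv : (pv f p) • ((-N) • x p + L1 • y p)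
        + F • ((-(pv ν p)) • x p + (-N) • (F • ((-G2) • x p - N • n₁ p))
            + ((pv lam₁ p) • y p + L1 • (F • (G2 • y p + L2 • n₁ p + μ₂ p • n₂ p))))
      = (-(pv f p * N) - F * pv ν p + F ^ 2 * N * G2) • x p
        + (pv f p * L1 + F * pv lam₁ p + F ^ 2 * L1 * G2) • y p
        + (F ^ 2 * (N * N + L1 * L2)) • n₁ p
        + (F ^ 2 * L1 * μ₂ p) • n₂ p := by
    module
  have hEu : (pu f p) • (L2 • x p + (-N) • y p)
        + F • ((pu lam₂ p) • x p + L2 • (F • (G1 • x p + L1 • n₁ p + μ₁ p • n₂ p))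
            + ((-(pu ν p)) • y p + (-N) • (F • ((-G1) • y p - N • n₁ p))))
      = (pu f p * L2 + F * pu lam₂ p + F ^ 2 * L2 * G1) • x p
        + (-(pu f p * N) - F * pu ν p + F ^ 2 * N * G1) • y p
        + (F ^ 2 * (L2 * L1 + N * N)) • n₁ p
        + (F ^ 2 * L2 * μ₁ p) • n₂ p := by
    module
  rw [hEv, hEu] at heq
  set a1 := -(pv f p * N) - F * pv ν p + F ^ 2 * N * G2
  set a2 := pv f p * L1 + F * pv lam₁ p + F ^ 2 * L1 * G2
  set a3 := F ^ 2 * (N * N + L1 * L2)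
  set a4 := F ^ 2 * L1 * μ₂ p
  set b1 := pu f p * L2 + F * pu lam₂ p + F ^ 2 * L2 * G1
  set b2 := -(pu f p * N) - F * pu ν p + F ^ 2 * N * G1
  set b3 := F ^ 2 * (L2 * L1 + N * N)
  set b4 := F ^ 2 * L2 * μ₁ p
  have hzero : (a1 - b1) • x p + (a2 - b2) • y p + (a3 - b3) • n₁ p + (a4 - b4) • n₂ p = 0 := by
    have h2 : (a1 - b1) • x p + (a2 - b2) • y p + (a3 - b3) • n₁ p + (a4 - b4) • n₂ p
        = (a1 • x p + a2 • y p + a3 • n₁ p + a4 • n₂ p)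
          - (b1 • x p + b2 • y p + b3 • n₁ p + b4 • n₂ p) := by module
    rw [h2, heq, sub_self]
  have hco : ∀ i, (![a1 - b1, a2 - b2, a3 - b3, a4 - b4] : Fin 4 → ℝ) i = 0 := by
    apply Fintype.linearIndependent_iff.mp (hli p hp)
    rw [Fin.sum_univ_four]
    simpa using hzero
  have hc1 : a1 - b1 = 0 := by simpa using hco 0
  have hc2 : a2 - b2 = 0 := by simpa using hco 1
  have hF : F ≠ 0 := ne_of_gt (hfpos p hp)
  have hg1 : G1 = pu f p / F ^ 2 := hγ₁ p hp
  have hg2 : G2 = pv f p / F ^ 2 := hγ₂ p hp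
  constructor
  · simp only [a1, b1] at hc1
    rw [hg1, hg2] at hc1
    rw [hg1]
    field_simp at hc1 ⊢
    refine mul_left_cancel₀ hF ?_
    rw [mul_zero]
    linear_combination -F * hc1
  · simp only [a2, b2] at hc2
    rw [hg1, hg2] at hc2
    rw [hg2]
    field_simp at hc2 ⊢
    refine mul_left_cancel₀ hF ?_
    rw [mul_zero]
    linear_combination F * hc2
end
end

section
/- Under the derivative formulas for a timelike surface with parallel normalized mean curvature vector field, the following integrability conditions hold on D: x(μ₂) + 2γ₁μ₂ = 0, y(μ₁) + 2γ₂μ₁ = 0, and μ₁λ₂ − λ₁μ₂ = 0. -/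
noncomputable section

private lemma pd_smul {a : ℝ × ℝ → ℝ} {w : ℝ × ℝ → V4} {p : ℝ × ℝ}
    (ha : DifferentiableAt ℝ a p) (hw : DifferentiableAt ℝ w p) (e : ℝ × ℝ) :
    fderiv ℝ (fun q => a q • w q) p e = (fderiv ℝ a p e) • w p + a p • fderiv ℝ w p e := by
  rw [fderiv_fun_smul ha hw]
  simp [ContinuousLinearMap.add_apply, ContinuousLinearMap.smul_apply,
    ContinuousLinearMap.smulRight_apply, add_comm]

private lemma pd_mul {a b : ℝ × ℝ → ℝ} {p : ℝ × ℝ}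
    (ha : DifferentiableAt ℝ a p) (hb : DifferentiableAt ℝ b p) (e : ℝ × ℝ) :
    fderiv ℝ (fun q => a q * b q) p e = (fderiv ℝ a p e) * b p + a p * fderiv ℝ b p e := by
  rw [fderiv_fun_mul ha hb]
  simp [ContinuousLinearMap.add_apply, ContinuousLinearMap.smul_apply]
  ring

private lemma fderiv_fderiv_apply {g : ℝ × ℝ → V4} {p : ℝ × ℝ}
    (hg : DifferentiableAt ℝ (fderiv ℝ g) p) (e e' : ℝ × ℝ) :
    fderiv ℝ (fun q => fderiv ℝ g q e) p e' = fderiv ℝ (fderiv ℝ g) p e' e := by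
  rw [fderiv_clm_apply hg (differentiableAt_const e)]
  simp

/-- Under the derivative formulas for a timelike surface with parallel
normalized mean curvature vector field, the integrability conditions
`x(μ₂) + 2γ₁μ₂ = 0`, `y(μ₁) + 2γ₂μ₁ = 0` and `μ₁λ₂ − λ₁μ₂ = 0` hold on `D`,
where `x(g) = g_u/f` and `y(g) = g_v/f`. -/
theorem integrability_conditions_second
    (D : Set (ℝ × ℝ)) (hD : IsOpen D)
    (f γ₁ γ₂ ν lam₁ lam₂ μ₁ μ₂ : ℝ × ℝ → ℝ) (x y n₁ n₂ : ℝ × ℝ → V4)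
    (hf : ContDiffOn ℝ (⊤ : ℕ∞) f D) (hfpos : ∀ p ∈ D, 0 < f p)
    (hx : ContDiffOn ℝ (⊤ : ℕ∞) x D) (hy : ContDiffOn ℝ (⊤ : ℕ∞) y D)
    (hn₁ : ContDiffOn ℝ (⊤ : ℕ∞) n₁ D) (hn₂ : ContDiffOn ℝ (⊤ : ℕ∞) n₂ D)
    (hν : ContDiffOn ℝ (⊤ : ℕ∞) ν D) (hlam₁ : ContDiffOn ℝ (⊤ : ℕ∞) lam₁ D) (hlam₂ : ContDiffOn ℝ (⊤ : ℕ∞) lam₂ D)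
    (hμ₁ : ContDiffOn ℝ (⊤ : ℕ∞) μ₁ D) (hμ₂ : ContDiffOn ℝ (⊤ : ℕ∞) μ₂ D)
    -- x, y, n₁, n₂ are linearly independent at every point of D
    (hli : ∀ p ∈ D, LinearIndependent ℝ ![x p, y p, n₁ p, n₂ p])
    -- γ₁ = f_u/f², γ₂ = f_v/f²
    (hγ₁ : ∀ p ∈ D, γ₁ p = pu f p / (f p) ^ 2)
    (hγ₂ : ∀ p ∈ D, γ₂ p = pv f p / (f p) ^ 2)
    -- the derivative formulas
    (hxu : ∀ p ∈ D, pu x p = f p • (γ₁ p • x p + lam₁ p • n₁ p + μ₁ p • n₂ p))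
    (hxv : ∀ p ∈ D, pv x p = f p • ((-γ₂ p) • x p - ν p • n₁ p))
    (hyu : ∀ p ∈ D, pu y p = f p • ((-γ₁ p) • y p - ν p • n₁ p))
    (hyv : ∀ p ∈ D, pv y p = f p • (γ₂ p • y p + lam₂ p • n₁ p + μ₂ p • n₂ p))
    (hn₁u : ∀ p ∈ D, pu n₁ p = f p • ((-ν p) • x p + lam₁ p • y p))
    (hn₁v : ∀ p ∈ D, pv n₁ p = f p • (lam₂ p • x p - ν p • y p))
    (hn₂u : ∀ p ∈ D, pu n₂ p = f p • (μ₁ p • y p))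
    (hn₂v : ∀ p ∈ D, pv n₂ p = f p • (μ₂ p • x p))
    :
    ∀ p ∈ D,
      pu μ₂ p / f p + 2 * γ₁ p * μ₂ p = 0 ∧
      pv μ₁ p / f p + 2 * γ₂ p * μ₁ p = 0 ∧
      μ₁ p * lam₂ p - lam₁ p * μ₂ p = 0 := by
  intro p hp
  have hmem : D ∈ nhds p := hD.mem_nhds hp
  have hfp : f p ≠ 0 := (hfpos p hp).ne'
  -- differentiability at p
  have hfd : DifferentiableAt ℝ f p := (hf.contDiffAt hmem).differentiableAt (by simp)
  have hxd : DifferentiableAt ℝ x p := (hx.contDiffAt hmem).differentiableAt (by simp)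
  have hyd : DifferentiableAt ℝ y p := (hy.contDiffAt hmem).differentiableAt (by simp)
  have hμ₁d : DifferentiableAt ℝ μ₁ p := (hμ₁.contDiffAt hmem).differentiableAt (by simp)
  have hμ₂d : DifferentiableAt ℝ μ₂ p := (hμ₂.contDiffAt hmem).differentiableAt (by simp)
  -- symmetry of the second derivative of n₂
  have hn₂at : ContDiffAt ℝ (⊤ : ℕ∞) n₂ p := hn₂.contDiffAt hmem
  have hsymm := (hn₂at.isSymmSndFDerivAt (by rw [minSmoothness_of_isRCLikeNormedField]; exact WithTop.coe_le_coe.mpr le_top)) (1, 0) (0, 1)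
  have hc : DifferentiableAt ℝ (fderiv ℝ n₂) p :=
    (hn₂at.fderiv_right (m := 1) (by exact WithTop.coe_le_coe.mpr le_top)).differentiableAt one_ne_zero
  -- the two mixed partials, rewritten via the structure equations
  have hPev : (fun q => fderiv ℝ n₂ q (0, 1)) =ᶠ[nhds p] (fun q => (f q * μ₂ q) • x q) := by
    filter_upwards [hmem] with q hq
    have h := hn₂v q hq
    simp only [pv] at h
    rw [h, smul_smul]
  have hQev : (fun q => fderiv ℝ n₂ q (1, 0)) =ᶠ[nhds p] (fun q => (f q * μ₁ q) • y q) := by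
    filter_upwards [hmem] with q hq
    have h := hn₂u q hq
    simp only [pu] at h
    rw [h, smul_smul]
  have hkey : fderiv ℝ (fun q => (f q * μ₂ q) • x q) p (1, 0)
      = fderiv ℝ (fun q => (f q * μ₁ q) • y q) p (0, 1) := by
    rw [← hPev.fderiv_eq, ← hQev.fderiv_eq,
      fderiv_fderiv_apply hc (0, 1) (1, 0), fderiv_fderiv_apply hc (1, 0) (0, 1), hsymm]
  -- expand both sides
  have hexp1 : fderiv ℝ (fun q => (f q * μ₂ q) • x q) p (1, 0)
      = (pu f p * μ₂ p + f p * pu μ₂ p) • x p + (f p * μ₂ p) • pu x p := by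
    rw [pd_smul (a := fun q => f q * μ₂ q) (hfd.mul hμ₂d) hxd, pd_mul hfd hμ₂d]
    rfl
  have hexp2 : fderiv ℝ (fun q => (f q * μ₁ q) • y q) p (0, 1)
      = (pv f p * μ₁ p + f p * pv μ₁ p) • y p + (f p * μ₁ p) • pv y p := by
    rw [pd_smul (a := fun q => f q * μ₁ q) (hfd.mul hμ₁d) hyd, pd_mul hfd hμ₁d]
    rfl
  rw [hexp1, hexp2, hxu p hp, hyv p hp] at hkey
  rw [← sub_eq_zero] at hkey
  -- the linear combination
  set A := pu f p * μ₂ p + f p * pu μ₂ p with hA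
  set B := pv f p * μ₁ p + f p * pv μ₁ p with hB
  have hcomb : (A + f p ^ 2 * μ₂ p * γ₁ p) • x p
      + (-(B + f p ^ 2 * μ₁ p * γ₂ p)) • y p
      + (f p ^ 2 * (μ₂ p * lam₁ p - μ₁ p * lam₂ p)) • n₁ p
      + (f p ^ 2 * (μ₂ p * μ₁ p - μ₁ p * μ₂ p)) • n₂ p = 0 := by
    rw [← hkey]
    module
  have hcoef := Fintype.linearIndependent_iff.mp (hli p hp)
    ![A + f p ^ 2 * μ₂ p * γ₁ p, -(B + f p ^ 2 * μ₁ p * γ₂ p),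
      f p ^ 2 * (μ₂ p * lam₁ p - μ₁ p * lam₂ p), f p ^ 2 * (μ₂ p * μ₁ p - μ₁ p * μ₂ p)]
    (by
      rw [Fin.sum_univ_four]
      simpa using hcomb)
  have h0 : A + f p ^ 2 * μ₂ p * γ₁ p = 0 := by simpa using hcoef 0
  have h1 : B + f p ^ 2 * μ₁ p * γ₂ p = 0 := by
    have := hcoef 1; simp at this; linarith [this]
  have h2 : f p ^ 2 * (μ₂ p * lam₁ p - μ₁ p * lam₂ p) = 0 := by simpa using hcoef 2
  -- γ relations
  have hpf : pu f p = γ₁ p * f p ^ 2 := by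
    rw [hγ₁ p hp]; field_simp
  have hpfv : pv f p = γ₂ p * f p ^ 2 := by
    rw [hγ₂ p hp]; field_simp
  refine ⟨?_, ?_, ?_⟩
  · rw [hA, hpf] at h0
    have h3 : f p * (pu μ₂ p + 2 * γ₁ p * μ₂ p * f p) = 0 := by linear_combination h0
    have h4 : pu μ₂ p + 2 * γ₁ p * μ₂ p * f p = 0 :=
      (mul_eq_zero.mp h3).resolve_left hfp
    field_simp
    linarith [h4]
  · rw [hB, hpfv] at h1
    have h3 : f p * (pv μ₁ p + 2 * γ₂ p * μ₁ p * f p) = 0 := by linear_combination h1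
    have h4 : pv μ₁ p + 2 * γ₂ p * μ₁ p * f p = 0 :=
      (mul_eq_zero.mp h3).resolve_left hfp
    field_simp
    linarith [h4]
  · have hf2 : f p ^ 2 ≠ 0 := pow_ne_zero 2 hfp
    have := (mul_eq_zero.mp h2).resolve_left hf2
    linarith [this]
end
end

section
/- Under the derivative formulas for a timelike surface with parallel normalized mean curvature vector field, the Gauss equation holds on D: x(γ₂) + y(γ₁) + 2γ₁γ₂ = ν² − λ₁λ₂ − μ₁μ₂; that is, the Gauss curvature K := x(γ₂) + y(γ₁) + 2γ₁γ₂ of the surface is expressed as K = ν² − λ₁λ₂ − μ₁μ₂. -/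
noncomputable section

lemma fd_smul {c : ℝ × ℝ → ℝ} {w : ℝ × ℝ → V4} {p e : ℝ × ℝ}
    (hc : DifferentiableAt ℝ c p) (hw : DifferentiableAt ℝ w p) :
    fderiv ℝ (fun q => c q • w q) p e = c p • fderiv ℝ w p e + fderiv ℝ c p e • w p := by
  rw [fderiv_fun_smul hc hw]
  simp

lemma pd_symm {g : ℝ × ℝ → V4} {p : ℝ × ℝ} (hg : ContDiffAt ℝ (⊤ : ℕ∞) g p) :
    pv (pu g) p = pu (pv g) p := by
  have hsf : IsSymmSndFDerivAt ℝ g p := hg.isSymmSndFDerivAt (by rw [minSmoothness_of_isRCLikeNormedField]; exact WithTop.coe_le_coe.mpr le_top)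
  have hdfd : DifferentiableAt ℝ (fderiv ℝ g) p :=
    (hg.fderiv_right (m := (⊤ : ℕ∞)) (by simp)).differentiableAt (by simp)
  show fderiv ℝ (fun q => fderiv ℝ g q (1,0)) p (0,1)
      = fderiv ℝ (fun q => fderiv ℝ g q (0,1)) p (1,0)
  rw [fderiv_clm_apply hdfd (differentiableAt_const _),
      fderiv_clm_apply hdfd (differentiableAt_const _)]
  simp [hsf (0,1) (1,0)]

/-- derivative of `f • (a•x + b•n + c•m)` in direction `e`. -/
lemma fd_comb {f a b c : ℝ × ℝ → ℝ} {x n m : ℝ × ℝ → V4} {p e : ℝ × ℝ}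
    (hf : DifferentiableAt ℝ f p) (ha : DifferentiableAt ℝ a p) (hb : DifferentiableAt ℝ b p)
    (hc : DifferentiableAt ℝ c p) (hx : DifferentiableAt ℝ x p) (hn : DifferentiableAt ℝ n p)
    (hm : DifferentiableAt ℝ m p) :
    fderiv ℝ (fun q => f q • (a q • x q + b q • n q + c q • m q)) p e =
      fderiv ℝ f p e • (a p • x p + b p • n p + c p • m p) +
      f p • (a p • fderiv ℝ x p e + fderiv ℝ a p e • x p
        + b p • fderiv ℝ n p e + fderiv ℝ b p e • n p
        + c p • fderiv ℝ m p e + fderiv ℝ c p e • m p) := by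
  have h1 : DifferentiableAt ℝ (fun q => a q • x q) p := ha.smul hx
  have h2 : DifferentiableAt ℝ (fun q => b q • n q) p := hb.smul hn
  have h3 : DifferentiableAt ℝ (fun q => c q • m q) p := hc.smul hm
  rw [fd_smul (w := fun q => a q • x q + b q • n q + c q • m q) hf ((h1.add h2).add h3)]
  have hinner : fderiv ℝ (fun q => a q • x q + b q • n q + c q • m q) p e
      = (a p • fderiv ℝ x p e + fderiv ℝ a p e • x p)
        + (b p • fderiv ℝ n p e + fderiv ℝ b p e • n p)
        + (c p • fderiv ℝ m p e + fderiv ℝ c p e • m p) := by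
    rw [fderiv_fun_add (f := fun q => a q • x q + b q • n q) (h1.add h2) h3, fderiv_fun_add h1 h2]
    simp only [ContinuousLinearMap.add_apply]
    rw [fd_smul ha hx, fd_smul hb hn, fd_smul hc hm]
  rw [hinner]
  module

/-- Under the derivative formulas for a timelike surface with parallel
normalized mean curvature vector field, the Gauss equation holds on `D`:
the Gauss curvature `K = x(γ₂) + y(γ₁) + 2γ₁γ₂` equals `ν² − λ₁λ₂ − μ₁μ₂`,
where `x(g) = g_u/f` and `y(g) = g_v/f`. -/
theorem gauss_equation
    (D : Set (ℝ × ℝ)) (hD : IsOpen D)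
    (f γ₁ γ₂ ν lam₁ lam₂ μ₁ μ₂ : ℝ × ℝ → ℝ) (x y n₁ n₂ : ℝ × ℝ → V4)
    (hf : ContDiffOn ℝ (⊤ : ℕ∞) f D) (hfpos : ∀ p ∈ D, 0 < f p)
    (hx : ContDiffOn ℝ (⊤ : ℕ∞) x D) (hy : ContDiffOn ℝ (⊤ : ℕ∞) y D)
    (hn₁ : ContDiffOn ℝ (⊤ : ℕ∞) n₁ D) (hn₂ : ContDiffOn ℝ (⊤ : ℕ∞) n₂ D)
    (hν : ContDiffOn ℝ (⊤ : ℕ∞) ν D) (hlam₁ : ContDiffOn ℝ (⊤ : ℕ∞) lam₁ D) (hlam₂ : ContDiffOn ℝ (⊤ : ℕ∞) lam₂ D)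
    (hμ₁ : ContDiffOn ℝ (⊤ : ℕ∞) μ₁ D) (hμ₂ : ContDiffOn ℝ (⊤ : ℕ∞) μ₂ D)
    -- x, y, n₁, n₂ are linearly independent at every point of D
    (hli : ∀ p ∈ D, LinearIndependent ℝ ![x p, y p, n₁ p, n₂ p])
    -- γ₁ = f_u/f², γ₂ = f_v/f²
    (hγ₁ : ∀ p ∈ D, γ₁ p = pu f p / (f p) ^ 2)
    (hγ₂ : ∀ p ∈ D, γ₂ p = pv f p / (f p) ^ 2)
    -- the derivative formulas
    (hxu : ∀ p ∈ D, pu x p = f p • (γ₁ p • x p + lam₁ p • n₁ p + μ₁ p • n₂ p))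
    (hxv : ∀ p ∈ D, pv x p = f p • ((-γ₂ p) • x p - ν p • n₁ p))
    (hyu : ∀ p ∈ D, pu y p = f p • ((-γ₁ p) • y p - ν p • n₁ p))
    (hyv : ∀ p ∈ D, pv y p = f p • (γ₂ p • y p + lam₂ p • n₁ p + μ₂ p • n₂ p))
    (hn₁u : ∀ p ∈ D, pu n₁ p = f p • ((-ν p) • x p + lam₁ p • y p))
    (hn₁v : ∀ p ∈ D, pv n₁ p = f p • (lam₂ p • x p - ν p • y p))
    (hn₂u : ∀ p ∈ D, pu n₂ p = f p • (μ₁ p • y p))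
    (hn₂v : ∀ p ∈ D, pv n₂ p = f p • (μ₂ p • x p))
    :
    ∀ p ∈ D,
      pu γ₂ p / f p + pv γ₁ p / f p + 2 * γ₁ p * γ₂ p =
        (ν p) ^ 2 - lam₁ p * lam₂ p - μ₁ p * μ₂ p := by
  intro p hp
  have hmem : D ∈ nhds p := hD.mem_nhds hp
  have hF : f p ≠ 0 := (hfpos p hp).ne'
  -- differentiability at p
  have dA : ∀ {E : Type} [NormedAddCommGroup E] [NormedSpace ℝ E] {g : ℝ × ℝ → E},
      ContDiffOn ℝ (⊤ : ℕ∞) g D → DifferentiableAt ℝ g p := fun h =>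
    (h.contDiffAt hmem).differentiableAt (by simp)
  have dx := dA hx; have dy := dA hy; have dn₁ := dA hn₁; have dn₂ := dA hn₂
  have df := dA hf; have dν := dA hν
  have dl₁ := dA hlam₁; have dl₂ := dA hlam₂; have dm₁ := dA hμ₁; have dm₂ := dA hμ₂
  -- smoothness of γ₁, γ₂ near p
  have hfd : ContDiffOn ℝ (⊤ : ℕ∞) (fderiv ℝ f) D := hf.fderiv_of_isOpen hD (by simp)
  have dγ : ∀ (e : ℝ × ℝ) (γ : ℝ × ℝ → ℝ), (∀ q ∈ D, γ q = fderiv ℝ f q e / (f q) ^ 2) →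
      DifferentiableAt ℝ γ p := by
    intro e γ hγ
    have h1 : ContDiffOn ℝ (⊤ : ℕ∞) (fun q => fderiv ℝ f q e / (f q) ^ 2) D :=
      (hfd.clm_apply contDiffOn_const).div (hf.pow 2)
        (fun q hq => pow_ne_zero _ (hfpos q hq).ne')
    have heq : γ =ᶠ[nhds p] (fun q => fderiv ℝ f q e / (f q) ^ 2) := by
      filter_upwards [hmem] with q hq using hγ q hq
    exact (heq.differentiableAt_iff).mpr ((h1.contDiffAt hmem).differentiableAt (by simp))
  have dγ₁ : DifferentiableAt ℝ γ₁ p := dγ (1,0) γ₁ hγ₁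
  have dγ₂ : DifferentiableAt ℝ γ₂ p := dγ (0,1) γ₂ hγ₂
  have dγ₂' : DifferentiableAt ℝ (fun q => -γ₂ q) p := dγ₂.neg
  have dν' : DifferentiableAt ℝ (fun q => -ν q) p := dν.neg
  -- eventual equalities for pu x and pv x
  have hA : pu x =ᶠ[nhds p]
      (fun q => f q • (γ₁ q • x q + lam₁ q • n₁ q + μ₁ q • n₂ q)) := by
    filter_upwards [hmem] with q hq using hxu q hq
  have hB : pv x =ᶠ[nhds p]
      (fun q => f q • ((-γ₂ q) • x q + (-ν q) • n₁ q + (0:ℝ) • n₂ q)) := by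
    filter_upwards [hmem] with q hq
    rw [hxv q hq]
    simp [neg_smul, sub_eq_add_neg]
  -- the two mixed second derivatives
  have eL : pv (pu x) p =
      fderiv ℝ (fun q => f q • (γ₁ q • x q + lam₁ q • n₁ q + μ₁ q • n₂ q)) p (0,1) := by
    show fderiv ℝ (pu x) p (0,1) = _
    rw [hA.fderiv_eq]
  have eR : pu (pv x) p =
      fderiv ℝ (fun q => f q • ((-γ₂ q) • x q + (-ν q) • n₁ q + (0:ℝ) • n₂ q)) p (1,0) := by
    show fderiv ℝ (pv x) p (1,0) = _
    rw [hB.fderiv_eq]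
  have hsymm : pv (pu x) p = pu (pv x) p := pd_symm (hx.contDiffAt hmem)
  -- expand both sides with fd_comb
  rw [fd_comb df dγ₁ dl₁ dm₁ dx dn₁ dn₂] at eL
  rw [fd_comb df dγ₂' dν' (differentiableAt_const (0:ℝ)) dx dn₁ dn₂] at eR
  -- substitute the first-order derivative formulas (values at p)
  have vxv : fderiv ℝ x p (0,1) = f p • ((-γ₂ p) • x p - ν p • n₁ p) := hxv p hp
  have vn₁v : fderiv ℝ n₁ p (0,1) = f p • (lam₂ p • x p - ν p • y p) := hn₁v p hp
  have vn₂v : fderiv ℝ n₂ p (0,1) = f p • (μ₂ p • x p) := hn₂v p hp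
  have vxu : fderiv ℝ x p (1,0) = f p • (γ₁ p • x p + lam₁ p • n₁ p + μ₁ p • n₂ p) := hxu p hp
  have vn₁u : fderiv ℝ n₁ p (1,0) = f p • ((-ν p) • x p + lam₁ p • y p) := hn₁u p hp
  have vn₂u : fderiv ℝ n₂ p (1,0) = f p • (μ₁ p • y p) := hn₂u p hp
  rw [vxv, vn₁v, vn₂v] at eL
  rw [vxu, vn₁u, vn₂u, fderiv_fun_neg (f := γ₂), fderiv_fun_neg (f := ν), fderiv_fun_const] at eR
  simp only [ContinuousLinearMap.neg_apply, Pi.zero_apply, ContinuousLinearMap.zero_apply] at eR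
  have key := eL.symm.trans (hsymm.trans eR)
  -- extract the x-coefficient via linear independence
  set F := f p with hFdef
  set Fu : ℝ := fderiv ℝ f p (1,0) with hFudef
  set Fv : ℝ := fderiv ℝ f p (0,1) with hFvdef
  set G1 := γ₁ p; set G2 := γ₂ p; set N := ν p
  set L1 := lam₁ p; set L2 := lam₂ p; set M1 := μ₁ p; set M2 := μ₂ p
  set G1v : ℝ := fderiv ℝ γ₁ p (0,1) with hG1vdef
  set G2u : ℝ := fderiv ℝ γ₂ p (1,0) with hG2udef
  set Nu : ℝ := fderiv ℝ ν p (1,0)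
  set L1v : ℝ := fderiv ℝ lam₁ p (0,1)
  set M1v : ℝ := fderiv ℝ μ₁ p (0,1)
  set c1 := Fv * G1 + F * G1v + F^2 * L1 * L2 + F^2 * M1 * M2 + Fu * G2 + F * G2u - F^2 * N^2
    with hc1def
  set c3 := Fv * L1 + F * L1v - F^2 * G1 * N + Fu * N + F * Nu + F^2 * G2 * L1 with hc3def
  set c4 := Fv * M1 + F * M1v + F^2 * G2 * M1 with hc4def
  have hsum : c1 • x p + (0:ℝ) • y p + c3 • n₁ p + c4 • n₂ p = 0 := by
    rw [hc1def, hc3def, hc4def]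
    linear_combination (norm := module) key
  have hz := Fintype.linearIndependent_iff.mp (hli p hp) ![c1, 0, c3, c4] (by
    rw [Fin.sum_univ_four]
    simpa using hsum)
  have hc1 : c1 = 0 := hz 0
  -- finish: substitute Fu, Fv and divide by F²
  have hFu : Fu = G1 * F ^ 2 := by
    have h := hγ₁ p hp
    rw [show pu f p = Fu from rfl] at h
    show Fu = γ₁ p * f p ^ 2
    rw [h, div_mul_cancel₀ _ (pow_ne_zero 2 (hfpos p hp).ne')]
  have hFv : Fv = G2 * F ^ 2 := by
    have h := hγ₂ p hp
    rw [show pv f p = Fv from rfl] at h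
    show Fv = γ₂ p * f p ^ 2
    rw [h, div_mul_cancel₀ _ (pow_ne_zero 2 (hfpos p hp).ne')]
  rw [hc1def, hFu, hFv] at hc1
  show G2u / F + G1v / F + 2 * G1 * G2 = N ^ 2 - L1 * L2 - M1 * M2
  have h2 : F ^ 2 ≠ 0 := pow_ne_zero _ hF
  have step : G2u / F + G1v / F + 2 * G1 * G2
      = (G2u * F + G1v * F + 2 * G1 * G2 * F ^ 2) / F ^ 2 := by
    field_simp
  have key2 : G2u * F + G1v * F + 2 * G1 * G2 * F ^ 2
      = (N ^ 2 - L1 * L2 - M1 * M2) * F ^ 2 := by linear_combination hc1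
  rw [step, key2, mul_div_assoc, div_self h2, mul_one]
end
end

section
/- Suppose additionally that μ₁ is nowhere zero on D. Then λ₂ = (μ₂/μ₁)λ₁ on D, and the difference between the Gauss curvature K := x(γ₂) + y(γ₁) + 2γ₁γ₂ and the squared mean curvature H² = ν² satisfies K − ν² = −(μ₂/μ₁)(λ₁² + μ₁²) on D. In particular, K − H² is positive, negative or zero at a point exactly when μ₁μ₂ is negative, positive or zero there. -/
noncomputable section

open Filter Topology

section helpers

variable {E : Type*} [NormedAddCommGroup E] [NormedSpace ℝ E]

lemma pu_congr {g h : ℝ×ℝ → E} {p : ℝ×ℝ} (hgh : g =ᶠ[𝓝 p] h) : pu g p = pu h p := by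
  unfold pu; rw [hgh.fderiv_eq]

lemma pv_congr {g h : ℝ×ℝ → E} {p : ℝ×ℝ} (hgh : g =ᶠ[𝓝 p] h) : pv g p = pv h p := by
  unfold pv; rw [hgh.fderiv_eq]

lemma pu_smul' {a : ℝ×ℝ→ℝ} {w : ℝ×ℝ→E} {p : ℝ×ℝ} (ha : DifferentiableAt ℝ a p)
    (hw : DifferentiableAt ℝ w p) :
    pu (fun q => a q • w q) p = pu a p • w p + a p • pu w p := by
  unfold pu
  rw [fderiv_fun_smul ha hw]
  simp
  abel

lemma pv_smul' {a : ℝ×ℝ→ℝ} {w : ℝ×ℝ→E} {p : ℝ×ℝ} (ha : DifferentiableAt ℝ a p)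
    (hw : DifferentiableAt ℝ w p) :
    pv (fun q => a q • w q) p = pv a p • w p + a p • pv w p := by
  unfold pv
  rw [fderiv_fun_smul ha hw]
  simp
  abel

lemma pv_add' {g h : ℝ×ℝ → E} {p : ℝ×ℝ} (hg : DifferentiableAt ℝ g p)
    (hh : DifferentiableAt ℝ h p) : pv (fun q => g q + h q) p = pv g p + pv h p := by
  unfold pv; rw [fderiv_fun_add hg hh]; simp

lemma pu_sub' {g h : ℝ×ℝ → E} {p : ℝ×ℝ} (hg : DifferentiableAt ℝ g p)
    (hh : DifferentiableAt ℝ h p) : pu (fun q => g q - h q) p = pu g p - pu h p := by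
  unfold pu; rw [fderiv_fun_sub hg hh]; simp

lemma pu_neg' {g : ℝ×ℝ → ℝ} {p : ℝ×ℝ} : pu (fun q => -g q) p = - pu g p := by
  unfold pu; rw [fderiv_fun_neg]; simp

/-- symmetry of second partials for `C^∞` functions on an open set -/
lemma pv_pu_eq_pu_pv {D : Set (ℝ×ℝ)} (hD : IsOpen D) {g : ℝ×ℝ → E}
    (hg : ContDiffOn ℝ (⊤ : ℕ∞) g D) {p : ℝ×ℝ} (hp : p ∈ D) :
    pv (pu g) p = pu (pv g) p := by
  have hgat : ContDiffAt ℝ (⊤ : ℕ∞) g p := hg.contDiffAt (hD.mem_nhds hp)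
  have hsymm : IsSymmSndFDerivAt ℝ g p := hgat.isSymmSndFDerivAt (by rw [minSmoothness_of_isRCLikeNormedField]; exact WithTop.coe_le_coe.mpr (le_top : (2:ℕ∞) ≤ ⊤))
  have hdf : DifferentiableAt ℝ (fderiv ℝ g) p := by
    have : ContDiffAt ℝ (⊤ : ℕ∞) (fderiv ℝ g) p := hgat.fderiv_right (by exact_mod_cast le_top)
    exact this.differentiableAt (by simp)
  have key : ∀ v w : ℝ×ℝ, fderiv ℝ (fun q => fderiv ℝ g q w) p v
      = fderiv ℝ (fderiv ℝ g) p v w := by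
    intro v w
    have h1 : HasFDerivAt (fun q => (ContinuousLinearMap.apply ℝ E w) (fderiv ℝ g q))
        ((ContinuousLinearMap.apply ℝ E w).comp (fderiv ℝ (fderiv ℝ g) p)) p :=
      (ContinuousLinearMap.apply ℝ E w).hasFDerivAt.comp p hdf.hasFDerivAt
    have h2 := h1.fderiv
    simp only [ContinuousLinearMap.apply_apply] at h2
    rw [h2]
    rfl
  show fderiv ℝ (fun q => fderiv ℝ g q (1,0)) p (0,1) = fderiv ℝ (fun q => fderiv ℝ g q (0,1)) p (1,0)
  rw [key, key, hsymm]

end helpers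

set_option maxHeartbeats 1000000 in
/-- Assume in addition that `μ₁` is nowhere zero on `D`. Then
`λ₂ = (μ₂/μ₁)λ₁` on `D`, and the difference between the Gauss curvature
`K = x(γ₂) + y(γ₁) + 2γ₁γ₂` and the squared mean curvature `H² = ν²` satisfies
`K − ν² = −(μ₂/μ₁)(λ₁² + μ₁²)` on `D`.  In particular `K − H²` is positive,
negative or zero at a point exactly when `μ₁μ₂` is negative, positive or zero there. -/
theorem K_minus_H_squared
    (D : Set (ℝ × ℝ)) (hD : IsOpen D)
    (f γ₁ γ₂ ν lam₁ lam₂ μ₁ μ₂ : ℝ × ℝ → ℝ) (x y n₁ n₂ : ℝ × ℝ → V4)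
    (hf : ContDiffOn ℝ (⊤ : ℕ∞) f D) (hfpos : ∀ p ∈ D, 0 < f p)
    (hx : ContDiffOn ℝ (⊤ : ℕ∞) x D) (hy : ContDiffOn ℝ (⊤ : ℕ∞) y D)
    (hn₁ : ContDiffOn ℝ (⊤ : ℕ∞) n₁ D) (hn₂ : ContDiffOn ℝ (⊤ : ℕ∞) n₂ D)
    (hν : ContDiffOn ℝ (⊤ : ℕ∞) ν D) (hlam₁ : ContDiffOn ℝ (⊤ : ℕ∞) lam₁ D) (hlam₂ : ContDiffOn ℝ (⊤ : ℕ∞) lam₂ D)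
    (hμ₁ : ContDiffOn ℝ (⊤ : ℕ∞) μ₁ D) (hμ₂ : ContDiffOn ℝ (⊤ : ℕ∞) μ₂ D)
    -- x, y, n₁, n₂ are linearly independent at every point of D
    (hli : ∀ p ∈ D, LinearIndependent ℝ ![x p, y p, n₁ p, n₂ p])
    -- γ₁ = f_u/f², γ₂ = f_v/f²
    (hγ₁ : ∀ p ∈ D, γ₁ p = pu f p / (f p) ^ 2)
    (hγ₂ : ∀ p ∈ D, γ₂ p = pv f p / (f p) ^ 2)
    -- the derivative formulas
    (hxu : ∀ p ∈ D, pu x p = f p • (γ₁ p • x p + lam₁ p • n₁ p + μ₁ p • n₂ p))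
    (hxv : ∀ p ∈ D, pv x p = f p • ((-γ₂ p) • x p - ν p • n₁ p))
    (hyu : ∀ p ∈ D, pu y p = f p • ((-γ₁ p) • y p - ν p • n₁ p))
    (hyv : ∀ p ∈ D, pv y p = f p • (γ₂ p • y p + lam₂ p • n₁ p + μ₂ p • n₂ p))
    (hn₁u : ∀ p ∈ D, pu n₁ p = f p • ((-ν p) • x p + lam₁ p • y p))
    (hn₁v : ∀ p ∈ D, pv n₁ p = f p • (lam₂ p • x p - ν p • y p))
    (hn₂u : ∀ p ∈ D, pu n₂ p = f p • (μ₁ p • y p))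
    (hn₂v : ∀ p ∈ D, pv n₂ p = f p • (μ₂ p • x p))
    (hμ₁ne : ∀ p ∈ D, μ₁ p ≠ 0) :
    ∀ p ∈ D,
      lam₂ p = (μ₂ p / μ₁ p) * lam₁ p ∧
      (pu γ₂ p / f p + pv γ₁ p / f p + 2 * γ₁ p * γ₂ p) - (ν p) ^ 2 =
        -(μ₂ p / μ₁ p) * ((lam₁ p) ^ 2 + (μ₁ p) ^ 2) ∧
      (0 < (pu γ₂ p / f p + pv γ₁ p / f p + 2 * γ₁ p * γ₂ p) - (ν p) ^ 2 ↔
        μ₁ p * μ₂ p < 0) ∧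
      ((pu γ₂ p / f p + pv γ₁ p / f p + 2 * γ₁ p * γ₂ p) - (ν p) ^ 2 < 0 ↔
        0 < μ₁ p * μ₂ p) ∧
      ((pu γ₂ p / f p + pv γ₁ p / f p + 2 * γ₁ p * γ₂ p) - (ν p) ^ 2 = 0 ↔
        μ₁ p * μ₂ p = 0) := by
  intro p hp
  have hmem : D ∈ 𝓝 p := hD.mem_nhds hp
  have hfne : f p ≠ 0 := ne_of_gt (hfpos p hp)
  have hμne : μ₁ p ≠ 0 := hμ₁ne p hp
  have dff : DifferentiableAt ℝ f p := (hf.contDiffAt hmem).differentiableAt (by simp)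
  have dx : DifferentiableAt ℝ x p := (hx.contDiffAt hmem).differentiableAt (by simp)
  have dy : DifferentiableAt ℝ y p := (hy.contDiffAt hmem).differentiableAt (by simp)
  have dn1 : DifferentiableAt ℝ n₁ p := (hn₁.contDiffAt hmem).differentiableAt (by simp)
  have dn2 : DifferentiableAt ℝ n₂ p := (hn₂.contDiffAt hmem).differentiableAt (by simp)
  have dν : DifferentiableAt ℝ ν p := (hν.contDiffAt hmem).differentiableAt (by simp)
  have dl1 : DifferentiableAt ℝ lam₁ p := (hlam₁.contDiffAt hmem).differentiableAt (by simp)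
  have dμ1 : DifferentiableAt ℝ μ₁ p := (hμ₁.contDiffAt hmem).differentiableAt (by simp)
  have dμ2 : DifferentiableAt ℝ μ₂ p := (hμ₂.contDiffAt hmem).differentiableAt (by simp)
  have dfd : DifferentiableAt ℝ (fderiv ℝ f) p :=
    (((hf.contDiffAt hmem).fderiv_right (m := (⊤ : ℕ∞)) (by exact_mod_cast le_top)).differentiableAt (by simp))
  have dpuf : DifferentiableAt ℝ (pu f) p := dfd.clm_apply (differentiableAt_const _)
  have dpvf : DifferentiableAt ℝ (pv f) p := dfd.clm_apply (differentiableAt_const _)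
  have dq1 : DifferentiableAt ℝ (fun q => pu f q / f q ^ 2) p :=
    by simp only [div_eq_mul_inv]; exact dpuf.mul ((dff.pow 2).inv (pow_ne_zero 2 hfne))
  have dq2 : DifferentiableAt ℝ (fun q => pv f q / f q ^ 2) p :=
    by simp only [div_eq_mul_inv]; exact dpvf.mul ((dff.pow 2).inv (pow_ne_zero 2 hfne))
  have dγ1 : DifferentiableAt ℝ γ₁ p :=
    dq1.congr_of_eventuallyEq (Filter.eventuallyEq_of_mem hmem hγ₁)
  have dγ2 : DifferentiableAt ℝ γ₂ p :=
    dq2.congr_of_eventuallyEq (Filter.eventuallyEq_of_mem hmem hγ₂)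
  -- PART 1 : compatibility of mixed partials of n₂
  have e1 : pv (pu n₂) p = pu (pv n₂) p := pv_pu_eq_pu_pv hD hn₂ hp
  have L1 : pv (pu n₂) p = pv f p • (μ₁ p • y p)
      + f p • (pv μ₁ p • y p + μ₁ p • (f p • (γ₂ p • y p + lam₂ p • n₁ p + μ₂ p • n₂ p))) := by
    calc pv (pu n₂) p = pv (fun q => f q • (μ₁ q • y q)) p :=
          pv_congr (Filter.eventuallyEq_of_mem hmem hn₂u)
      _ = pv f p • (μ₁ p • y p) + f p • pv (fun q => μ₁ q • y q) p :=
          pv_smul' dff (dμ1.smul dy)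
      _ = _ := by rw [pv_smul' dμ1 dy, hyv p hp]
  have R1 : pu (pv n₂) p = pu f p • (μ₂ p • x p)
      + f p • (pu μ₂ p • x p + μ₂ p • (f p • (γ₁ p • x p + lam₁ p • n₁ p + μ₁ p • n₂ p))) := by
    calc pu (pv n₂) p = pu (fun q => f q • (μ₂ q • x q)) p :=
          pu_congr (Filter.eventuallyEq_of_mem hmem hn₂v)
      _ = pu f p • (μ₂ p • x p) + f p • pu (fun q => μ₂ q • x q) p :=
          pu_smul' dff (dμ2.smul dx)
      _ = _ := by rw [pu_smul' dμ2 dx, hxu p hp]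
  have eq1 := L1.symm.trans (e1.trans R1)
  have h01 := sub_eq_zero_of_eq eq1
  have hcombo1 : (-(pu f p * μ₂ p + f p * pu μ₂ p + f p ^ 2 * μ₂ p * γ₁ p)) • x p
      + (pv f p * μ₁ p + f p * pv μ₁ p + f p ^ 2 * μ₁ p * γ₂ p) • y p
      + (f p ^ 2 * (μ₁ p * lam₂ p - μ₂ p * lam₁ p)) • n₁ p
      + (0:ℝ) • n₂ p = 0 := by
    rw [← h01]; module
  have hz1 := Fintype.linearIndependent_iff.mp (hli p hp)
    ![-(pu f p * μ₂ p + f p * pu μ₂ p + f p ^ 2 * μ₂ p * γ₁ p),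
      pv f p * μ₁ p + f p * pv μ₁ p + f p ^ 2 * μ₁ p * γ₂ p,
      f p ^ 2 * (μ₁ p * lam₂ p - μ₂ p * lam₁ p), (0:ℝ)]
    (by simpa [Fin.sum_univ_four] using hcombo1)
  have hrel : μ₁ p * lam₂ p = μ₂ p * lam₁ p := by
    have h2 : f p ^ 2 * (μ₁ p * lam₂ p - μ₂ p * lam₁ p) = 0 := by simpa using hz1 2
    rcases mul_eq_zero.mp h2 with h | h
    · exact absurd h (pow_ne_zero 2 hfne)
    · linarith
  have hlam : lam₂ p = μ₂ p / μ₁ p * lam₁ p := by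
    field_simp
    linear_combination hrel
  -- PART 2 : compatibility of mixed partials of x (Gauss equation)
  have e2 : pv (pu x) p = pu (pv x) p := pv_pu_eq_pu_pv hD hx hp
  have L2 : pv (pu x) p = pv f p • (γ₁ p • x p + lam₁ p • n₁ p + μ₁ p • n₂ p)
      + f p • ((pv γ₁ p • x p + γ₁ p • (f p • ((-γ₂ p) • x p - ν p • n₁ p)))
        + (pv lam₁ p • n₁ p + lam₁ p • (f p • (lam₂ p • x p - ν p • y p)))
        + (pv μ₁ p • n₂ p + μ₁ p • (f p • (μ₂ p • x p)))) := by
    have s1 : pv (fun q => γ₁ q • x q) p = pv γ₁ p • x p + γ₁ p • pv x p := pv_smul' dγ1 dx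
    have s2 : pv (fun q => lam₁ q • n₁ q) p = pv lam₁ p • n₁ p + lam₁ p • pv n₁ p :=
      pv_smul' dl1 dn1
    have s3 : pv (fun q => μ₁ q • n₂ q) p = pv μ₁ p • n₂ p + μ₁ p • pv n₂ p := pv_smul' dμ1 dn2
    have s4 : pv (fun q => γ₁ q • x q + lam₁ q • n₁ q) p
        = pv (fun q => γ₁ q • x q) p + pv (fun q => lam₁ q • n₁ q) p :=
      pv_add' (dγ1.smul dx) (dl1.smul dn1)
    have s5 : pv (fun q => γ₁ q • x q + lam₁ q • n₁ q + μ₁ q • n₂ q) p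
        = pv (fun q => γ₁ q • x q + lam₁ q • n₁ q) p + pv (fun q => μ₁ q • n₂ q) p :=
      pv_add' ((dγ1.smul dx).add (dl1.smul dn1)) (dμ1.smul dn2)
    calc pv (pu x) p
        = pv (fun q => f q • (γ₁ q • x q + lam₁ q • n₁ q + μ₁ q • n₂ q)) p :=
          pv_congr (Filter.eventuallyEq_of_mem hmem hxu)
      _ = pv f p • (γ₁ p • x p + lam₁ p • n₁ p + μ₁ p • n₂ p)
          + f p • pv (fun q => γ₁ q • x q + lam₁ q • n₁ q + μ₁ q • n₂ q) p :=
          pv_smul' dff (((dγ1.smul dx).add (dl1.smul dn1)).add (dμ1.smul dn2))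
      _ = _ := by rw [s5, s4, s1, s2, s3, hxv p hp, hn₁v p hp, hn₂v p hp]
  have R2 : pu (pv x) p = pu f p • ((-γ₂ p) • x p - ν p • n₁ p)
      + f p • (((-(pu γ₂ p)) • x p + (-γ₂ p) • (f p • (γ₁ p • x p + lam₁ p • n₁ p + μ₁ p • n₂ p)))
        - (pu ν p • n₁ p + ν p • (f p • ((-ν p) • x p + lam₁ p • y p)))) := by
    have t1 : pu (fun q => (-γ₂ q) • x q) p
        = pu (fun q => -γ₂ q) p • x p + (-γ₂ p) • pu x p := pu_smul' dγ2.neg dx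
    have t1' : pu (fun q => -γ₂ q) p = -(pu γ₂ p) := pu_neg'
    have t2 : pu (fun q => ν q • n₁ q) p = pu ν p • n₁ p + ν p • pu n₁ p := pu_smul' dν dn1
    have t3 : pu (fun q => (-γ₂ q) • x q - ν q • n₁ q) p
        = pu (fun q => (-γ₂ q) • x q) p - pu (fun q => ν q • n₁ q) p :=
      pu_sub' (dγ2.neg.smul dx) (dν.smul dn1)
    calc pu (pv x) p
        = pu (fun q => f q • ((-γ₂ q) • x q - ν q • n₁ q)) p :=
          pu_congr (Filter.eventuallyEq_of_mem hmem hxv)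
      _ = pu f p • ((-γ₂ p) • x p - ν p • n₁ p)
          + f p • pu (fun q => (-γ₂ q) • x q - ν q • n₁ q) p :=
          pu_smul' dff ((dγ2.neg.smul dx).sub (dν.smul dn1))
      _ = _ := by rw [t3, t1, t1', t2, hxu p hp, hn₁u p hp]
  have hpuf : pu f p = γ₁ p * f p ^ 2 := by
    have h := hγ₁ p hp; field_simp at h; linarith
  have hpvf : pv f p = γ₂ p * f p ^ 2 := by
    have h := hγ₂ p hp; field_simp at h; linarith
  have eq2 := L2.symm.trans (e2.trans R2)
  rw [hpuf, hpvf] at eq2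
  have h02 := sub_eq_zero_of_eq eq2
  have hcombo2 : (f p * pv γ₁ p + f p * pu γ₂ p + 2 * f p ^ 2 * γ₁ p * γ₂ p
        + f p ^ 2 * lam₁ p * lam₂ p + f p ^ 2 * μ₁ p * μ₂ p - f p ^ 2 * ν p ^ 2) • x p
      + (0:ℝ) • y p
      + (γ₂ p * f p ^ 2 * lam₁ p + f p * pv lam₁ p - f p ^ 2 * γ₁ p * ν p
        + γ₁ p * f p ^ 2 * ν p + f p ^ 2 * γ₂ p * lam₁ p + f p * pu ν p) • n₁ p
      + (γ₂ p * f p ^ 2 * μ₁ p + f p * pv μ₁ p + f p ^ 2 * γ₂ p * μ₁ p) • n₂ p = 0 := by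
    rw [← h02]; module
  have hz2 := Fintype.linearIndependent_iff.mp (hli p hp)
    ![f p * pv γ₁ p + f p * pu γ₂ p + 2 * f p ^ 2 * γ₁ p * γ₂ p
        + f p ^ 2 * lam₁ p * lam₂ p + f p ^ 2 * μ₁ p * μ₂ p - f p ^ 2 * ν p ^ 2,
      (0:ℝ),
      γ₂ p * f p ^ 2 * lam₁ p + f p * pv lam₁ p - f p ^ 2 * γ₁ p * ν p
        + γ₁ p * f p ^ 2 * ν p + f p ^ 2 * γ₂ p * lam₁ p + f p * pu ν p,
      γ₂ p * f p ^ 2 * μ₁ p + f p * pv μ₁ p + f p ^ 2 * γ₂ p * μ₁ p]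
    (by simpa [Fin.sum_univ_four] using hcombo2)
  have hcx : f p * pv γ₁ p + f p * pu γ₂ p + 2 * f p ^ 2 * γ₁ p * γ₂ p
      + f p ^ 2 * lam₁ p * lam₂ p + f p ^ 2 * μ₁ p * μ₂ p - f p ^ 2 * ν p ^ 2 = 0 := by
    simpa using hz2 0
  have hK : pu γ₂ p / f p + pv γ₁ p / f p + 2 * γ₁ p * γ₂ p - ν p ^ 2
      = -(lam₁ p * lam₂ p + μ₁ p * μ₂ p) := by
    have h2 : f p ^ 2 * (pu γ₂ p / f p + pv γ₁ p / f p + 2 * γ₁ p * γ₂ p - ν p ^ 2)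
        = f p ^ 2 * (-(lam₁ p * lam₂ p + μ₁ p * μ₂ p)) := by
      field_simp
      apply mul_left_cancel₀ hfne
      linear_combination hcx
    exact mul_left_cancel₀ (pow_ne_zero 2 hfne) h2
  have hKfinal : (pu γ₂ p / f p + pv γ₁ p / f p + 2 * γ₁ p * γ₂ p) - ν p ^ 2
      = -(μ₂ p / μ₁ p) * (lam₁ p ^ 2 + μ₁ p ^ 2) := by
    calc (pu γ₂ p / f p + pv γ₁ p / f p + 2 * γ₁ p * γ₂ p) - ν p ^ 2
        = -(lam₁ p * lam₂ p + μ₁ p * μ₂ p) := by linarith [hK]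
      _ = -(μ₂ p / μ₁ p) * (lam₁ p ^ 2 + μ₁ p ^ 2) := by
          rw [hlam]; field_simp
  -- sign conclusions
  have hμsq : 0 < μ₁ p ^ 2 := lt_of_le_of_ne (sq_nonneg _) (Ne.symm (pow_ne_zero 2 hμne))
  have hs : 0 < lam₁ p ^ 2 + μ₁ p ^ 2 := by positivity
  have hkey : ((pu γ₂ p / f p + pv γ₁ p / f p + 2 * γ₁ p * γ₂ p) - ν p ^ 2) * μ₁ p ^ 2
      = -(μ₁ p * μ₂ p) * (lam₁ p ^ 2 + μ₁ p ^ 2) := by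
    rw [hKfinal]; field_simp
  refine ⟨hlam, hKfinal, ⟨?_, ?_⟩, ⟨?_, ?_⟩, ⟨?_, ?_⟩⟩
  · intro h; nlinarith [hkey, hs, hμsq]
  · intro h; nlinarith [hkey, hs, hμsq]
  · intro h; nlinarith [hkey, hs, hμsq]
  · intro h; nlinarith [hkey, hs, hμsq]
  · intro h
    rw [h] at hkey
    have h3 : -(μ₁ p * μ₂ p) * (lam₁ p ^ 2 + μ₁ p ^ 2) = 0 := by linarith [hkey]
    rcases mul_eq_zero.mp h3 with h4 | h4
    · linarith
    · exact absurd h4 (ne_of_gt hs)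
  · intro h
    rw [h] at hkey
    simp at hkey
    rcases hkey with h4 | h4
    · exact h4
    · nlinarith [hs]
end
end

section
/- Suppose additionally that D is connected, that μ₁ = 0 and μ₂ = 0 identically on D, that ⟨x,n₂⟩ = ⟨y,n₂⟩ = 0 on D, and that z : D → ℝ⁴ is smooth with z_u = f·x and z_v = f·y. Then n₂ is a constant map on D, and for any fixed p₀ ∈ D one has ⟨z(p) − z(p₀), n₂(p₀)⟩ = 0 for all p ∈ D; that is, the surface z lies in a 3-dimensional affine hyperplane of ℝ⁴ orthogonal (with respect to the Minkowski inner product) to the constant vector n₂. -/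
noncomputable section

/-- Auxiliary: a continuous linear map on `ℝ × ℝ` vanishing on the standard basis
vanishes everywhere. -/
theorem clm_apply_zero_of_basis {E : Type*} [NormedAddCommGroup E] [NormedSpace ℝ E]
    (L : (ℝ × ℝ) →L[ℝ] E) (h1 : L (1, 0) = 0) (h2 : L (0, 1) = 0) (w : ℝ × ℝ) : L w = 0 := by
  have hw : w = w.1 • ((1:ℝ), (0:ℝ)) + w.2 • ((0:ℝ), (1:ℝ)) := by
    simp [Prod.ext_iff]
  calc L w = L (w.1 • ((1:ℝ), (0:ℝ)) + w.2 • ((0:ℝ), (1:ℝ))) := by rw [← hw]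
    _ = 0 := by rw [map_add, map_smul, map_smul, h1, h2, smul_zero, smul_zero, add_zero]

/-- Auxiliary: a differentiable function on an open preconnected subset of `ℝ × ℝ`
with vanishing total derivative is constant there. -/
theorem const_on_of_fderiv_zero {E : Type*} [NormedAddCommGroup E] [NormedSpace ℝ E]
    {D : Set (ℝ × ℝ)} (hD : IsOpen D) (hconn : IsPreconnected D)
    {g : ℝ × ℝ → E} (hdiff : ∀ p ∈ D, DifferentiableAt ℝ g p)
    (hzero : ∀ p ∈ D, fderiv ℝ g p = 0) :
    ∀ p ∈ D, ∀ q ∈ D, g p = g q := by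
  have loc : ∀ p ∈ D, ∃ ε > 0, Metric.ball p ε ⊆ D ∧ ∀ q ∈ Metric.ball p ε, g q = g p := by
    intro p hp
    obtain ⟨ε, hε, hball⟩ := Metric.isOpen_iff.1 hD p hp
    refine ⟨ε, hε, hball, fun q hq => ?_⟩
    have hconv : Convex ℝ (Metric.ball p ε) := convex_ball p ε
    have hd : DifferentiableOn ℝ g (Metric.ball p ε) :=
      fun r hr => (hdiff r (hball hr)).differentiableWithinAt
    have hzz : ∀ r ∈ Metric.ball p ε, fderivWithin ℝ g (Metric.ball p ε) r = 0 := fun r hr => by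
      rw [fderivWithin_of_isOpen Metric.isOpen_ball hr]; exact hzero r (hball hr)
    exact hconv.is_const_of_fderivWithin_eq_zero hd hzz hq (Metric.mem_ball_self hε)
  intro p hp q hq
  set U : Set (ℝ × ℝ) :=
    {r | ∃ ε > 0, Metric.ball r ε ⊆ D ∧ ∀ s ∈ Metric.ball r ε, g s = g q} with hU
  set V : Set (ℝ × ℝ) :=
    {r | ∃ ε > 0, Metric.ball r ε ⊆ D ∧ ∀ s ∈ Metric.ball r ε, g s ≠ g q} with hV
  have openU : IsOpen U := by
    rw [Metric.isOpen_iff]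
    rintro r ⟨ε, hε, hsub, hval⟩
    refine ⟨ε, hε, fun s hs => ?_⟩
    obtain ⟨δ, hδ, hδsub⟩ := Metric.isOpen_iff.1 Metric.isOpen_ball s hs
    exact ⟨δ, hδ, hδsub.trans hsub, fun t ht => hval t (hδsub ht)⟩
  have openV : IsOpen V := by
    rw [Metric.isOpen_iff]
    rintro r ⟨ε, hε, hsub, hval⟩
    refine ⟨ε, hε, fun s hs => ?_⟩
    obtain ⟨δ, hδ, hδsub⟩ := Metric.isOpen_iff.1 Metric.isOpen_ball s hs
    exact ⟨δ, hδ, hδsub.trans hsub, fun t ht => hval t (hδsub ht)⟩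
  have hdisj : Disjoint U V := by
    rw [Set.disjoint_left]
    rintro r ⟨ε, hε, _, hval⟩ ⟨ε', hε', _, hval'⟩
    exact hval' r (Metric.mem_ball_self hε') (hval r (Metric.mem_ball_self hε))
  have hcover : D ⊆ U ∪ V := by
    intro r hr
    obtain ⟨ε, hε, hsub, hval⟩ := loc r hr
    by_cases h : g r = g q
    · exact Or.inl ⟨ε, hε, hsub, fun s hs => (hval s hs).trans h⟩
    · exact Or.inr ⟨ε, hε, hsub, fun s hs => (hval s hs).symm ▸ h⟩
  have hqU : (D ∩ U).Nonempty := by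
    obtain ⟨ε, hε, hsub, hval⟩ := loc q hq
    exact ⟨q, hq, ε, hε, hsub, hval⟩
  have hDU : D ⊆ U := hconn.subset_left_of_subset_union openU openV hdisj hcover hqU
  obtain ⟨ε, hε, _, hval⟩ := hDU hp
  exact hval p (Metric.mem_ball_self hε)

/-- If `D` is connected, `μ₁ = μ₂ = 0` identically on `D`,
`⟨x,n₂⟩ = ⟨y,n₂⟩ = 0` on `D` and `z` is smooth with `z_u = f·x`, `z_v = f·y`,
then `n₂` is constant on `D` and the surface `z` lies in a 3-dimensional affine
hyperplane of `ℝ⁴₁` Minkowski-orthogonal to the constant vector `n₂`. -/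
theorem lies_in_hyperplane
    (D : Set (ℝ × ℝ)) (hD : IsOpen D)
    (f γ₁ γ₂ ν lam₁ lam₂ μ₁ μ₂ : ℝ × ℝ → ℝ) (x y n₁ n₂ : ℝ × ℝ → V4)
    (hf : ContDiffOn ℝ (⊤ : ℕ∞) f D) (hfpos : ∀ p ∈ D, 0 < f p)
    (hx : ContDiffOn ℝ (⊤ : ℕ∞) x D) (hy : ContDiffOn ℝ (⊤ : ℕ∞) y D)
    (hn₁ : ContDiffOn ℝ (⊤ : ℕ∞) n₁ D) (hn₂ : ContDiffOn ℝ (⊤ : ℕ∞) n₂ D)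
    (hν : ContDiffOn ℝ (⊤ : ℕ∞) ν D) (hlam₁ : ContDiffOn ℝ (⊤ : ℕ∞) lam₁ D) (hlam₂ : ContDiffOn ℝ (⊤ : ℕ∞) lam₂ D)
    (hμ₁ : ContDiffOn ℝ (⊤ : ℕ∞) μ₁ D) (hμ₂ : ContDiffOn ℝ (⊤ : ℕ∞) μ₂ D)
    -- x, y, n₁, n₂ are linearly independent at every point of D
    (hli : ∀ p ∈ D, LinearIndependent ℝ ![x p, y p, n₁ p, n₂ p])
    -- γ₁ = f_u/f², γ₂ = f_v/f²
    (hγ₁ : ∀ p ∈ D, γ₁ p = pu f p / (f p) ^ 2)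
    (hγ₂ : ∀ p ∈ D, γ₂ p = pv f p / (f p) ^ 2)
    -- the derivative formulas
    (hxu : ∀ p ∈ D, pu x p = f p • (γ₁ p • x p + lam₁ p • n₁ p + μ₁ p • n₂ p))
    (hxv : ∀ p ∈ D, pv x p = f p • ((-γ₂ p) • x p - ν p • n₁ p))
    (hyu : ∀ p ∈ D, pu y p = f p • ((-γ₁ p) • y p - ν p • n₁ p))
    (hyv : ∀ p ∈ D, pv y p = f p • (γ₂ p • y p + lam₂ p • n₁ p + μ₂ p • n₂ p))
    (hn₁u : ∀ p ∈ D, pu n₁ p = f p • ((-ν p) • x p + lam₁ p • y p))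
    (hn₁v : ∀ p ∈ D, pv n₁ p = f p • (lam₂ p • x p - ν p • y p))
    (hn₂u : ∀ p ∈ D, pu n₂ p = f p • (μ₁ p • y p))
    (hn₂v : ∀ p ∈ D, pv n₂ p = f p • (μ₂ p • x p))
    (hDconn : IsConnected D)
    (hμ₁0 : ∀ p ∈ D, μ₁ p = 0) (hμ₂0 : ∀ p ∈ D, μ₂ p = 0)
    (hxn₂ : ∀ p ∈ D, mink (x p) (n₂ p) = 0) (hyn₂ : ∀ p ∈ D, mink (y p) (n₂ p) = 0)
    (z : ℝ × ℝ → V4) (hz : ContDiffOn ℝ (⊤ : ℕ∞) z D)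
    (hzu : ∀ p ∈ D, pu z p = f p • x p) (hzv : ∀ p ∈ D, pv z p = f p • y p) :
    (∀ p ∈ D, ∀ q ∈ D, n₂ p = n₂ q) ∧
    (∀ p₀ ∈ D, ∀ p ∈ D, mink (z p - z p₀) (n₂ p₀) = 0) := by
  have hn₂d : ∀ p ∈ D, DifferentiableAt ℝ n₂ p := fun p hp =>
    (hn₂.differentiableOn (by simp)).differentiableAt (hD.mem_nhds hp)
  have hzd : ∀ p ∈ D, DifferentiableAt ℝ z p := fun p hp =>
    (hz.differentiableOn (by simp)).differentiableAt (hD.mem_nhds hp)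
  -- n₂ has vanishing derivative
  have hn₂zero : ∀ p ∈ D, fderiv ℝ n₂ p = 0 := by
    intro p hp
    have h1 : fderiv ℝ n₂ p (1, 0) = 0 := by
      have := hn₂u p hp
      rw [pu] at this
      rw [this, hμ₁0 p hp]
      simp
    have h2 : fderiv ℝ n₂ p (0, 1) = 0 := by
      have := hn₂v p hp
      rw [pv] at this
      rw [this, hμ₂0 p hp]
      simp
    exact ContinuousLinearMap.ext (clm_apply_zero_of_basis _ h1 h2)
  have hn₂const : ∀ p ∈ D, ∀ q ∈ D, n₂ p = n₂ q :=
    const_on_of_fderiv_zero hD hDconn.isPreconnected hn₂d hn₂zero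
  refine ⟨hn₂const, ?_⟩
  intro p₀ hp₀ p hp
  set c : V4 := n₂ p₀ with hc
  -- the continuous linear functional v ↦ mink v c
  set L : V4 →L[ℝ] ℝ :=
    c 0 • (ContinuousLinearMap.proj 0 : V4 →L[ℝ] ℝ)
      + c 1 • (ContinuousLinearMap.proj 1 : V4 →L[ℝ] ℝ)
      + c 2 • (ContinuousLinearMap.proj 2 : V4 →L[ℝ] ℝ)
      - c 3 • (ContinuousLinearMap.proj 3 : V4 →L[ℝ] ℝ) with hL
  have hLapp : ∀ v : V4, L v = mink v c := by
    intro v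
    simp [hL, mink]
    ring
  set g : ℝ × ℝ → ℝ := fun r => L (z r) with hg
  have hgd : ∀ r ∈ D, DifferentiableAt ℝ g r := fun r hr =>
    L.differentiableAt.comp r (hzd r hr)
  have hgfderiv : ∀ r ∈ D, fderiv ℝ g r = L.comp (fderiv ℝ z r) := fun r hr =>
    (L.hasFDerivAt.comp r (hzd r hr).hasFDerivAt).fderiv
  have hgzero : ∀ r ∈ D, fderiv ℝ g r = 0 := by
    intro r hr
    rw [hgfderiv r hr]
    have h1 : (L.comp (fderiv ℝ z r)) (1, 0) = 0 := by
      have hzu' := hzu r hr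
      rw [pu] at hzu'
      rw [ContinuousLinearMap.comp_apply, hzu', map_smul, hLapp, hc,
        hn₂const p₀ hp₀ r hr, hxn₂ r hr, smul_zero]
    have h2 : (L.comp (fderiv ℝ z r)) (0, 1) = 0 := by
      have hzv' := hzv r hr
      rw [pv] at hzv'
      rw [ContinuousLinearMap.comp_apply, hzv', map_smul, hLapp, hc,
        hn₂const p₀ hp₀ r hr, hyn₂ r hr, smul_zero]
    exact ContinuousLinearMap.ext (clm_apply_zero_of_basis _ h1 h2)
  have hgconst := const_on_of_fderiv_zero hD hDconn.isPreconnected hgd hgzero p hp p₀ hp₀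
  have : mink (z p) c = mink (z p₀) c := by
    rw [← hLapp, ← hLapp]; exact hgconst
  have hsub : mink (z p - z p₀) c = mink (z p) c - mink (z p₀) c := by
    simp [mink]; ring
  rw [hsub, this, sub_self]
end
end

section
/- (Existence of canonical parameters in the case K − H² = 0.) Assume μ₁ is nowhere zero on D, μ₂ = 0 identically on D, and ∂_v(f²|μ₁|) = 0 on D. Then for every (u₀,v₀) ∈ D there exist a real number ū₀, an open interval Ī ∋ ū₀, and a smooth function α : Ī → I with α′ > 0 and α(ū₀) = u₀, such that the reparametrized surface z̄(ū,v̄) := z(α(ū), v̄) satisfies ⟨z̄_ū, z̄_ū⟩ = 0, ⟨z̄_v̄, z̄_v̄⟩ = 0, and ⟨z̄_ū, z̄_v̄⟩ = −1/|μ₁(α(ū), v̄)|; i.e. (ū,v̄) are canonical isotropic parameters. -/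
open scoped ContDiff Topology NNReal ENNReal
open Filter Set

noncomputable section

lemma mink_smul_left (c : ℝ) (a b : V4) : mink (c • a) b = c * mink a b := by
  simp only [mink, Pi.smul_apply, smul_eq_mul]
  ring

lemma mink_smul_right (c : ℝ) (a b : V4) : mink a (c • b) = c * mink a b := by
  simp only [mink, Pi.smul_apply, smul_eq_mul]
  ring

lemma contDiffOn_mink {A B : ℝ × ℝ → V4} {s : Set (ℝ × ℝ)}
    (hA : ContDiffOn ℝ (⊤ : ℕ∞) A s) (hB : ContDiffOn ℝ (⊤ : ℕ∞) B s) :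
    ContDiffOn ℝ (⊤ : ℕ∞) (fun p => mink (A p) (B p)) s := by
  have h : ∀ (i : Fin 4) (C : ℝ × ℝ → V4), ContDiffOn ℝ (⊤ : ℕ∞) C s →
      ContDiffOn ℝ (⊤ : ℕ∞) (fun p => C p i) s := fun i C hC =>
    (ContinuousLinearMap.proj (R := ℝ) (φ := fun _ : Fin 4 => ℝ) i).contDiff.comp_contDiffOn hC
  simp only [mink]
  exact ((((h 0 A hA).mul (h 0 B hB)).add ((h 1 A hA).mul (h 1 B hB))).add
    ((h 2 A hA).mul (h 2 B hB))).sub ((h 3 A hA).mul (h 3 B hB))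

/-- Existence of canonical isotropic parameters in the case `K − H² = 0`.
If `μ₁` is nowhere zero on `D = I × J`, `μ₂ = 0` identically, and `∂_v(f²|μ₁|) = 0`
on `D`, then about every point there is a monotone smooth reparametrization
`(ū,v̄) ↦ (α(ū), v̄)` after which the surface is in isotropic parameters with
`⟨z̄_ū, z̄_v̄⟩ = −1/|μ₁|`, i.e. canonical isotropic parameters. -/
theorem exists_canonical_parameters_of_K_eq_H_sq
    (I J : Set ℝ)
    (hI : IsOpen I) (hIint : I.OrdConnected) (hJ : IsOpen J) (hJint : J.OrdConnected)
    (z : ℝ × ℝ → V4) (f : ℝ × ℝ → ℝ) (n₂ : ℝ × ℝ → V4) (μ₁ μ₂ : ℝ × ℝ → ℝ)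
    (hz : ContDiffOn ℝ (⊤ : ℕ∞) z (I ×ˢ J)) (hf : ContDiffOn ℝ (⊤ : ℕ∞) f (I ×ˢ J))
    (hn₂ : ContDiffOn ℝ (⊤ : ℕ∞) n₂ (I ×ˢ J))
    (hfpos : ∀ p ∈ I ×ˢ J, 0 < f p)
    -- isotropic parameters
    (hE : ∀ p ∈ I ×ˢ J, mink (pu z p) (pu z p) = 0)
    (hG : ∀ p ∈ I ×ˢ J, mink (pv z p) (pv z p) = 0)
    (hF : ∀ p ∈ I ×ˢ J, mink (pu z p) (pv z p) = -(f p) ^ 2)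
    -- n₂ is a unit normal vector field
    (hn₂n₂ : ∀ p ∈ I ×ˢ J, mink (n₂ p) (n₂ p) = 1)
    (hn₂zu : ∀ p ∈ I ×ˢ J, mink (n₂ p) (pu z p) = 0)
    (hn₂zv : ∀ p ∈ I ×ˢ J, mink (n₂ p) (pv z p) = 0)
    -- μ₁ = (1/f²)⟨z_uu, n₂⟩ and μ₂ = (1/f²)⟨z_vv, n₂⟩
    (hμ₁def : ∀ p ∈ I ×ˢ J, μ₁ p = (1 / (f p) ^ 2) * mink (pu (pu z) p) (n₂ p))
    (hμ₂def : ∀ p ∈ I ×ˢ J, μ₂ p = (1 / (f p) ^ 2) * mink (pv (pv z) p) (n₂ p))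
    -- μ₁ is nowhere zero and μ₂ vanishes identically on D
    (hμ₁ne : ∀ p ∈ I ×ˢ J, μ₁ p ≠ 0) (hμ₂0 : ∀ p ∈ I ×ˢ J, μ₂ p = 0)
    -- ∂_v(f²|μ₁|) = 0 on D
    (hφ : ∀ p ∈ I ×ˢ J, pv (fun q => (f q) ^ 2 * |μ₁ q|) p = 0) :
    ∀ u₀ ∈ I, ∀ v₀ ∈ J,
      ∃ (ubar₀ : ℝ) (Ibar : Set ℝ) (α : ℝ → ℝ),
        IsOpen Ibar ∧ Ibar.OrdConnected ∧ ubar₀ ∈ Ibar ∧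
        ContDiffOn ℝ (⊤ : ℕ∞) α Ibar ∧ Set.MapsTo α Ibar I ∧
        (∀ t ∈ Ibar, 0 < deriv α t) ∧ α ubar₀ = u₀ ∧
        (∀ q ∈ Ibar ×ˢ J,
          mink (pu (fun r => z (α r.1, r.2)) q) (pu (fun r => z (α r.1, r.2)) q) = 0 ∧
          mink (pv (fun r => z (α r.1, r.2)) q) (pv (fun r => z (α r.1, r.2)) q) = 0 ∧
          mink (pu (fun r => z (α r.1, r.2)) q) (pv (fun r => z (α r.1, r.2)) q) =
            -1 / |μ₁ (α q.1, q.2)|) := by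
  intro u₀ hu₀ v₀ hv₀
  have hD : IsOpen (I ×ˢ J) := hI.prod hJ
  have hIconv : Convex ℝ I := convex_iff_ordConnected.2 hIint
  have hJconv : Convex ℝ J := convex_iff_ordConnected.2 hJint
  have hDconv : Convex ℝ (I ×ˢ J) := hIconv.prod hJconv
  have hω1 : ((⊤ : ℕ∞) : WithTop ℕ∞) ≠ 0 := by simp
  have hωadd : ((⊤ : ℕ∞) : WithTop ℕ∞) + 1 ≤ ((⊤ : ℕ∞) : WithTop ℕ∞) := by exact_mod_cast le_top
  -- μ₁ is C^ω on D
  have hzu : ContDiffOn ℝ (⊤ : ℕ∞) (pu z) (I ×ˢ J) :=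
    (hz.fderiv_of_isOpen hD hωadd).clm_apply contDiffOn_const
  have hzuu : ContDiffOn ℝ (⊤ : ℕ∞) (pu (pu z)) (I ×ˢ J) :=
    (hzu.fderiv_of_isOpen hD hωadd).clm_apply contDiffOn_const
  have hμ₁c : ContDiffOn ℝ (⊤ : ℕ∞) μ₁ (I ×ˢ J) := by
    have hEc : ContDiffOn ℝ (⊤ : ℕ∞) (fun p => (1 / (f p) ^ 2) * mink (pu (pu z) p) (n₂ p)) (I ×ˢ J) :=
      (contDiffOn_const.div ((hf.pow 2))
        (fun p hp => pow_ne_zero 2 (hfpos p hp).ne')).mul (contDiffOn_mink hzuu hn₂)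
    exact hEc.congr (fun p hp => hμ₁def p hp)
  -- constant sign
  obtain ⟨sμ, hsμ, habs⟩ : ∃ sμ : ℝ, (sμ = 1 ∨ sμ = -1) ∧
      ∀ p ∈ I ×ˢ J, |μ₁ p| = sμ * μ₁ p := by
    have hIVT : ∀ p ∈ I ×ˢ J, ∀ q ∈ I ×ˢ J, μ₁ p < 0 → 0 < μ₁ q → False := by
      intro p hp q hq h1 h2
      obtain ⟨x, hx, hx0⟩ := hDconv.isPreconnected.intermediate_value hp hq
        hμ₁c.continuousOn ⟨h1.le, h2.le⟩
      exact hμ₁ne x hx hx0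
    by_cases hpos : 0 < μ₁ (u₀, v₀)
    · refine ⟨1, Or.inl rfl, fun p hp => ?_⟩
      rw [one_mul]
      apply abs_of_pos
      rcases (hμ₁ne p hp).lt_or_gt with h | h
      · exact (hIVT p hp _ ⟨hu₀, hv₀⟩ h hpos).elim
      · exact h
    · refine ⟨-1, Or.inr rfl, fun p hp => ?_⟩
      have hneg : μ₁ (u₀, v₀) < 0 :=
        lt_of_le_of_ne (not_lt.1 hpos) (hμ₁ne _ ⟨hu₀, hv₀⟩)
      have hpneg : μ₁ p < 0 := by
        rcases (hμ₁ne p hp).lt_or_gt with h | h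
        · exact h
        · exact (hIVT _ ⟨hu₀, hv₀⟩ p hp hneg h).elim
      rw [abs_of_neg hpneg]
      ring
  -- v-independence
  set φfun : ℝ → ℝ := fun x => (f (x, v₀)) ^ 2 * (sμ * μ₁ (x, v₀)) with hφfun
  have hFs : ContDiffOn ℝ (⊤ : ℕ∞) (fun q => (f q) ^ 2 * (sμ * μ₁ q)) (I ×ˢ J) :=
    (hf.pow 2).mul (contDiffOn_const.mul hμ₁c)
  have hφeq : ∀ u ∈ I, ∀ v ∈ J, (f (u, v)) ^ 2 * |μ₁ (u, v)| = φfun u := by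
    intro u hu v hv
    have hG' : ∀ v' ∈ J, HasDerivAt (fun w => f (u, w) ^ 2 * |μ₁ (u, w)|) 0 v' := by
      intro v' hv'
      have hp : (u, v') ∈ I ×ˢ J := ⟨hu, hv'⟩
      have hdF : DifferentiableAt ℝ (fun q => (f q) ^ 2 * |μ₁ q|) (u, v') := by
        have h1 : DifferentiableAt ℝ (fun q => (f q) ^ 2 * (sμ * μ₁ q)) (u, v') :=
          (hFs.contDiffAt (hD.mem_nhds hp)).differentiableAt hω1
        apply h1.congr_of_eventuallyEq
        filter_upwards [hD.mem_nhds hp] with q hq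
        rw [habs q hq]
      have h2 : HasDerivAt (fun w : ℝ => ((u : ℝ), w)) ((0 : ℝ), (1 : ℝ)) v' :=
        (hasDerivAt_const v' u).prodMk (hasDerivAt_id v')
      have hcomp := hdF.hasFDerivAt.comp_hasDerivAt v' h2
      have h0 := hφ (u, v') hp
      rw [pv] at h0
      rw [h0] at hcomp
      exact hcomp
    have hconst := hJconv.is_const_of_fderivWithin_eq_zero
      (f := fun w => f (u, w) ^ 2 * |μ₁ (u, w)|)
      (fun v' hv' => (hG' v' hv').differentiableAt.differentiableWithinAt)
      (fun v' hv' => by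
        have h5 := ((hG' v' hv').hasFDerivAt.hasFDerivWithinAt).fderivWithin
          (hJ.uniqueDiffOn v' hv')
        rw [h5]
        ext w
        simp) hv hv₀
    have hc2 : f (u, v) ^ 2 * |μ₁ (u, v)| = f (u, v₀) ^ 2 * |μ₁ (u, v₀)| := hconst
    rw [hc2, habs (u, v₀) ⟨hu, hv₀⟩]
  have hφc : ContDiffOn ℝ (⊤ : ℕ∞) φfun I := by
    have hmap : Set.MapsTo (fun x : ℝ => (x, v₀)) I (I ×ˢ J) := fun x hx => ⟨hx, hv₀⟩
    exact hFs.comp ((contDiff_id.prodMk contDiff_const).contDiffOn) hmap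
  have hφpos : ∀ x ∈ I, 0 < φfun x := by
    intro x hx
    have hp : (x, v₀) ∈ I ×ˢ J := ⟨hx, hv₀⟩
    have h1 : 0 < f (x, v₀) := hfpos _ hp
    have h2 : 0 < sμ * μ₁ (x, v₀) := by
      rw [← habs _ hp]
      exact abs_pos.2 (hμ₁ne _ hp)
    positivity
  -- the primitive β of φfun
  set β : ℝ → ℝ := fun x => ∫ t in u₀..x, φfun t with hβ
  have hφcont : ContinuousOn φfun I := hφc.continuousOn
  have hβd : ∀ x ∈ I, HasDerivAt β (φfun x) x := by
    intro x hx
    have hsub : Set.uIcc u₀ x ⊆ I := hIint.uIcc_subset hu₀ hx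
    have hint : IntervalIntegrable φfun MeasureTheory.volume u₀ x :=
      (hφcont.mono hsub).intervalIntegrable
    exact intervalIntegral.integral_hasDerivAt_right hint
      (hφcont.stronglyMeasurableAtFilter hI x hx)
      (hφcont.continuousAt (hI.mem_nhds hx))
  have hβc : ContDiffOn ℝ (⊤ : ℕ∞) β I := (contDiffOn_infty_iff_deriv_of_isOpen hI).2
    ⟨fun x hx => (hβd x hx).differentiableAt.differentiableWithinAt,
      hφc.congr (fun x hx => (hβd x hx).deriv)⟩
  have hβa : ∀ x ∈ I, ContDiffAt ℝ (⊤ : ℕ∞) β x := fun x hx => hβc.contDiffAt (hI.mem_nhds hx)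
  have hβmono : StrictMonoOn β I :=
    strictMonoOn_of_deriv_pos hIconv
      (fun x hx => (hβd x hx).continuousAt.continuousWithinAt)
      (fun x hx => by
        rw [hI.interior_eq] at hx
        rw [(hβd x hx).deriv]
        exact hφpos x hx)
  have hβinj : Set.InjOn β I := hβmono.injOn
  set Ibar : Set ℝ := β '' I with hIbar
  set α : ℝ → ℝ := Function.invFunOn β I with hα
  have hαmem : ∀ t ∈ Ibar, α t ∈ I := fun t ht => Function.invFunOn_mem (by
    obtain ⟨x, hx, hxt⟩ := ht; exact ⟨x, hx, hxt⟩)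
  have hαright : ∀ t ∈ Ibar, β (α t) = t := fun t ht => Function.invFunOn_eq (by
    obtain ⟨x, hx, hxt⟩ := ht; exact ⟨x, hx, hxt⟩)
  have hαleft : ∀ x ∈ I, α (β x) = x := fun x hx => hβinj.leftInvOn_invFunOn hx
  have hβstrict : ∀ x ∈ I, HasStrictDerivAt β (φfun x) x := fun x hx => by
    have h := (hβa x hx).hasStrictDerivAt hω1
    rwa [(hβd x hx).deriv] at h
  have hIbarOpen : IsOpen Ibar := by
    rw [isOpen_iff_mem_nhds]
    rintro t ⟨x, hx, rfl⟩
    rw [← (hβstrict x hx).map_nhds_eq (hφpos x hx).ne']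
    exact Filter.image_mem_map (hI.mem_nhds hx)
  have hIbarConn : Ibar.OrdConnected := by
    have hpre : IsPreconnected Ibar := (hIconv.isPreconnected).image β
      (fun x hx => (hβd x hx).continuousAt.continuousWithinAt)
    exact hpre.ordConnected
  have hαsmooth : ∀ t ∈ Ibar, ContDiffAt ℝ (⊤ : ℕ∞) α t := by
    rintro t ⟨x, hx, rfl⟩
    have hc : ContDiffAt ℝ (⊤ : ℕ∞) β x := hβa x hx
    have hFD := (hβd x hx).hasFDerivAt_equiv (hφpos x hx).ne'
    have H := hc.hasStrictFDerivAt' hFD hω1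
    have ev1 := H.eventually_right_inverse
    have ev0 : H.localInverse β _ x (β x) = x := H.localInverse_apply_image
    have evc : ContinuousAt (H.localInverse β _ x) (β x) := H.localInverse_continuousAt
    have evI : ∀ᶠ s in 𝓝 (β x), H.localInverse β _ x s ∈ I := by
      apply evc.eventually_mem
      rw [ev0]
      exact hI.mem_nhds hx
    have evIbar : ∀ᶠ s in 𝓝 (β x), s ∈ Ibar := hIbarOpen.mem_nhds ⟨x, hx, rfl⟩
    have heq : α =ᶠ[𝓝 (β x)] H.localInverse β _ x := by
      filter_upwards [ev1, evI, evIbar] with s h1 h2 h3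
      exact hβinj (hαmem s h3) h2 (by rw [hαright s h3, h1])
    exact (hc.to_localInverse hFD hω1).congr_of_eventuallyEq heq
  have hαd : ∀ t ∈ Ibar, HasDerivAt α (φfun (α t))⁻¹ t := by
    rintro t ⟨x, hx, rfl⟩
    have hg : ∀ᶠ y in 𝓝 x, α (β y) = y :=
      Filter.eventually_of_mem (hI.mem_nhds hx) (fun y hy => hαleft y hy)
    have h1 := ((hβstrict x hx).to_local_left_inverse (hφpos x hx).ne' hg).hasDerivAt
    rw [hαleft x hx]
    exact h1
  refine ⟨β u₀, Ibar, α, hIbarOpen, hIbarConn, ⟨u₀, hu₀, rfl⟩,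
    fun t ht => (hαsmooth t ht).contDiffWithinAt, hαmem, ?_, hαleft u₀ hu₀, ?_⟩
  · intro t ht
    rw [(hαd t ht).deriv]
    exact inv_pos.2 (hφpos _ (hαmem t ht))
  · rintro ⟨t, v⟩ ⟨ht, hv⟩
    have hxI : α t ∈ I := hαmem t ht
    set x := α t with hxdef
    have hp : (x, v) ∈ I ×ˢ J := ⟨hxI, hv⟩
    have hzdiff : DifferentiableAt ℝ z (x, v) :=
      (hz.contDiffAt (hD.mem_nhds hp)).differentiableAt hω1
    have hαdt : HasDerivAt α (φfun x)⁻¹ t := hαd t ht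
    have hg1 : HasFDerivAt (fun r : ℝ × ℝ => α r.1)
        ((φfun x)⁻¹ • ContinuousLinearMap.fst ℝ ℝ ℝ) (t, v) :=
      hαdt.comp_hasFDerivAt (f := Prod.fst) (t, v) hasFDerivAt_fst
    have hgmap : HasFDerivAt (fun r : ℝ × ℝ => (α r.1, r.2))
        (((φfun x)⁻¹ • ContinuousLinearMap.fst ℝ ℝ ℝ).prod (ContinuousLinearMap.snd ℝ ℝ ℝ))
        (t, v) := hg1.prodMk hasFDerivAt_snd
    have hw : HasFDerivAt (fun r : ℝ × ℝ => z (α r.1, r.2))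
        ((fderiv ℝ z (x, v)).comp
          (((φfun x)⁻¹ • ContinuousLinearMap.fst ℝ ℝ ℝ).prod (ContinuousLinearMap.snd ℝ ℝ ℝ)))
        (t, v) := HasFDerivAt.comp (t, v) hzdiff.hasFDerivAt hgmap
    have hpuw : pu (fun r : ℝ × ℝ => z (α r.1, r.2)) (t, v) = (φfun x)⁻¹ • pu z (x, v) := by
      rw [pu, hw.fderiv, ContinuousLinearMap.comp_apply]
      have h3 : (((φfun x)⁻¹ • ContinuousLinearMap.fst ℝ ℝ ℝ).prod
          (ContinuousLinearMap.snd ℝ ℝ ℝ)) ((1 : ℝ), (0 : ℝ)) =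
          (φfun x)⁻¹ • ((1 : ℝ), (0 : ℝ)) := by
        simp [Prod.smul_mk]
      rw [h3, (fderiv ℝ z (x, v)).map_smul]
      rfl
    have hpvw : pv (fun r : ℝ × ℝ => z (α r.1, r.2)) (t, v) = pv z (x, v) := by
      rw [pv, hw.fderiv, ContinuousLinearMap.comp_apply]
      have h3 : (((φfun x)⁻¹ • ContinuousLinearMap.fst ℝ ℝ ℝ).prod
          (ContinuousLinearMap.snd ℝ ℝ ℝ)) ((0 : ℝ), (1 : ℝ)) = ((0 : ℝ), (1 : ℝ)) := by
        simp
      rw [h3]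
      rfl
    have hfne : f (x, v) ≠ 0 := (hfpos _ hp).ne'
    have hμne : |μ₁ (x, v)| ≠ 0 := abs_ne_zero.2 (hμ₁ne _ hp)
    have hφx : φfun x = (f (x, v)) ^ 2 * |μ₁ (x, v)| := (hφeq x hxI v hv).symm
    refine ⟨?_, ?_, ?_⟩
    · rw [hpuw, mink_smul_left, mink_smul_right, hE _ hp]
      ring
    · rw [hpvw]
      exact hG _ hp
    · rw [hpuw, hpvw, mink_smul_left, hF _ hp, hφx]
      field_simp
end
end

section
/- (Integrability of the frame system of Fundamental Theorem 1.) Suppose λ, μ, ν satisfy on D the system of PDEs: ν_u + λ_v = λ·(ln|μ|)_v, λ_u − ε·ν_v = λ·(ln|μ|)_u, and |μ|·(ln|μ|)_uv = −ν² − ε(λ² + μ²). Then the matrix-valued maps A and B satisfy the integrability condition ∂_v A − ∂_u B + A·B − B·A = 0 at every point of D. -/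
noncomputable section

set_option maxHeartbeats 4000000 in
/-- Integrability of the frame system of Fundamental Theorem 1.
If `λ, μ, ν` satisfy the natural system of PDEs, then the matrix-valued maps `A`, `B`
satisfy the integrability condition `∂_v A − ∂_u B + A·B − B·A = 0` on `D`. -/
theorem integrability_frame_system_one
    (D : Set (ℝ × ℝ)) (hD : IsOpen D)
    (lam μ ν : ℝ × ℝ → ℝ)
    (hlam : ContDiffOn ℝ (⊤ : ℕ∞) lam D) (hμ : ContDiffOn ℝ (⊤ : ℕ∞) μ D) (hν : ContDiffOn ℝ (⊤ : ℕ∞) ν D)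
    (hμne : ∀ p ∈ D, μ p ≠ 0)
    (γ₁ γ₂ : ℝ × ℝ → ℝ)
    -- γ₁ = −(√|μ|)_u and γ₂ = −(√|μ|)_v
    (hγ₁ : ∀ p ∈ D, γ₁ p = -(pu (fun q => Real.sqrt |μ q|) p))
    (hγ₂ : ∀ p ∈ D, γ₂ p = -(pv (fun q => Real.sqrt |μ q|) p))
    (ε : ℝ) (hε : ε = 1 ∨ ε = -1)
    (A B : ℝ × ℝ → Matrix (Fin 4) (Fin 4) ℝ)
    (hA : ∀ p ∈ D, A p = (Real.sqrt |μ p|)⁻¹ •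
      !![γ₁ p, 0, lam p, μ p;
         0, -γ₁ p, -ν p, 0;
         -ν p, lam p, 0, 0;
         0, μ p, 0, 0])
    (hB : ∀ p ∈ D, B p = (Real.sqrt |μ p|)⁻¹ •
      !![-γ₂ p, 0, -ν p, 0;
         0, γ₂ p, -ε * lam p, -ε * μ p;
         -ε * lam p, -ν p, 0, 0;
         -ε * μ p, 0, 0, 0])
    -- the system of natural PDEs
    (hpde1 : ∀ p ∈ D, pu ν p + pv lam p = lam p * pv (fun q => Real.log |μ q|) p)
    (hpde2 : ∀ p ∈ D, pu lam p - ε * pv ν p = lam p * pu (fun q => Real.log |μ q|) p)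
    (hpde3 : ∀ p ∈ D, |μ p| * pv (pu (fun q => Real.log |μ q|)) p =
      -(ν p) ^ 2 - ε * ((lam p) ^ 2 + (μ p) ^ 2)) :
    ∀ p ∈ D, ∀ i j : Fin 4,
      pv (fun q => A q i j) p - pu (fun q => B q i j) p
        + (A p * B p - B p * A p) i j = 0 := by
  intro p hp
  have hDn : D ∈ nhds p := hD.mem_nhds hp
  obtain ⟨σ, hσ, hσm⟩ : ∃ σ : ℝ, (σ = 1 ∨ σ = -1) ∧ 0 < σ * μ p := by
    rcases (hμne p hp).lt_or_gt with h | h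
    · exact ⟨-1, Or.inr rfl, by nlinarith⟩
    · exact ⟨1, Or.inl rfl, by nlinarith⟩
  have hσ2 : σ ^ 2 = 1 := by rcases hσ with h | h <;> simp [h]
  have hσ0 : σ ≠ 0 := by rcases hσ with h | h <;> simp [h]
  set U : Set (ℝ × ℝ) := D ∩ (fun q => σ * μ q) ⁻¹' Set.Ioi 0 with hUdef
  have hUopen : IsOpen U :=
    (continuousOn_const.mul hμ.continuousOn).isOpen_inter_preimage hD isOpen_Ioi
  have hpU : p ∈ U := ⟨hp, hσm⟩
  have hUn : U ∈ nhds p := hUopen.mem_nhds hpU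
  have habs : ∀ q ∈ U, |μ q| = σ * μ q := by
    intro q hq
    have h2 : 0 < σ * μ q := hq.2
    rcases hσ with h | h <;> subst h
    · rw [abs_of_pos (by linarith)]; ring
    · rw [abs_of_neg (by nlinarith)]; ring
  have hdμ : ∀ q ∈ U, DifferentiableAt ℝ μ q := fun q hq =>
    ((hμ.contDiffAt (hD.mem_nhds hq.1)).differentiableAt (by simp))
  have hSpos : ∀ q ∈ U, 0 < Real.sqrt |μ q| := fun q hq =>
    Real.sqrt_pos.2 (abs_pos.2 (hμne q hq.1))
  have hS2 : ∀ q ∈ U, (Real.sqrt |μ q|) ^ 2 = σ * μ q := fun q hq => by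
    rw [Real.sq_sqrt (abs_nonneg _), habs q hq]
  -- derivative of sqrt |μ|
  have hsfd : ∀ q ∈ U, HasFDerivAt (fun x => Real.sqrt |μ x|)
      ((σ / (2 * Real.sqrt |μ q|)) • fderiv ℝ μ q) q := by
    intro q hq
    have h0 : 0 < σ * μ q := hq.2
    have hinner : HasFDerivAt (fun x => σ * μ x) (σ • fderiv ℝ μ q) q :=
      ((hdμ q hq).hasFDerivAt).const_mul σ
    have hsq : HasFDerivAt (fun x => Real.sqrt (σ * μ x))
        ((1 / (2 * Real.sqrt (σ * μ q))) • (σ • fderiv ℝ μ q)) q :=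
      (Real.hasDerivAt_sqrt h0.ne').comp_hasFDerivAt q hinner
    have hev : (fun x => Real.sqrt |μ x|) =ᶠ[nhds q] fun x => Real.sqrt (σ * μ x) := by
      filter_upwards [hUopen.mem_nhds hq] with x hx
      rw [habs x hx]
    have h2 := hsq.congr_of_eventuallyEq hev
    rw [smul_smul] at h2
    convert h2 using 2
    rw [habs q hq]; ring
  have hsdiff : ∀ q ∈ U, DifferentiableAt ℝ (fun x => Real.sqrt |μ x|) q :=
    fun q hq => (hsfd q hq).differentiableAt
  have hsu_eq : ∀ q ∈ U, pu (fun x => Real.sqrt |μ x|) q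
      = (σ / 2) * ((Real.sqrt |μ q|)⁻¹ * pu μ q) := by
    intro q hq
    show fderiv ℝ _ q (1,0) = _
    rw [(hsfd q hq).fderiv]
    simp only [ContinuousLinearMap.coe_smul', Pi.smul_apply, smul_eq_mul]
    unfold pu; ring
  have hsv_eq : ∀ q ∈ U, pv (fun x => Real.sqrt |μ x|) q
      = (σ / 2) * ((Real.sqrt |μ q|)⁻¹ * pv μ q) := by
    intro q hq
    show fderiv ℝ _ q (0,1) = _
    rw [(hsfd q hq).fderiv]
    simp only [ContinuousLinearMap.coe_smul', Pi.smul_apply, smul_eq_mul]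
    unfold pv; ring
  -- derivative of log |μ|
  have hlgfd : ∀ q ∈ U, HasFDerivAt (fun x => Real.log |μ x|)
      ((μ q)⁻¹ • fderiv ℝ μ q) q := by
    intro q hq
    have h0 : 0 < σ * μ q := hq.2
    have hinner : HasFDerivAt (fun x => σ * μ x) (σ • fderiv ℝ μ q) q :=
      ((hdμ q hq).hasFDerivAt).const_mul σ
    have hsq : HasFDerivAt (fun x => Real.log (σ * μ x))
        ((σ * μ q)⁻¹ • (σ • fderiv ℝ μ q)) q :=
      by have h := (Real.hasDerivAt_log h0.ne').comp_hasFDerivAt q hinner; exact h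
    have hev : (fun x => Real.log |μ x|) =ᶠ[nhds q] fun x => Real.log (σ * μ x) := by
      filter_upwards [hUopen.mem_nhds hq] with x hx
      rw [habs x hx]
    have h2 := hsq.congr_of_eventuallyEq hev
    rw [smul_smul] at h2
    have hsc : (σ * μ q)⁻¹ * σ = (μ q)⁻¹ := by
      rcases hσ with h | h <;> subst h <;> field_simp
    rw [hsc] at h2
    exact h2
  have hlgu_eq : ∀ q ∈ U, pu (fun x => Real.log |μ x|) q = (μ q)⁻¹ * pu μ q := by
    intro q hq
    show fderiv ℝ _ q (1,0) = _
    rw [(hlgfd q hq).fderiv]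
    simp only [ContinuousLinearMap.coe_smul', Pi.smul_apply, smul_eq_mul]
    rfl
  have hlgv_eq : ∀ q ∈ U, pv (fun x => Real.log |μ x|) q = (μ q)⁻¹ * pv μ q := by
    intro q hq
    show fderiv ℝ _ q (0,1) = _
    rw [(hlgfd q hq).fderiv]
    simp only [ContinuousLinearMap.coe_smul', Pi.smul_apply, smul_eq_mul]
    rfl
  -- generic quotient-type derivative rule
  have key : ∀ (d f g : ℝ × ℝ → ℝ) (c : ℝ) (w : ℝ × ℝ),
      DifferentiableAt ℝ d p → d p ≠ 0 → DifferentiableAt ℝ f p →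
      (∀ q ∈ U, g q = c * ((d q)⁻¹ * f q)) →
      fderiv ℝ g p w =
        c * (-(fderiv ℝ d p w) * f p / (d p) ^ 2 + (d p)⁻¹ * fderiv ℝ f p w) := by
    intro d f g c w hd hd0 hf hg
    have hev : g =ᶠ[nhds p] fun q => c * ((d q)⁻¹ * f q) :=
      Filter.eventuallyEq_of_mem hUn hg
    rw [hev.fderiv_eq]
    have hinv : HasFDerivAt (fun q => (d q)⁻¹) ((-((d p) ^ 2)⁻¹) • fderiv ℝ d p) p :=
      (hasDerivAt_inv hd0).comp_hasFDerivAt p hd.hasFDerivAt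
    have h1 := (hinv.mul hf.hasFDerivAt).const_mul c
    rw [(show HasFDerivAt (fun q => c * ((d q)⁻¹ * f q)) _ p from h1).fderiv]
    simp only [ContinuousLinearMap.coe_smul', Pi.smul_apply, smul_eq_mul,
      ContinuousLinearMap.add_apply]
    ring
  -- differentiability of first partials of μ
  have hdF : DifferentiableAt ℝ (fderiv ℝ μ) p :=
    ((hμ.contDiffAt hDn).fderiv_right (m := 1) (WithTop.coe_le_coe.mpr le_top)).differentiableAt one_ne_zero
  have hdpuμ : DifferentiableAt ℝ (pu μ) p := by
    show DifferentiableAt ℝ (fun q => fderiv ℝ μ q (1,0)) p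
    exact hdF.clm_apply (differentiableAt_const _)
  have hdpvμ : DifferentiableAt ℝ (pv μ) p := by
    show DifferentiableAt ℝ (fun q => fderiv ℝ μ q (0,1)) p
    exact hdF.clm_apply (differentiableAt_const _)
  have hmix : ∀ w z : ℝ × ℝ, fderiv ℝ (fun q => fderiv ℝ μ q w) p z
      = fderiv ℝ (fderiv ℝ μ) p z w := by
    intro w z
    rw [fderiv_clm_apply hdF (differentiableAt_const w)]
    simp
  have hsym : pv (pu μ) p = pu (pv μ) p := by
    show fderiv ℝ (fun q => fderiv ℝ μ q (1,0)) p (0,1)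
      = fderiv ℝ (fun q => fderiv ℝ μ q (0,1)) p (1,0)
    rw [hmix, hmix]
    exact ((hμ.contDiffAt hDn).of_le (by rw [minSmoothness_of_isRCLikeNormedField]; exact WithTop.coe_le_coe.mpr le_top)).isSymmSndFDerivAt le_rfl (0,1) (1,0)
  -- differentiability of first partials of sqrt |μ|
  have hdpsu : DifferentiableAt ℝ (pu (fun x => Real.sqrt |μ x|)) p := by
    have hev : (pu (fun x => Real.sqrt |μ x|)) =ᶠ[nhds p]
        fun q => (σ / 2) * ((Real.sqrt |μ q|)⁻¹ * pu μ q) :=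
      Filter.eventuallyEq_of_mem hUn hsu_eq
    rw [hev.differentiableAt_iff]
    exact (((hsdiff p hpU).inv (hSpos p hpU).ne').mul hdpuμ).const_mul _
  have hdpsv : DifferentiableAt ℝ (pv (fun x => Real.sqrt |μ x|)) p := by
    have hev : (pv (fun x => Real.sqrt |μ x|)) =ᶠ[nhds p]
        fun q => (σ / 2) * ((Real.sqrt |μ q|)⁻¹ * pv μ q) :=
      Filter.eventuallyEq_of_mem hUn hsv_eq
    rw [hev.differentiableAt_iff]
    exact (((hsdiff p hpU).inv (hSpos p hpU).ne').mul hdpvμ).const_mul _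
  -- mixed second derivatives of sqrt |μ|
  have hpsuv : pv (pu (fun x => Real.sqrt |μ x|)) p
      = (σ / 2) * (-(pv (fun x => Real.sqrt |μ x|) p) * pu μ p / (Real.sqrt |μ p|) ^ 2
        + (Real.sqrt |μ p|)⁻¹ * pv (pu μ) p) := by
    exact key (fun x => Real.sqrt |μ x|) (pu μ) _ (σ / 2) (0,1)
      (hsdiff p hpU) (hSpos p hpU).ne' hdpuμ hsu_eq
  have hpsvu : pu (pv (fun x => Real.sqrt |μ x|)) p
      = (σ / 2) * (-(pu (fun x => Real.sqrt |μ x|) p) * pv μ p / (Real.sqrt |μ p|) ^ 2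
        + (Real.sqrt |μ p|)⁻¹ * pu (pv μ) p) := by
    exact key (fun x => Real.sqrt |μ x|) (pv μ) _ (σ / 2) (1,0)
      (hsdiff p hpU) (hSpos p hpU).ne' hdpvμ hsv_eq
  -- mixed second derivative of log |μ|
  have hlguv : pv (pu (fun x => Real.log |μ x|)) p
      = 1 * (-(pv μ p) * pu μ p / (μ p) ^ 2 + (μ p)⁻¹ * pv (pu μ) p) := by
    refine key μ (pu μ) _ 1 (0,1) (hdμ p hpU) (hμne p hp) hdpuμ ?_
    intro q hq
    rw [hlgu_eq q hq]; ring
  have hdlam : DifferentiableAt ℝ lam p := (hlam.contDiffAt hDn).differentiableAt (by simp)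
  have hdν : DifferentiableAt ℝ ν p := (hν.contDiffAt hDn).differentiableAt (by simp)
  have hε2 : ε ^ 2 = 1 := by rcases hε with h | h <;> simp [h]
  have hS0 : Real.sqrt |μ p| ≠ 0 := (hSpos p hpU).ne'
  have hm0 : μ p ≠ 0 := hμne p hp
  -- PDE scalars
  have H1 : pu ν p + pv lam p = lam p * ((μ p)⁻¹ * pv μ p) := by
    rw [hpde1 p hp, hlgv_eq p hpU]
  have H2 : pu lam p - ε * pv ν p = lam p * ((μ p)⁻¹ * pu μ p) := by
    rw [hpde2 p hp, hlgu_eq p hpU]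
  have H3 : (σ * μ p) * (1 * (-(pv μ p) * pu μ p / (μ p) ^ 2 + (μ p)⁻¹ * pv (pu μ) p))
      = -(ν p) ^ 2 - ε * ((lam p) ^ 2 + (μ p) ^ 2) := by
    rw [← hlguv, ← habs p hpU]
    exact hpde3 p hp
  have H1p : μ p * (pu ν p + pv lam p) = lam p * pv μ p := by
    field_simp at H1; linarith [H1]
  have H2p : μ p * (pu lam p - ε * pv ν p) = lam p * pu μ p := by
    field_simp at H2; linarith [H2]
  have H3p : σ * (μ p * pv (pu μ) p - pv μ p * pu μ p)
      = μ p * (-(ν p) ^ 2 - ε * ((lam p) ^ 2 + (μ p) ^ 2)) := by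
    field_simp at H3
    apply mul_left_cancel₀ (pow_ne_zero 2 hm0)
    linear_combination (μ p) ^ 2 * H3
  have hR2 : Real.sqrt (σ * μ p) ^ 2 = σ * μ p := Real.sq_sqrt hσm.le
  intro i j
  fin_cases i <;> fin_cases j
  · -- entry (0,0)
    show pv (fun q => A q 0 0) p - pu (fun q => B q 0 0) p
        + (A p * B p - B p * A p) 0 0 = 0
    have eA : ∀ q ∈ U, A q 0 0 = (-1 : ℝ) * ((Real.sqrt |μ q|)⁻¹ * (pu (fun x => Real.sqrt |μ x|)) q) := by
      intro q hq
      rw [hA q hq.1, hγ₁ q hq.1]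
      simp [Matrix.smul_apply, Matrix.vecHead, Matrix.vecTail]
      try ring
    have eB : ∀ q ∈ U, B q 0 0 = (1 : ℝ) * ((Real.sqrt |μ q|)⁻¹ * (pv (fun x => Real.sqrt |μ x|)) q) := by
      intro q hq
      rw [hB q hq.1, hγ₂ q hq.1]
      simp [Matrix.smul_apply, Matrix.vecHead, Matrix.vecTail]
      try ring
    have dAe : pv (fun q => A q 0 0) p
        = (-1 : ℝ) * (-(pv (fun x => Real.sqrt |μ x|) p) * (pu (fun x => Real.sqrt |μ x|)) p / (Real.sqrt |μ p|) ^ 2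
          + (Real.sqrt |μ p|)⁻¹ * pv (pu (fun x => Real.sqrt |μ x|)) p) :=
      key (fun x => Real.sqrt |μ x|) (pu (fun x => Real.sqrt |μ x|)) _ (-1 : ℝ) (0,1)
        (hsdiff p hpU) hS0 (hdpsu) eA
    have dBe : pu (fun q => B q 0 0) p
        = (1 : ℝ) * (-(pu (fun x => Real.sqrt |μ x|) p) * (pv (fun x => Real.sqrt |μ x|)) p / (Real.sqrt |μ p|) ^ 2
          + (Real.sqrt |μ p|)⁻¹ * pu (pv (fun x => Real.sqrt |μ x|)) p) :=
      key (fun x => Real.sqrt |μ x|) (pv (fun x => Real.sqrt |μ x|)) _ (1 : ℝ) (1,0)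
        (hsdiff p hpU) hS0 (hdpsv) eB
    have ec : (A p * B p - B p * A p) 0 0 = (Real.sqrt |μ p|)⁻¹ * (Real.sqrt |μ p|)⁻¹ * (-(ε*lam p^2) - ε*μ p^2 - ν p^2) := by
      rw [hA p hp, hB p hp, hγ₁ p hp, hγ₂ p hp]
      simp [Matrix.mul_apply, Fin.sum_univ_four, Matrix.smul_apply, Matrix.sub_apply]
      try ring
    rw [dAe, dBe, ec]
    simp only [hpsuv, hpsvu, ← hsym, hsu_eq p hpU, hsv_eq p hpU]
    field_simp [hS0, hm0]
    rw [habs p hpU]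
    linear_combination (-4*σ)*H3p + (-4*(σ*(pv (pu μ) p)+((ν p)^2 + ε*((lam p)^2+(μ p)^2))))*hR2
  · -- entry (0,1)
    show pv (fun q => A q 0 1) p - pu (fun q => B q 0 1) p
        + (A p * B p - B p * A p) 0 1 = 0
    have eA : ∀ q ∈ U, A q 0 1 = (0 : ℝ) * ((Real.sqrt |μ q|)⁻¹ * (lam) q) := by
      intro q hq
      rw [hA q hq.1]
      simp [Matrix.smul_apply, Matrix.vecHead, Matrix.vecTail]
      try ring
    have eB : ∀ q ∈ U, B q 0 1 = (0 : ℝ) * ((Real.sqrt |μ q|)⁻¹ * (lam) q) := by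
      intro q hq
      rw [hB q hq.1]
      simp [Matrix.smul_apply, Matrix.vecHead, Matrix.vecTail]
      try ring
    have dAe : pv (fun q => A q 0 1) p
        = (0 : ℝ) * (-(pv (fun x => Real.sqrt |μ x|) p) * (lam) p / (Real.sqrt |μ p|) ^ 2
          + (Real.sqrt |μ p|)⁻¹ * pv (lam) p) :=
      key (fun x => Real.sqrt |μ x|) (lam) _ (0 : ℝ) (0,1)
        (hsdiff p hpU) hS0 (hdlam) eA
    have dBe : pu (fun q => B q 0 1) p
        = (0 : ℝ) * (-(pu (fun x => Real.sqrt |μ x|) p) * (lam) p / (Real.sqrt |μ p|) ^ 2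
          + (Real.sqrt |μ p|)⁻¹ * pu (lam) p) :=
      key (fun x => Real.sqrt |μ x|) (lam) _ (0 : ℝ) (1,0)
        (hsdiff p hpU) hS0 (hdlam) eB
    have ec : (A p * B p - B p * A p) 0 1 = (0 : ℝ) := by
      rw [hA p hp, hB p hp, hγ₁ p hp, hγ₂ p hp]
      simp [Matrix.mul_apply, Fin.sum_univ_four, Matrix.smul_apply, Matrix.sub_apply]
      try ring
    rw [dAe, dBe, ec]
    simp only [hpsuv, hpsvu, ← hsym, hsu_eq p hpU, hsv_eq p hpU]
    field_simp [hS0, hm0]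
    ring
  · -- entry (0,2)
    show pv (fun q => A q 0 2) p - pu (fun q => B q 0 2) p
        + (A p * B p - B p * A p) 0 2 = 0
    have eA : ∀ q ∈ U, A q 0 2 = (1 : ℝ) * ((Real.sqrt |μ q|)⁻¹ * (lam) q) := by
      intro q hq
      rw [hA q hq.1]
      simp [Matrix.smul_apply, Matrix.vecHead, Matrix.vecTail]
      try ring
    have eB : ∀ q ∈ U, B q 0 2 = (-1 : ℝ) * ((Real.sqrt |μ q|)⁻¹ * (ν) q) := by
      intro q hq
      rw [hB q hq.1]
      simp [Matrix.smul_apply, Matrix.vecHead, Matrix.vecTail]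
      try ring
    have dAe : pv (fun q => A q 0 2) p
        = (1 : ℝ) * (-(pv (fun x => Real.sqrt |μ x|) p) * (lam) p / (Real.sqrt |μ p|) ^ 2
          + (Real.sqrt |μ p|)⁻¹ * pv (lam) p) :=
      key (fun x => Real.sqrt |μ x|) (lam) _ (1 : ℝ) (0,1)
        (hsdiff p hpU) hS0 (hdlam) eA
    have dBe : pu (fun q => B q 0 2) p
        = (-1 : ℝ) * (-(pu (fun x => Real.sqrt |μ x|) p) * (ν) p / (Real.sqrt |μ p|) ^ 2
          + (Real.sqrt |μ p|)⁻¹ * pu (ν) p) :=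
      key (fun x => Real.sqrt |μ x|) (ν) _ (-1 : ℝ) (1,0)
        (hsdiff p hpU) hS0 (hdν) eB
    have ec : (A p * B p - B p * A p) 0 2 = (Real.sqrt |μ p|)⁻¹ * (Real.sqrt |μ p|)⁻¹ * ((pu (fun x => Real.sqrt |μ x|) p)*ν p - (pv (fun x => Real.sqrt |μ x|) p)*lam p) := by
      rw [hA p hp, hB p hp, hγ₁ p hp, hγ₂ p hp]
      simp [Matrix.mul_apply, Fin.sum_univ_four, Matrix.smul_apply, Matrix.sub_apply]
      try ring
    rw [dAe, dBe, ec]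
    simp only [hpsuv, hpsvu, ← hsym, hsu_eq p hpU, hsv_eq p hpU]
    field_simp [hS0, hm0]
    rw [habs p hpU]
    linear_combination (2*σ)*H1p + 2*(pu ν p + pv lam p)*hR2
  · -- entry (0,3)
    show pv (fun q => A q 0 3) p - pu (fun q => B q 0 3) p
        + (A p * B p - B p * A p) 0 3 = 0
    have eA : ∀ q ∈ U, A q 0 3 = (1 : ℝ) * ((Real.sqrt |μ q|)⁻¹ * (μ) q) := by
      intro q hq
      rw [hA q hq.1]
      simp [Matrix.smul_apply, Matrix.vecHead, Matrix.vecTail]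
      try ring
    have eB : ∀ q ∈ U, B q 0 3 = (0 : ℝ) * ((Real.sqrt |μ q|)⁻¹ * (lam) q) := by
      intro q hq
      rw [hB q hq.1]
      simp [Matrix.smul_apply, Matrix.vecHead, Matrix.vecTail]
      try ring
    have dAe : pv (fun q => A q 0 3) p
        = (1 : ℝ) * (-(pv (fun x => Real.sqrt |μ x|) p) * (μ) p / (Real.sqrt |μ p|) ^ 2
          + (Real.sqrt |μ p|)⁻¹ * pv (μ) p) :=
      key (fun x => Real.sqrt |μ x|) (μ) _ (1 : ℝ) (0,1)
        (hsdiff p hpU) hS0 (hdμ p hpU) eA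
    have dBe : pu (fun q => B q 0 3) p
        = (0 : ℝ) * (-(pu (fun x => Real.sqrt |μ x|) p) * (lam) p / (Real.sqrt |μ p|) ^ 2
          + (Real.sqrt |μ p|)⁻¹ * pu (lam) p) :=
      key (fun x => Real.sqrt |μ x|) (lam) _ (0 : ℝ) (1,0)
        (hsdiff p hpU) hS0 (hdlam) eB
    have ec : (A p * B p - B p * A p) 0 3 = (Real.sqrt |μ p|)⁻¹ * (Real.sqrt |μ p|)⁻¹ * (-((pv (fun x => Real.sqrt |μ x|) p)*μ p)) := by
      rw [hA p hp, hB p hp, hγ₁ p hp, hγ₂ p hp]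
      simp [Matrix.mul_apply, Fin.sum_univ_four, Matrix.smul_apply, Matrix.sub_apply]
      try ring
    rw [dAe, dBe, ec]
    simp only [hpsuv, hpsvu, ← hsym, hsu_eq p hpU, hsv_eq p hpU]
    field_simp [hS0, hm0]
    rw [habs p hpU]
    linear_combination (2 * pv μ p) * hR2
  · -- entry (1,0)
    show pv (fun q => A q 1 0) p - pu (fun q => B q 1 0) p
        + (A p * B p - B p * A p) 1 0 = 0
    have eA : ∀ q ∈ U, A q 1 0 = (0 : ℝ) * ((Real.sqrt |μ q|)⁻¹ * (lam) q) := by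
      intro q hq
      rw [hA q hq.1]
      simp [Matrix.smul_apply, Matrix.vecHead, Matrix.vecTail]
      try ring
    have eB : ∀ q ∈ U, B q 1 0 = (0 : ℝ) * ((Real.sqrt |μ q|)⁻¹ * (lam) q) := by
      intro q hq
      rw [hB q hq.1]
      simp [Matrix.smul_apply, Matrix.vecHead, Matrix.vecTail]
      try ring
    have dAe : pv (fun q => A q 1 0) p
        = (0 : ℝ) * (-(pv (fun x => Real.sqrt |μ x|) p) * (lam) p / (Real.sqrt |μ p|) ^ 2
          + (Real.sqrt |μ p|)⁻¹ * pv (lam) p) :=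
      key (fun x => Real.sqrt |μ x|) (lam) _ (0 : ℝ) (0,1)
        (hsdiff p hpU) hS0 (hdlam) eA
    have dBe : pu (fun q => B q 1 0) p
        = (0 : ℝ) * (-(pu (fun x => Real.sqrt |μ x|) p) * (lam) p / (Real.sqrt |μ p|) ^ 2
          + (Real.sqrt |μ p|)⁻¹ * pu (lam) p) :=
      key (fun x => Real.sqrt |μ x|) (lam) _ (0 : ℝ) (1,0)
        (hsdiff p hpU) hS0 (hdlam) eB
    have ec : (A p * B p - B p * A p) 1 0 = (0 : ℝ) := by
      rw [hA p hp, hB p hp, hγ₁ p hp, hγ₂ p hp]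
      simp [Matrix.mul_apply, Fin.sum_univ_four, Matrix.smul_apply, Matrix.sub_apply]
      try ring
    rw [dAe, dBe, ec]
    simp only [hpsuv, hpsvu, ← hsym, hsu_eq p hpU, hsv_eq p hpU]
    field_simp [hS0, hm0]
    ring
  · -- entry (1,1)
    show pv (fun q => A q 1 1) p - pu (fun q => B q 1 1) p
        + (A p * B p - B p * A p) 1 1 = 0
    have eA : ∀ q ∈ U, A q 1 1 = (1 : ℝ) * ((Real.sqrt |μ q|)⁻¹ * (pu (fun x => Real.sqrt |μ x|)) q) := by
      intro q hq
      rw [hA q hq.1, hγ₁ q hq.1]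
      simp [Matrix.smul_apply, Matrix.vecHead, Matrix.vecTail]
      try ring
    have eB : ∀ q ∈ U, B q 1 1 = (-1 : ℝ) * ((Real.sqrt |μ q|)⁻¹ * (pv (fun x => Real.sqrt |μ x|)) q) := by
      intro q hq
      rw [hB q hq.1, hγ₂ q hq.1]
      simp [Matrix.smul_apply, Matrix.vecHead, Matrix.vecTail]
      try ring
    have dAe : pv (fun q => A q 1 1) p
        = (1 : ℝ) * (-(pv (fun x => Real.sqrt |μ x|) p) * (pu (fun x => Real.sqrt |μ x|)) p / (Real.sqrt |μ p|) ^ 2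
          + (Real.sqrt |μ p|)⁻¹ * pv (pu (fun x => Real.sqrt |μ x|)) p) :=
      key (fun x => Real.sqrt |μ x|) (pu (fun x => Real.sqrt |μ x|)) _ (1 : ℝ) (0,1)
        (hsdiff p hpU) hS0 (hdpsu) eA
    have dBe : pu (fun q => B q 1 1) p
        = (-1 : ℝ) * (-(pu (fun x => Real.sqrt |μ x|) p) * (pv (fun x => Real.sqrt |μ x|)) p / (Real.sqrt |μ p|) ^ 2
          + (Real.sqrt |μ p|)⁻¹ * pu (pv (fun x => Real.sqrt |μ x|)) p) :=
      key (fun x => Real.sqrt |μ x|) (pv (fun x => Real.sqrt |μ x|)) _ (-1 : ℝ) (1,0)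
        (hsdiff p hpU) hS0 (hdpsv) eB
    have ec : (A p * B p - B p * A p) 1 1 = (Real.sqrt |μ p|)⁻¹ * (Real.sqrt |μ p|)⁻¹ * (ν p^2 + ε*lam p^2 + ε*μ p^2) := by
      rw [hA p hp, hB p hp, hγ₁ p hp, hγ₂ p hp]
      simp [Matrix.mul_apply, Fin.sum_univ_four, Matrix.smul_apply, Matrix.sub_apply]
      try ring
    rw [dAe, dBe, ec]
    simp only [hpsuv, hpsvu, ← hsym, hsu_eq p hpU, hsv_eq p hpU]
    field_simp [hS0, hm0]
    rw [habs p hpU]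
    linear_combination (4*σ)*H3p + (4*(σ*(pv (pu μ) p)+((ν p)^2 + ε*((lam p)^2+(μ p)^2))))*hR2
  · -- entry (1,2)
    show pv (fun q => A q 1 2) p - pu (fun q => B q 1 2) p
        + (A p * B p - B p * A p) 1 2 = 0
    have eA : ∀ q ∈ U, A q 1 2 = (-1 : ℝ) * ((Real.sqrt |μ q|)⁻¹ * (ν) q) := by
      intro q hq
      rw [hA q hq.1]
      simp [Matrix.smul_apply, Matrix.vecHead, Matrix.vecTail]
      try ring
    have eB : ∀ q ∈ U, B q 1 2 = (-ε) * ((Real.sqrt |μ q|)⁻¹ * (lam) q) := by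
      intro q hq
      rw [hB q hq.1]
      simp [Matrix.smul_apply, Matrix.vecHead, Matrix.vecTail]
      try ring
    have dAe : pv (fun q => A q 1 2) p
        = (-1 : ℝ) * (-(pv (fun x => Real.sqrt |μ x|) p) * (ν) p / (Real.sqrt |μ p|) ^ 2
          + (Real.sqrt |μ p|)⁻¹ * pv (ν) p) :=
      key (fun x => Real.sqrt |μ x|) (ν) _ (-1 : ℝ) (0,1)
        (hsdiff p hpU) hS0 (hdν) eA
    have dBe : pu (fun q => B q 1 2) p
        = (-ε) * (-(pu (fun x => Real.sqrt |μ x|) p) * (lam) p / (Real.sqrt |μ p|) ^ 2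
          + (Real.sqrt |μ p|)⁻¹ * pu (lam) p) :=
      key (fun x => Real.sqrt |μ x|) (lam) _ (-ε) (1,0)
        (hsdiff p hpU) hS0 (hdlam) eB
    have ec : (A p * B p - B p * A p) 1 2 = (Real.sqrt |μ p|)⁻¹ * (Real.sqrt |μ p|)⁻¹ * (-(ε*(pu (fun x => Real.sqrt |μ x|) p)*lam p) - (pv (fun x => Real.sqrt |μ x|) p)*ν p) := by
      rw [hA p hp, hB p hp, hγ₁ p hp, hγ₂ p hp]
      simp [Matrix.mul_apply, Fin.sum_univ_four, Matrix.smul_apply, Matrix.sub_apply]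
      try ring
    rw [dAe, dBe, ec]
    simp only [hpsuv, hpsvu, ← hsym, hsu_eq p hpU, hsv_eq p hpU]
    field_simp [hS0, hm0]
    rw [habs p hpU]
    linear_combination (2*σ*ε)*H2p + 2*ε*(pu lam p - ε * pv ν p)*hR2 + (2*(Real.sqrt (σ*μ p))^2*(pv ν p))*hε2
  · -- entry (1,3)
    show pv (fun q => A q 1 3) p - pu (fun q => B q 1 3) p
        + (A p * B p - B p * A p) 1 3 = 0
    have eA : ∀ q ∈ U, A q 1 3 = (0 : ℝ) * ((Real.sqrt |μ q|)⁻¹ * (lam) q) := by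
      intro q hq
      rw [hA q hq.1]
      simp [Matrix.smul_apply, Matrix.vecHead, Matrix.vecTail]
      try ring
    have eB : ∀ q ∈ U, B q 1 3 = (-ε) * ((Real.sqrt |μ q|)⁻¹ * (μ) q) := by
      intro q hq
      rw [hB q hq.1]
      simp [Matrix.smul_apply, Matrix.vecHead, Matrix.vecTail]
      try ring
    have dAe : pv (fun q => A q 1 3) p
        = (0 : ℝ) * (-(pv (fun x => Real.sqrt |μ x|) p) * (lam) p / (Real.sqrt |μ p|) ^ 2
          + (Real.sqrt |μ p|)⁻¹ * pv (lam) p) :=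
      key (fun x => Real.sqrt |μ x|) (lam) _ (0 : ℝ) (0,1)
        (hsdiff p hpU) hS0 (hdlam) eA
    have dBe : pu (fun q => B q 1 3) p
        = (-ε) * (-(pu (fun x => Real.sqrt |μ x|) p) * (μ) p / (Real.sqrt |μ p|) ^ 2
          + (Real.sqrt |μ p|)⁻¹ * pu (μ) p) :=
      key (fun x => Real.sqrt |μ x|) (μ) _ (-ε) (1,0)
        (hsdiff p hpU) hS0 (hdμ p hpU) eB
    have ec : (A p * B p - B p * A p) 1 3 = (Real.sqrt |μ p|)⁻¹ * (Real.sqrt |μ p|)⁻¹ * (-(ε*(pu (fun x => Real.sqrt |μ x|) p)*μ p)) := by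
      rw [hA p hp, hB p hp, hγ₁ p hp, hγ₂ p hp]
      simp [Matrix.mul_apply, Fin.sum_univ_four, Matrix.smul_apply, Matrix.sub_apply]
      try ring
    rw [dAe, dBe, ec]
    simp only [hpsuv, hpsvu, ← hsym, hsu_eq p hpU, hsv_eq p hpU]
    field_simp [hS0, hm0]
    rw [habs p hpU]
    linear_combination (2 * ε * pu μ p) * hR2
  · -- entry (2,0)
    show pv (fun q => A q 2 0) p - pu (fun q => B q 2 0) p
        + (A p * B p - B p * A p) 2 0 = 0
    have eA : ∀ q ∈ U, A q 2 0 = (-1 : ℝ) * ((Real.sqrt |μ q|)⁻¹ * (ν) q) := by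
      intro q hq
      rw [hA q hq.1]
      simp [Matrix.smul_apply, Matrix.vecHead, Matrix.vecTail]
      try ring
    have eB : ∀ q ∈ U, B q 2 0 = (-ε) * ((Real.sqrt |μ q|)⁻¹ * (lam) q) := by
      intro q hq
      rw [hB q hq.1]
      simp [Matrix.smul_apply, Matrix.vecHead, Matrix.vecTail]
      try ring
    have dAe : pv (fun q => A q 2 0) p
        = (-1 : ℝ) * (-(pv (fun x => Real.sqrt |μ x|) p) * (ν) p / (Real.sqrt |μ p|) ^ 2
          + (Real.sqrt |μ p|)⁻¹ * pv (ν) p) :=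
      key (fun x => Real.sqrt |μ x|) (ν) _ (-1 : ℝ) (0,1)
        (hsdiff p hpU) hS0 (hdν) eA
    have dBe : pu (fun q => B q 2 0) p
        = (-ε) * (-(pu (fun x => Real.sqrt |μ x|) p) * (lam) p / (Real.sqrt |μ p|) ^ 2
          + (Real.sqrt |μ p|)⁻¹ * pu (lam) p) :=
      key (fun x => Real.sqrt |μ x|) (lam) _ (-ε) (1,0)
        (hsdiff p hpU) hS0 (hdlam) eB
    have ec : (A p * B p - B p * A p) 2 0 = (Real.sqrt |μ p|)⁻¹ * (Real.sqrt |μ p|)⁻¹ * (-(ν p*(pv (fun x => Real.sqrt |μ x|) p)) - ε*lam p*(pu (fun x => Real.sqrt |μ x|) p)) := by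
      rw [hA p hp, hB p hp, hγ₁ p hp, hγ₂ p hp]
      simp [Matrix.mul_apply, Fin.sum_univ_four, Matrix.smul_apply, Matrix.sub_apply]
      try ring
    rw [dAe, dBe, ec]
    simp only [hpsuv, hpsvu, ← hsym, hsu_eq p hpU, hsv_eq p hpU]
    field_simp [hS0, hm0]
    rw [habs p hpU]
    linear_combination (2*σ*ε)*H2p + 2*ε*(pu lam p - ε * pv ν p)*hR2 + (2*(Real.sqrt (σ*μ p))^2*(pv ν p))*hε2
  · -- entry (2,1)
    show pv (fun q => A q 2 1) p - pu (fun q => B q 2 1) p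
        + (A p * B p - B p * A p) 2 1 = 0
    have eA : ∀ q ∈ U, A q 2 1 = (1 : ℝ) * ((Real.sqrt |μ q|)⁻¹ * (lam) q) := by
      intro q hq
      rw [hA q hq.1]
      simp [Matrix.smul_apply, Matrix.vecHead, Matrix.vecTail]
      try ring
    have eB : ∀ q ∈ U, B q 2 1 = (-1 : ℝ) * ((Real.sqrt |μ q|)⁻¹ * (ν) q) := by
      intro q hq
      rw [hB q hq.1]
      simp [Matrix.smul_apply, Matrix.vecHead, Matrix.vecTail]
      try ring
    have dAe : pv (fun q => A q 2 1) p
        = (1 : ℝ) * (-(pv (fun x => Real.sqrt |μ x|) p) * (lam) p / (Real.sqrt |μ p|) ^ 2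
          + (Real.sqrt |μ p|)⁻¹ * pv (lam) p) :=
      key (fun x => Real.sqrt |μ x|) (lam) _ (1 : ℝ) (0,1)
        (hsdiff p hpU) hS0 (hdlam) eA
    have dBe : pu (fun q => B q 2 1) p
        = (-1 : ℝ) * (-(pu (fun x => Real.sqrt |μ x|) p) * (ν) p / (Real.sqrt |μ p|) ^ 2
          + (Real.sqrt |μ p|)⁻¹ * pu (ν) p) :=
      key (fun x => Real.sqrt |μ x|) (ν) _ (-1 : ℝ) (1,0)
        (hsdiff p hpU) hS0 (hdν) eB
    have ec : (A p * B p - B p * A p) 2 1 = (Real.sqrt |μ p|)⁻¹ * (Real.sqrt |μ p|)⁻¹ * (-(lam p*(pv (fun x => Real.sqrt |μ x|) p)) + ν p*(pu (fun x => Real.sqrt |μ x|) p)) := by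
      rw [hA p hp, hB p hp, hγ₁ p hp, hγ₂ p hp]
      simp [Matrix.mul_apply, Fin.sum_univ_four, Matrix.smul_apply, Matrix.sub_apply]
      try ring
    rw [dAe, dBe, ec]
    simp only [hpsuv, hpsvu, ← hsym, hsu_eq p hpU, hsv_eq p hpU]
    field_simp [hS0, hm0]
    rw [habs p hpU]
    linear_combination (2*σ)*H1p + 2*(pu ν p + pv lam p)*hR2
  · -- entry (2,2)
    show pv (fun q => A q 2 2) p - pu (fun q => B q 2 2) p
        + (A p * B p - B p * A p) 2 2 = 0
    have eA : ∀ q ∈ U, A q 2 2 = (0 : ℝ) * ((Real.sqrt |μ q|)⁻¹ * (lam) q) := by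
      intro q hq
      rw [hA q hq.1]
      simp [Matrix.smul_apply, Matrix.vecHead, Matrix.vecTail]
      try ring
    have eB : ∀ q ∈ U, B q 2 2 = (0 : ℝ) * ((Real.sqrt |μ q|)⁻¹ * (lam) q) := by
      intro q hq
      rw [hB q hq.1]
      simp [Matrix.smul_apply, Matrix.vecHead, Matrix.vecTail]
      try ring
    have dAe : pv (fun q => A q 2 2) p
        = (0 : ℝ) * (-(pv (fun x => Real.sqrt |μ x|) p) * (lam) p / (Real.sqrt |μ p|) ^ 2
          + (Real.sqrt |μ p|)⁻¹ * pv (lam) p) :=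
      key (fun x => Real.sqrt |μ x|) (lam) _ (0 : ℝ) (0,1)
        (hsdiff p hpU) hS0 (hdlam) eA
    have dBe : pu (fun q => B q 2 2) p
        = (0 : ℝ) * (-(pu (fun x => Real.sqrt |μ x|) p) * (lam) p / (Real.sqrt |μ p|) ^ 2
          + (Real.sqrt |μ p|)⁻¹ * pu (lam) p) :=
      key (fun x => Real.sqrt |μ x|) (lam) _ (0 : ℝ) (1,0)
        (hsdiff p hpU) hS0 (hdlam) eB
    have ec : (A p * B p - B p * A p) 2 2 = (0 : ℝ) := by
      rw [hA p hp, hB p hp, hγ₁ p hp, hγ₂ p hp]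
      simp [Matrix.mul_apply, Fin.sum_univ_four, Matrix.smul_apply, Matrix.sub_apply]
      try ring
    rw [dAe, dBe, ec]
    simp only [hpsuv, hpsvu, ← hsym, hsu_eq p hpU, hsv_eq p hpU]
    field_simp [hS0, hm0]
    ring
  · -- entry (2,3)
    show pv (fun q => A q 2 3) p - pu (fun q => B q 2 3) p
        + (A p * B p - B p * A p) 2 3 = 0
    have eA : ∀ q ∈ U, A q 2 3 = (0 : ℝ) * ((Real.sqrt |μ q|)⁻¹ * (lam) q) := by
      intro q hq
      rw [hA q hq.1]
      simp [Matrix.smul_apply, Matrix.vecHead, Matrix.vecTail]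
      try ring
    have eB : ∀ q ∈ U, B q 2 3 = (0 : ℝ) * ((Real.sqrt |μ q|)⁻¹ * (lam) q) := by
      intro q hq
      rw [hB q hq.1]
      simp [Matrix.smul_apply, Matrix.vecHead, Matrix.vecTail]
      try ring
    have dAe : pv (fun q => A q 2 3) p
        = (0 : ℝ) * (-(pv (fun x => Real.sqrt |μ x|) p) * (lam) p / (Real.sqrt |μ p|) ^ 2
          + (Real.sqrt |μ p|)⁻¹ * pv (lam) p) :=
      key (fun x => Real.sqrt |μ x|) (lam) _ (0 : ℝ) (0,1)
        (hsdiff p hpU) hS0 (hdlam) eA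
    have dBe : pu (fun q => B q 2 3) p
        = (0 : ℝ) * (-(pu (fun x => Real.sqrt |μ x|) p) * (lam) p / (Real.sqrt |μ p|) ^ 2
          + (Real.sqrt |μ p|)⁻¹ * pu (lam) p) :=
      key (fun x => Real.sqrt |μ x|) (lam) _ (0 : ℝ) (1,0)
        (hsdiff p hpU) hS0 (hdlam) eB
    have ec : (A p * B p - B p * A p) 2 3 = (0 : ℝ) := by
      rw [hA p hp, hB p hp, hγ₁ p hp, hγ₂ p hp]
      simp [Matrix.mul_apply, Fin.sum_univ_four, Matrix.smul_apply, Matrix.sub_apply]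
      try ring
    rw [dAe, dBe, ec]
    simp only [hpsuv, hpsvu, ← hsym, hsu_eq p hpU, hsv_eq p hpU]
    field_simp [hS0, hm0]
    ring
  · -- entry (3,0)
    show pv (fun q => A q 3 0) p - pu (fun q => B q 3 0) p
        + (A p * B p - B p * A p) 3 0 = 0
    have eA : ∀ q ∈ U, A q 3 0 = (0 : ℝ) * ((Real.sqrt |μ q|)⁻¹ * (lam) q) := by
      intro q hq
      rw [hA q hq.1]
      simp [Matrix.smul_apply, Matrix.vecHead, Matrix.vecTail]
      try ring
    have eB : ∀ q ∈ U, B q 3 0 = (-ε) * ((Real.sqrt |μ q|)⁻¹ * (μ) q) := by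
      intro q hq
      rw [hB q hq.1]
      simp [Matrix.smul_apply, Matrix.vecHead, Matrix.vecTail]
      try ring
    have dAe : pv (fun q => A q 3 0) p
        = (0 : ℝ) * (-(pv (fun x => Real.sqrt |μ x|) p) * (lam) p / (Real.sqrt |μ p|) ^ 2
          + (Real.sqrt |μ p|)⁻¹ * pv (lam) p) :=
      key (fun x => Real.sqrt |μ x|) (lam) _ (0 : ℝ) (0,1)
        (hsdiff p hpU) hS0 (hdlam) eA
    have dBe : pu (fun q => B q 3 0) p
        = (-ε) * (-(pu (fun x => Real.sqrt |μ x|) p) * (μ) p / (Real.sqrt |μ p|) ^ 2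
          + (Real.sqrt |μ p|)⁻¹ * pu (μ) p) :=
      key (fun x => Real.sqrt |μ x|) (μ) _ (-ε) (1,0)
        (hsdiff p hpU) hS0 (hdμ p hpU) eB
    have ec : (A p * B p - B p * A p) 3 0 = (Real.sqrt |μ p|)⁻¹ * (Real.sqrt |μ p|)⁻¹ * (-(ε*μ p*(pu (fun x => Real.sqrt |μ x|) p))) := by
      rw [hA p hp, hB p hp, hγ₁ p hp, hγ₂ p hp]
      simp [Matrix.mul_apply, Fin.sum_univ_four, Matrix.smul_apply, Matrix.sub_apply]
      try ring
    rw [dAe, dBe, ec]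
    simp only [hpsuv, hpsvu, ← hsym, hsu_eq p hpU, hsv_eq p hpU]
    field_simp [hS0, hm0]
    rw [habs p hpU]
    linear_combination (2 * ε * pu μ p) * hR2
  · -- entry (3,1)
    show pv (fun q => A q 3 1) p - pu (fun q => B q 3 1) p
        + (A p * B p - B p * A p) 3 1 = 0
    have eA : ∀ q ∈ U, A q 3 1 = (1 : ℝ) * ((Real.sqrt |μ q|)⁻¹ * (μ) q) := by
      intro q hq
      rw [hA q hq.1]
      simp [Matrix.smul_apply, Matrix.vecHead, Matrix.vecTail]
      try ring
    have eB : ∀ q ∈ U, B q 3 1 = (0 : ℝ) * ((Real.sqrt |μ q|)⁻¹ * (lam) q) := by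
      intro q hq
      rw [hB q hq.1]
      simp [Matrix.smul_apply, Matrix.vecHead, Matrix.vecTail]
      try ring
    have dAe : pv (fun q => A q 3 1) p
        = (1 : ℝ) * (-(pv (fun x => Real.sqrt |μ x|) p) * (μ) p / (Real.sqrt |μ p|) ^ 2
          + (Real.sqrt |μ p|)⁻¹ * pv (μ) p) :=
      key (fun x => Real.sqrt |μ x|) (μ) _ (1 : ℝ) (0,1)
        (hsdiff p hpU) hS0 (hdμ p hpU) eA
    have dBe : pu (fun q => B q 3 1) p
        = (0 : ℝ) * (-(pu (fun x => Real.sqrt |μ x|) p) * (lam) p / (Real.sqrt |μ p|) ^ 2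
          + (Real.sqrt |μ p|)⁻¹ * pu (lam) p) :=
      key (fun x => Real.sqrt |μ x|) (lam) _ (0 : ℝ) (1,0)
        (hsdiff p hpU) hS0 (hdlam) eB
    have ec : (A p * B p - B p * A p) 3 1 = (Real.sqrt |μ p|)⁻¹ * (Real.sqrt |μ p|)⁻¹ * (-(μ p*(pv (fun x => Real.sqrt |μ x|) p))) := by
      rw [hA p hp, hB p hp, hγ₁ p hp, hγ₂ p hp]
      simp [Matrix.mul_apply, Fin.sum_univ_four, Matrix.smul_apply, Matrix.sub_apply]
      try ring
    rw [dAe, dBe, ec]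
    simp only [hpsuv, hpsvu, ← hsym, hsu_eq p hpU, hsv_eq p hpU]
    field_simp [hS0, hm0]
    rw [habs p hpU]
    linear_combination (2 * pv μ p) * hR2
  · -- entry (3,2)
    show pv (fun q => A q 3 2) p - pu (fun q => B q 3 2) p
        + (A p * B p - B p * A p) 3 2 = 0
    have eA : ∀ q ∈ U, A q 3 2 = (0 : ℝ) * ((Real.sqrt |μ q|)⁻¹ * (lam) q) := by
      intro q hq
      rw [hA q hq.1]
      simp [Matrix.smul_apply, Matrix.vecHead, Matrix.vecTail]
      try ring
    have eB : ∀ q ∈ U, B q 3 2 = (0 : ℝ) * ((Real.sqrt |μ q|)⁻¹ * (lam) q) := by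
      intro q hq
      rw [hB q hq.1]
      simp [Matrix.smul_apply, Matrix.vecHead, Matrix.vecTail]
      try ring
    have dAe : pv (fun q => A q 3 2) p
        = (0 : ℝ) * (-(pv (fun x => Real.sqrt |μ x|) p) * (lam) p / (Real.sqrt |μ p|) ^ 2
          + (Real.sqrt |μ p|)⁻¹ * pv (lam) p) :=
      key (fun x => Real.sqrt |μ x|) (lam) _ (0 : ℝ) (0,1)
        (hsdiff p hpU) hS0 (hdlam) eA
    have dBe : pu (fun q => B q 3 2) p
        = (0 : ℝ) * (-(pu (fun x => Real.sqrt |μ x|) p) * (lam) p / (Real.sqrt |μ p|) ^ 2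
          + (Real.sqrt |μ p|)⁻¹ * pu (lam) p) :=
      key (fun x => Real.sqrt |μ x|) (lam) _ (0 : ℝ) (1,0)
        (hsdiff p hpU) hS0 (hdlam) eB
    have ec : (A p * B p - B p * A p) 3 2 = (0 : ℝ) := by
      rw [hA p hp, hB p hp, hγ₁ p hp, hγ₂ p hp]
      simp [Matrix.mul_apply, Fin.sum_univ_four, Matrix.smul_apply, Matrix.sub_apply]
      try ring
    rw [dAe, dBe, ec]
    simp only [hpsuv, hpsvu, ← hsym, hsu_eq p hpU, hsv_eq p hpU]
    field_simp [hS0, hm0]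
    ring
  · -- entry (3,3)
    show pv (fun q => A q 3 3) p - pu (fun q => B q 3 3) p
        + (A p * B p - B p * A p) 3 3 = 0
    have eA : ∀ q ∈ U, A q 3 3 = (0 : ℝ) * ((Real.sqrt |μ q|)⁻¹ * (lam) q) := by
      intro q hq
      rw [hA q hq.1]
      simp [Matrix.smul_apply, Matrix.vecHead, Matrix.vecTail]
      try ring
    have eB : ∀ q ∈ U, B q 3 3 = (0 : ℝ) * ((Real.sqrt |μ q|)⁻¹ * (lam) q) := by
      intro q hq
      rw [hB q hq.1]
      simp [Matrix.smul_apply, Matrix.vecHead, Matrix.vecTail]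
      try ring
    have dAe : pv (fun q => A q 3 3) p
        = (0 : ℝ) * (-(pv (fun x => Real.sqrt |μ x|) p) * (lam) p / (Real.sqrt |μ p|) ^ 2
          + (Real.sqrt |μ p|)⁻¹ * pv (lam) p) :=
      key (fun x => Real.sqrt |μ x|) (lam) _ (0 : ℝ) (0,1)
        (hsdiff p hpU) hS0 (hdlam) eA
    have dBe : pu (fun q => B q 3 3) p
        = (0 : ℝ) * (-(pu (fun x => Real.sqrt |μ x|) p) * (lam) p / (Real.sqrt |μ p|) ^ 2
          + (Real.sqrt |μ p|)⁻¹ * pu (lam) p) :=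
      key (fun x => Real.sqrt |μ x|) (lam) _ (0 : ℝ) (1,0)
        (hsdiff p hpU) hS0 (hdlam) eB
    have ec : (A p * B p - B p * A p) 3 3 = (0 : ℝ) := by
      rw [hA p hp, hB p hp, hγ₁ p hp, hγ₂ p hp]
      simp [Matrix.mul_apply, Fin.sum_univ_four, Matrix.smul_apply, Matrix.sub_apply]
      try ring
    rw [dAe, dBe, ec]
    simp only [hpsuv, hpsvu, ← hsym, hsu_eq p hpU, hsv_eq p hpU]
    field_simp [hS0, hm0]
    ring
end
end

section
/- (Integrability of the frame system of Fundamental Theorem 2.) Suppose ν_v = 0 on D (ν depends only on u) and λ, μ, ν satisfy on D the system of PDEs: ν_u + λ_v = λ·(ln|μ|)_v and |μ|·(ln|μ|)_uv = −ν². Then the matrix-valued maps A and B′ satisfy the integrability condition ∂_v A − ∂_u B′ + A·B′ − B′·A = 0 at every point of D. -/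
noncomputable section

open scoped ContDiff

private lemma fd_mul {f g : ℝ × ℝ → ℝ} {p : ℝ × ℝ} (w : ℝ × ℝ)
    (hf : DifferentiableAt ℝ f p) (hg : DifferentiableAt ℝ g p) :
    fderiv ℝ (fun q => f q * g q) p w
      = fderiv ℝ f p w * g p + f p * fderiv ℝ g p w := by
  rw [fderiv_fun_mul hf hg]
  simp only [ContinuousLinearMap.add_apply, ContinuousLinearMap.smul_apply, smul_eq_mul]
  ring

private lemma fd_inv {f : ℝ × ℝ → ℝ} {p : ℝ × ℝ} (w : ℝ × ℝ)
    (hf : DifferentiableAt ℝ f p) (h0 : f p ≠ 0) :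
    fderiv ℝ (fun q => (f q)⁻¹) p w = -(fderiv ℝ f p w) / f p ^ 2 := by
  have h : HasFDerivAt (fun q => (f q)⁻¹) ((-(f p ^ 2)⁻¹) • fderiv ℝ f p) p :=
    (hasDerivAt_inv h0).comp_hasFDerivAt p hf.hasFDerivAt
  rw [h.fderiv]
  simp only [ContinuousLinearMap.smul_apply, smul_eq_mul]
  field_simp

private lemma fd_neg' {f : ℝ × ℝ → ℝ} {p : ℝ × ℝ} {w : ℝ × ℝ} :
    fderiv ℝ (fun q => -f q) p w = -(fderiv ℝ f p w) := by
  rw [fderiv_fun_neg]; simp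

private lemma fd_cmul {f : ℝ × ℝ → ℝ} {p : ℝ × ℝ} (w : ℝ × ℝ) (c : ℝ)
    (hf : DifferentiableAt ℝ f p) :
    fderiv ℝ (fun q => c * f q) p w = c * fderiv ℝ f p w := by
  rw [fderiv_const_mul hf]; simp

set_option maxHeartbeats 2000000 in
/-- Integrability of the frame system of Fundamental Theorem 2.
If `ν_v = 0` and `λ, μ, ν` satisfy the reduced system of PDEs, then the matrix-valued
maps `A`, `B′` satisfy the integrability condition `∂_v A − ∂_u B′ + A·B′ − B′·A = 0`
on `D`. -/
theorem integrability_frame_system_two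
    (D : Set (ℝ × ℝ)) (hD : IsOpen D)
    (lam μ ν : ℝ × ℝ → ℝ)
    (hlam : ContDiffOn ℝ (⊤ : ℕ∞) lam D) (hμ : ContDiffOn ℝ (⊤ : ℕ∞) μ D) (hν : ContDiffOn ℝ (⊤ : ℕ∞) ν D)
    (hμne : ∀ p ∈ D, μ p ≠ 0)
    (γ₁ γ₂ : ℝ × ℝ → ℝ)
    -- γ₁ = −(√|μ|)_u and γ₂ = −(√|μ|)_v
    (hγ₁ : ∀ p ∈ D, γ₁ p = -(pu (fun q => Real.sqrt |μ q|) p))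
    (hγ₂ : ∀ p ∈ D, γ₂ p = -(pv (fun q => Real.sqrt |μ q|) p))
    (A B' : ℝ × ℝ → Matrix (Fin 4) (Fin 4) ℝ)
    (hA : ∀ p ∈ D, A p = (Real.sqrt |μ p|)⁻¹ •
      !![γ₁ p, 0, lam p, μ p;
         0, -γ₁ p, -ν p, 0;
         -ν p, lam p, 0, 0;
         0, μ p, 0, 0])
    (hB' : ∀ p ∈ D, B' p = (Real.sqrt |μ p|)⁻¹ •
      !![-γ₂ p, 0, -ν p, 0;
         0, γ₂ p, 0, 0;
         0, -ν p, 0, 0;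
         0, 0, 0, 0])
    -- ν depends only on u
    (hνv : ∀ p ∈ D, pv ν p = 0)
    -- the reduced system of natural PDEs
    (hpde1 : ∀ p ∈ D, pu ν p + pv lam p = lam p * pv (fun q => Real.log |μ q|) p)
    (hpde2 : ∀ p ∈ D, |μ p| * pv (pu (fun q => Real.log |μ q|)) p = -(ν p) ^ 2) :
    ∀ p ∈ D, ∀ i j : Fin 4,
      pv (fun q => A q i j) p - pu (fun q => B' q i j) p
        + (A p * B' p - B' p * A p) i j = 0 := by
  intro p hp
  set s : ℝ × ℝ → ℝ := fun q => Real.sqrt |μ q| with hsdef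
  set L : ℝ × ℝ → ℝ := fun q => Real.log |μ q| with hLdef
  -- localize the sign of μ
  obtain ⟨ε, hεne, U, hUo, hpU, hUD, hUε⟩ :
      ∃ ε : ℝ, ε ≠ 0 ∧ ∃ U, IsOpen U ∧ p ∈ U ∧ U ⊆ D ∧ ∀ q ∈ U, |μ q| = ε * μ q := by
    rcases (hμne p hp).lt_or_gt with h | h
    · refine ⟨-1, by norm_num, D ∩ μ ⁻¹' Set.Iio 0,
        hμ.continuousOn.isOpen_inter_preimage hD isOpen_Iio, ⟨hp, h⟩,
        Set.inter_subset_left, fun q hq => ?_⟩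
      rw [abs_of_neg hq.2]; ring
    · refine ⟨1, one_ne_zero, D ∩ μ ⁻¹' Set.Ioi 0,
        hμ.continuousOn.isOpen_inter_preimage hD isOpen_Ioi, ⟨hp, h⟩,
        Set.inter_subset_left, fun q hq => ?_⟩
      rw [abs_of_pos hq.2]; ring
  have hUn : U ∈ nhds p := hUo.mem_nhds hpU
  have hinf : (((⊤:ℕ∞) : WithTop ℕ∞)) ≤ ((⊤:ℕ∞) : WithTop ℕ∞) := le_rfl
  have h1le : ((⊤:ℕ∞) : WithTop ℕ∞) ≠ 0 := by
    simp
  have hμa : ∀ q ∈ U, ContDiffAt ℝ ((⊤:ℕ∞) : WithTop ℕ∞) μ q := fun q hq =>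
    ((hμ.contDiffAt (hD.mem_nhds (hUD hq))).of_le hinf)
  have hlama : ContDiffAt ℝ ((⊤:ℕ∞) : WithTop ℕ∞) lam p :=
    (hlam.contDiffAt (hD.mem_nhds hp)).of_le hinf
  have hνa : ∀ q ∈ U, ContDiffAt ℝ ((⊤:ℕ∞) : WithTop ℕ∞) ν q := fun q hq =>
    ((hν.contDiffAt (hD.mem_nhds (hUD hq))).of_le hinf)
  have hm0 : ∀ q ∈ U, |μ q| ≠ 0 := fun q hq => abs_ne_zero.mpr (hμne q (hUD hq))
  have hma : ∀ q ∈ U, ContDiffAt ℝ ((⊤:ℕ∞) : WithTop ℕ∞) (fun r => |μ r|) q := by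
    intro q hq
    refine ((contDiffAt_const (c := ε)).mul (hμa q hq)).congr_of_eventuallyEq ?_
    exact Filter.eventuallyEq_of_mem (hUo.mem_nhds hq) (fun r hr => hUε r hr)
  have hsa : ∀ q ∈ U, ContDiffAt ℝ ((⊤:ℕ∞) : WithTop ℕ∞) s q := fun q hq =>
    (hma q hq).sqrt (hm0 q hq)
  have hLa : ∀ q ∈ U, ContDiffAt ℝ ((⊤:ℕ∞) : WithTop ℕ∞) L q := fun q hq =>
    (hma q hq).log (hm0 q hq)
  have hsne : ∀ q ∈ U, s q ≠ 0 := fun q hq =>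
    Real.sqrt_ne_zero'.mpr (abs_pos.mpr (hμne q (hUD hq)))
  have hs2 : ∀ q ∈ U, s q ^ 2 = |μ q| := fun q hq => Real.sq_sqrt (abs_nonneg _)
  -- key derivative relation between √|μ| and log |μ|
  have hkey : ∀ q ∈ U, ∀ w : ℝ × ℝ, fderiv ℝ s q w = 2⁻¹ * fderiv ℝ L q w * s q := by
    intro q hq w
    have hm' : HasFDerivAt (fun r => |μ r|) (fderiv ℝ (fun r => |μ r|) q) q :=
      ((hma q hq).differentiableAt h1le).hasFDerivAt
    have h1 : fderiv ℝ s q = (1 / (2 * Real.sqrt |μ q|)) • fderiv ℝ (fun r => |μ r|) q :=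
      (hm'.sqrt (hm0 q hq)).fderiv
    have h2 : fderiv ℝ L q = (|μ q|)⁻¹ • fderiv ℝ (fun r => |μ r|) q :=
      (hm'.log (hm0 q hq)).fderiv
    have e1 : |μ q| = s q ^ 2 := (hs2 q hq).symm
    rw [h1, h2]
    simp only [ContinuousLinearMap.smul_apply, smul_eq_mul]
    rw [show Real.sqrt |μ q| = s q from rfl, e1]
    have := hsne q hq
    field_simp
  -- differentiability facts at p
  have hsd : DifferentiableAt ℝ s p := (hsa p hpU).differentiableAt h1le
  have hLfd : ContDiffAt ℝ ((⊤:ℕ∞) : WithTop ℕ∞) (fderiv ℝ L) p := by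
    refine (hLa p hpU).fderiv_right (le_of_eq ?_)
    rw [show ((1 : WithTop ℕ∞)) = (((1:ℕ∞)) : WithTop ℕ∞) from rfl, ← WithTop.coe_add]
    norm_num
  have hℓa : ∀ w : ℝ × ℝ, DifferentiableAt ℝ (fun q => fderiv ℝ L q w) p := fun w =>
    (hLfd.clm_apply contDiffAt_const).differentiableAt h1le
  -- symmetry of second derivatives of L
  have hflip : ∀ w w' : ℝ × ℝ, fderiv ℝ (fun q => fderiv ℝ L q w) p w'
      = fderiv ℝ (fderiv ℝ L) p w' w := by
    intro w w'
    have hd : DifferentiableAt ℝ (fderiv ℝ L) p := hLfd.differentiableAt h1le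
    rw [fderiv_clm_apply hd (differentiableAt_const w)]
    simp
  have hsymm : fderiv ℝ (fun q => fderiv ℝ L q (0,1)) p (1,0)
      = fderiv ℝ (fun q => fderiv ℝ L q (1,0)) p (0,1) := by
    have hsy := (hLa p hpU).isSymmSndFDerivAt (by
      rw [show (2 : WithTop ℕ∞) = ((2:ℕ∞) : WithTop ℕ∞) from rfl]
      rw [minSmoothness_of_isRCLikeNormedField]
      exact WithTop.coe_le_coe.mpr le_top)
    rw [hflip, hflip, hsy.eq]
  -- PDE facts at p rewritten with fderiv
  have hP1 : fderiv ℝ ν p (1,0) + fderiv ℝ lam p (0,1) = lam p * fderiv ℝ L p (0,1) :=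
    hpde1 p hp
  have hνv' : fderiv ℝ ν p (0,1) = 0 := hνv p hp
  have hP2 : s p ^ 2 * fderiv ℝ (fun q => fderiv ℝ L q (1,0)) p (0,1) = -(ν p) ^ 2 := by
    have h2 : |μ p| * pv (pu L) p = -(ν p) ^ 2 := hpde2 p hp
    rw [← hs2 p hpU] at h2
    exact h2
  have hX : fderiv ℝ (fun q => fderiv ℝ L q (1,0)) p (0,1) = -(ν p) ^ 2 / s p ^ 2 := by
    rw [eq_div_iff (pow_ne_zero 2 (hsne p hpU))]
    linarith [hP2]
  -- v-derivative of log|μ| in terms of μ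
  have hμv : μ p * fderiv ℝ L p (0,1) = fderiv ℝ μ p (0,1) := by
    have hμd : DifferentiableAt ℝ μ p := (hμa p hpU).differentiableAt h1le
    have h1 : HasFDerivAt (fun r => ε * μ r) (ε • fderiv ℝ μ p) p :=
      hμd.hasFDerivAt.const_mul ε
    have hm' : HasFDerivAt (fun r => |μ r|) (ε • fderiv ℝ μ p) p :=
      h1.congr_of_eventuallyEq (Filter.eventuallyEq_of_mem hUn hUε)
    have h2 : fderiv ℝ L p = (|μ p|)⁻¹ • (ε • fderiv ℝ μ p) :=
      (hm'.log (hm0 p hpU)).fderiv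
    rw [h2]
    simp only [ContinuousLinearMap.smul_apply, smul_eq_mul]
    rw [hUε p hpU]
    have hμp := hμne p hp
    field_simp
  -- derivative of 1/s and of products (1/s) * c at p
  have hσd : ∀ w : ℝ × ℝ, fderiv ℝ (fun q => (s q)⁻¹) p w
      = -(2⁻¹ * fderiv ℝ L p w) * (s p)⁻¹ := by
    intro w
    rw [fd_inv w hsd (hsne p hpU), hkey p hpU w]
    have := hsne p hpU
    field_simp
  have hprod : ∀ (c : ℝ × ℝ → ℝ) (w : ℝ × ℝ), DifferentiableAt ℝ c p →
      fderiv ℝ (fun q => (s q)⁻¹ * c q) p w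
        = (s p)⁻¹ * (fderiv ℝ c p w - 2⁻¹ * fderiv ℝ L p w * c p) := by
    intro c w hc
    rw [fd_mul (f := fun q => (s q)⁻¹) w (hsd.inv (hsne p hpU)) hc, hσd w]
    ring
  have hlamd : DifferentiableAt ℝ lam p := hlama.differentiableAt h1le
  have hνd : DifferentiableAt ℝ ν p := (hνa p hpU).differentiableAt h1le
  have hμd : DifferentiableAt ℝ μ p := (hμa p hpU).differentiableAt h1le
  have hγval : ∀ q ∈ U, γ₁ q = -(2⁻¹ * fderiv ℝ L q (1,0) * s q) ∧
      γ₂ q = -(2⁻¹ * fderiv ℝ L q (0,1) * s q) := by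
    intro q hq
    constructor
    · rw [hγ₁ q (hUD hq)]
      show -(fderiv ℝ s q (1,0)) = _
      rw [hkey q hq (1,0)]
    · rw [hγ₂ q (hUD hq)]
      show -(fderiv ℝ s q (0,1)) = _
      rw [hkey q hq (0,1)]
  have hsp : Real.sqrt |μ p| = s p := rfl
  have hS := hsne p hpU
  intro i j
  fin_cases i <;> fin_cases j
  · show pv (fun q => A q 0 0) p - pu (fun q => B' q 0 0) p + (A p * B' p - B' p * A p) 0 0 = 0
    have eA : (fun q => A q 0 0) =ᶠ[nhds p] fun q => -2⁻¹ * fderiv ℝ L q (1,0) := by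
      filter_upwards [hUn] with q hq
      rw [hA q (hUD hq)]
      simp only [Matrix.smul_apply, Matrix.cons_val', Matrix.cons_val_zero, Matrix.empty_val',
        Matrix.cons_val_fin_one, smul_eq_mul, Matrix.of_apply]
      rw [(hγval q hq).1, show Real.sqrt |μ q| = s q from rfl]
      field_simp [hsne q hq]
      try ring
    have eB : (fun q => B' q 0 0) =ᶠ[nhds p] fun q => 2⁻¹ * fderiv ℝ L q (0,1) := by
      filter_upwards [hUn] with q hq
      rw [hB' q (hUD hq)]
      simp only [Matrix.smul_apply, Matrix.cons_val', Matrix.cons_val_zero, Matrix.empty_val',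
        Matrix.cons_val_fin_one, smul_eq_mul, Matrix.of_apply]
      rw [(hγval q hq).2, show Real.sqrt |μ q| = s q from rfl]
      field_simp [hsne q hq]
      try ring
    simp only [pu, pv]
    rw [eA.fderiv_eq, eB.fderiv_eq, fd_cmul (0,1) (-2⁻¹) (hℓa (1,0)),
      fd_cmul (1,0) (2⁻¹) (hℓa (0,1)), hsymm]
    rw [hA p hp, hB' p hp]
    simp [Matrix.mul_apply, Fin.sum_univ_four, Matrix.vecHead, Matrix.vecTail]
    try rw [hsp]
    try rw [(hγval p hpU).1]
    try rw [(hγval p hpU).2]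
    try rw [hX]
    field_simp
    ring
  · show pv (fun q => A q 0 1) p - pu (fun q => B' q 0 1) p + (A p * B' p - B' p * A p) 0 1 = 0
    have eA : (fun q => A q 0 1) =ᶠ[nhds p] fun _ => (0:ℝ) := by
      filter_upwards [hUn] with q hq; rw [hA q (hUD hq)]; simp [Matrix.vecHead, Matrix.vecTail]
    have eB : (fun q => B' q 0 1) =ᶠ[nhds p] fun _ => (0:ℝ) := by
      filter_upwards [hUn] with q hq; rw [hB' q (hUD hq)]; simp [Matrix.vecHead, Matrix.vecTail]
    simp only [pu, pv]
    rw [eA.fderiv_eq, eB.fderiv_eq]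
    rw [hA p hp, hB' p hp]
    simp [Matrix.mul_apply, Fin.sum_univ_four, Matrix.vecHead, Matrix.vecTail]
    try ring
  · show pv (fun q => A q 0 2) p - pu (fun q => B' q 0 2) p + (A p * B' p - B' p * A p) 0 2 = 0
    have eA : (fun q => A q 0 2) =ᶠ[nhds p] fun q => (s q)⁻¹ * (lam q) := by
      filter_upwards [hUn] with q hq; rw [hA q (hUD hq)]; simp [Matrix.vecHead, Matrix.vecTail]; exact Or.inl rfl
    have eB : (fun q => B' q 0 2) =ᶠ[nhds p] fun q => (s q)⁻¹ * (-ν q) := by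
      filter_upwards [hUn] with q hq; rw [hB' q (hUD hq)]; simp [Matrix.vecHead, Matrix.vecTail]; exact Or.inl rfl
    simp only [pu, pv]
    rw [eA.fderiv_eq, eB.fderiv_eq, hprod lam (0,1) hlamd, hprod (fun r => -ν r) (1,0) hνd.neg]
    rw [hA p hp, hB' p hp]
    simp [Matrix.mul_apply, Fin.sum_univ_four, Matrix.vecHead, Matrix.vecTail]
    try rw [hsp]
    try rw [(hγval p hpU).1]
    try rw [(hγval p hpU).2]
    try rw [fd_neg']
    have hlv : fderiv ℝ lam p (0,1) = lam p * fderiv ℝ L p (0,1) - fderiv ℝ ν p (1,0) := by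
      linarith [hP1]
    rw [hlv]
    field_simp
    ring
  · show pv (fun q => A q 0 3) p - pu (fun q => B' q 0 3) p + (A p * B' p - B' p * A p) 0 3 = 0
    have eA : (fun q => A q 0 3) =ᶠ[nhds p] fun q => (s q)⁻¹ * (μ q) := by
      filter_upwards [hUn] with q hq; rw [hA q (hUD hq)]; simp [Matrix.vecHead, Matrix.vecTail]; exact Or.inl rfl
    have eB : (fun q => B' q 0 3) =ᶠ[nhds p] fun _ => (0:ℝ) := by
      filter_upwards [hUn] with q hq; rw [hB' q (hUD hq)]; simp [Matrix.vecHead, Matrix.vecTail]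
    simp only [pu, pv]
    rw [eA.fderiv_eq, eB.fderiv_eq, hprod μ (0,1) hμd]
    rw [hA p hp, hB' p hp]
    simp [Matrix.mul_apply, Fin.sum_univ_four, Matrix.vecHead, Matrix.vecTail]
    try rw [hsp]
    try rw [(hγval p hpU).1]
    try rw [(hγval p hpU).2]
    try rw [← hμv]
    field_simp
    ring
  · show pv (fun q => A q 1 0) p - pu (fun q => B' q 1 0) p + (A p * B' p - B' p * A p) 1 0 = 0
    have eA : (fun q => A q 1 0) =ᶠ[nhds p] fun _ => (0:ℝ) := by
      filter_upwards [hUn] with q hq; rw [hA q (hUD hq)]; simp [Matrix.vecHead, Matrix.vecTail]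
    have eB : (fun q => B' q 1 0) =ᶠ[nhds p] fun _ => (0:ℝ) := by
      filter_upwards [hUn] with q hq; rw [hB' q (hUD hq)]; simp [Matrix.vecHead, Matrix.vecTail]
    simp only [pu, pv]
    rw [eA.fderiv_eq, eB.fderiv_eq]
    rw [hA p hp, hB' p hp]
    simp [Matrix.mul_apply, Fin.sum_univ_four, Matrix.vecHead, Matrix.vecTail]
    try ring
  · show pv (fun q => A q 1 1) p - pu (fun q => B' q 1 1) p + (A p * B' p - B' p * A p) 1 1 = 0
    have eA : (fun q => A q 1 1) =ᶠ[nhds p] fun q => 2⁻¹ * fderiv ℝ L q (1,0) := by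
      filter_upwards [hUn] with q hq
      rw [hA q (hUD hq)]
      simp only [Matrix.smul_apply, Matrix.cons_val', Matrix.cons_val_zero, Matrix.cons_val_one,
        Matrix.head_cons, Matrix.empty_val', Matrix.cons_val_fin_one, Matrix.head_fin_const,
        smul_eq_mul, Matrix.of_apply]
      rw [(hγval q hq).1, show Real.sqrt |μ q| = s q from rfl]
      field_simp [hsne q hq]
      try ring
    have eB : (fun q => B' q 1 1) =ᶠ[nhds p] fun q => -2⁻¹ * fderiv ℝ L q (0,1) := by
      filter_upwards [hUn] with q hq
      rw [hB' q (hUD hq)]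
      simp only [Matrix.smul_apply, Matrix.cons_val', Matrix.cons_val_zero, Matrix.cons_val_one,
        Matrix.head_cons, Matrix.empty_val', Matrix.cons_val_fin_one, Matrix.head_fin_const,
        smul_eq_mul, Matrix.of_apply]
      rw [(hγval q hq).2, show Real.sqrt |μ q| = s q from rfl]
      field_simp [hsne q hq]
      try ring
    simp only [pu, pv]
    rw [eA.fderiv_eq, eB.fderiv_eq, fd_cmul (0,1) (2⁻¹) (hℓa (1,0)),
      fd_cmul (1,0) (-2⁻¹) (hℓa (0,1)), hsymm]
    rw [hA p hp, hB' p hp]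
    simp [Matrix.mul_apply, Fin.sum_univ_four, Matrix.vecHead, Matrix.vecTail]
    try rw [hsp]
    try rw [(hγval p hpU).1]
    try rw [(hγval p hpU).2]
    try rw [hX]
    field_simp
    ring
  · show pv (fun q => A q 1 2) p - pu (fun q => B' q 1 2) p + (A p * B' p - B' p * A p) 1 2 = 0
    have eA : (fun q => A q 1 2) =ᶠ[nhds p] fun q => (s q)⁻¹ * (-ν q) := by
      filter_upwards [hUn] with q hq; rw [hA q (hUD hq)]; simp [Matrix.vecHead, Matrix.vecTail]; exact Or.inl rfl
    have eB : (fun q => B' q 1 2) =ᶠ[nhds p] fun _ => (0:ℝ) := by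
      filter_upwards [hUn] with q hq; rw [hB' q (hUD hq)]; simp [Matrix.vecHead, Matrix.vecTail]
    simp only [pu, pv]
    rw [eA.fderiv_eq, eB.fderiv_eq, hprod (fun r => -ν r) (0,1) hνd.neg]
    rw [hA p hp, hB' p hp]
    simp [Matrix.mul_apply, Fin.sum_univ_four, Matrix.vecHead, Matrix.vecTail]
    try rw [hsp]
    try rw [(hγval p hpU).1]
    try rw [(hγval p hpU).2]
    try rw [fd_neg']
    try rw [hνv']
    field_simp
    ring
  · show pv (fun q => A q 1 3) p - pu (fun q => B' q 1 3) p + (A p * B' p - B' p * A p) 1 3 = 0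
    have eA : (fun q => A q 1 3) =ᶠ[nhds p] fun _ => (0:ℝ) := by
      filter_upwards [hUn] with q hq; rw [hA q (hUD hq)]; simp [Matrix.vecHead, Matrix.vecTail]
    have eB : (fun q => B' q 1 3) =ᶠ[nhds p] fun _ => (0:ℝ) := by
      filter_upwards [hUn] with q hq; rw [hB' q (hUD hq)]; simp [Matrix.vecHead, Matrix.vecTail]
    simp only [pu, pv]
    rw [eA.fderiv_eq, eB.fderiv_eq]
    rw [hA p hp, hB' p hp]
    simp [Matrix.mul_apply, Fin.sum_univ_four, Matrix.vecHead, Matrix.vecTail]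
    try ring
  · show pv (fun q => A q 2 0) p - pu (fun q => B' q 2 0) p + (A p * B' p - B' p * A p) 2 0 = 0
    have eA : (fun q => A q 2 0) =ᶠ[nhds p] fun q => (s q)⁻¹ * (-ν q) := by
      filter_upwards [hUn] with q hq; rw [hA q (hUD hq)]; simp [Matrix.vecHead, Matrix.vecTail]; exact Or.inl rfl
    have eB : (fun q => B' q 2 0) =ᶠ[nhds p] fun _ => (0:ℝ) := by
      filter_upwards [hUn] with q hq; rw [hB' q (hUD hq)]; simp [Matrix.vecHead, Matrix.vecTail]
    simp only [pu, pv]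
    rw [eA.fderiv_eq, eB.fderiv_eq, hprod (fun r => -ν r) (0,1) hνd.neg]
    rw [hA p hp, hB' p hp]
    simp [Matrix.mul_apply, Fin.sum_univ_four, Matrix.vecHead, Matrix.vecTail]
    try rw [hsp]
    try rw [(hγval p hpU).1]
    try rw [(hγval p hpU).2]
    try rw [fd_neg']
    try rw [hνv']
    field_simp
    ring
  · show pv (fun q => A q 2 1) p - pu (fun q => B' q 2 1) p + (A p * B' p - B' p * A p) 2 1 = 0
    have eA : (fun q => A q 2 1) =ᶠ[nhds p] fun q => (s q)⁻¹ * (lam q) := by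
      filter_upwards [hUn] with q hq; rw [hA q (hUD hq)]; simp [Matrix.vecHead, Matrix.vecTail]; exact Or.inl rfl
    have eB : (fun q => B' q 2 1) =ᶠ[nhds p] fun q => (s q)⁻¹ * (-ν q) := by
      filter_upwards [hUn] with q hq; rw [hB' q (hUD hq)]; simp [Matrix.vecHead, Matrix.vecTail]; exact Or.inl rfl
    simp only [pu, pv]
    rw [eA.fderiv_eq, eB.fderiv_eq, hprod lam (0,1) hlamd, hprod (fun r => -ν r) (1,0) hνd.neg]
    rw [hA p hp, hB' p hp]
    simp [Matrix.mul_apply, Fin.sum_univ_four, Matrix.vecHead, Matrix.vecTail]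
    try rw [hsp]
    try rw [(hγval p hpU).1]
    try rw [(hγval p hpU).2]
    try rw [fd_neg']
    have hlv : fderiv ℝ lam p (0,1) = lam p * fderiv ℝ L p (0,1) - fderiv ℝ ν p (1,0) := by
      linarith [hP1]
    rw [hlv]
    field_simp
    ring
  · show pv (fun q => A q 2 2) p - pu (fun q => B' q 2 2) p + (A p * B' p - B' p * A p) 2 2 = 0
    have eA : (fun q => A q 2 2) =ᶠ[nhds p] fun _ => (0:ℝ) := by
      filter_upwards [hUn] with q hq; rw [hA q (hUD hq)]; simp [Matrix.vecHead, Matrix.vecTail]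
    have eB : (fun q => B' q 2 2) =ᶠ[nhds p] fun _ => (0:ℝ) := by
      filter_upwards [hUn] with q hq; rw [hB' q (hUD hq)]; simp [Matrix.vecHead, Matrix.vecTail]
    simp only [pu, pv]
    rw [eA.fderiv_eq, eB.fderiv_eq]
    rw [hA p hp, hB' p hp]
    simp [Matrix.mul_apply, Fin.sum_univ_four, Matrix.vecHead, Matrix.vecTail]
    try ring
  · show pv (fun q => A q 2 3) p - pu (fun q => B' q 2 3) p + (A p * B' p - B' p * A p) 2 3 = 0
    have eA : (fun q => A q 2 3) =ᶠ[nhds p] fun _ => (0:ℝ) := by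
      filter_upwards [hUn] with q hq; rw [hA q (hUD hq)]; simp [Matrix.vecHead, Matrix.vecTail]
    have eB : (fun q => B' q 2 3) =ᶠ[nhds p] fun _ => (0:ℝ) := by
      filter_upwards [hUn] with q hq; rw [hB' q (hUD hq)]; simp [Matrix.vecHead, Matrix.vecTail]
    simp only [pu, pv]
    rw [eA.fderiv_eq, eB.fderiv_eq]
    rw [hA p hp, hB' p hp]
    simp [Matrix.mul_apply, Fin.sum_univ_four, Matrix.vecHead, Matrix.vecTail]
    try ring
  · show pv (fun q => A q 3 0) p - pu (fun q => B' q 3 0) p + (A p * B' p - B' p * A p) 3 0 = 0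
    have eA : (fun q => A q 3 0) =ᶠ[nhds p] fun _ => (0:ℝ) := by
      filter_upwards [hUn] with q hq; rw [hA q (hUD hq)]; simp [Matrix.vecHead, Matrix.vecTail]
    have eB : (fun q => B' q 3 0) =ᶠ[nhds p] fun _ => (0:ℝ) := by
      filter_upwards [hUn] with q hq; rw [hB' q (hUD hq)]; simp [Matrix.vecHead, Matrix.vecTail]
    simp only [pu, pv]
    rw [eA.fderiv_eq, eB.fderiv_eq]
    rw [hA p hp, hB' p hp]
    simp [Matrix.mul_apply, Fin.sum_univ_four, Matrix.vecHead, Matrix.vecTail]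
    try ring
  · show pv (fun q => A q 3 1) p - pu (fun q => B' q 3 1) p + (A p * B' p - B' p * A p) 3 1 = 0
    have eA : (fun q => A q 3 1) =ᶠ[nhds p] fun q => (s q)⁻¹ * (μ q) := by
      filter_upwards [hUn] with q hq; rw [hA q (hUD hq)]; simp [Matrix.vecHead, Matrix.vecTail]; exact Or.inl rfl
    have eB : (fun q => B' q 3 1) =ᶠ[nhds p] fun _ => (0:ℝ) := by
      filter_upwards [hUn] with q hq; rw [hB' q (hUD hq)]; simp [Matrix.vecHead, Matrix.vecTail]
    simp only [pu, pv]
    rw [eA.fderiv_eq, eB.fderiv_eq, hprod μ (0,1) hμd]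
    rw [hA p hp, hB' p hp]
    simp [Matrix.mul_apply, Fin.sum_univ_four, Matrix.vecHead, Matrix.vecTail]
    try rw [hsp]
    try rw [(hγval p hpU).1]
    try rw [(hγval p hpU).2]
    try rw [← hμv]
    field_simp
    ring
  · show pv (fun q => A q 3 2) p - pu (fun q => B' q 3 2) p + (A p * B' p - B' p * A p) 3 2 = 0
    have eA : (fun q => A q 3 2) =ᶠ[nhds p] fun _ => (0:ℝ) := by
      filter_upwards [hUn] with q hq; rw [hA q (hUD hq)]; simp [Matrix.vecHead, Matrix.vecTail]
    have eB : (fun q => B' q 3 2) =ᶠ[nhds p] fun _ => (0:ℝ) := by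
      filter_upwards [hUn] with q hq; rw [hB' q (hUD hq)]; simp [Matrix.vecHead, Matrix.vecTail]
    simp only [pu, pv]
    rw [eA.fderiv_eq, eB.fderiv_eq]
    rw [hA p hp, hB' p hp]
    simp [Matrix.mul_apply, Fin.sum_univ_four, Matrix.vecHead, Matrix.vecTail]
    try ring
  · show pv (fun q => A q 3 3) p - pu (fun q => B' q 3 3) p + (A p * B' p - B' p * A p) 3 3 = 0
    have eA : (fun q => A q 3 3) =ᶠ[nhds p] fun _ => (0:ℝ) := by
      filter_upwards [hUn] with q hq; rw [hA q (hUD hq)]; simp [Matrix.vecHead, Matrix.vecTail]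
    have eB : (fun q => B' q 3 3) =ᶠ[nhds p] fun _ => (0:ℝ) := by
      filter_upwards [hUn] with q hq; rw [hB' q (hUD hq)]; simp [Matrix.vecHead, Matrix.vecTail]
    simp only [pu, pv]
    rw [eA.fderiv_eq, eB.fderiv_eq]
    rw [hA p hp, hB' p hp]
    simp [Matrix.mul_apply, Fin.sum_univ_four, Matrix.vecHead, Matrix.vecTail]
    try ring
end
end

section
/- (Preservation of the pseudo-orthonormal frame.) Let D ⊆ ℝ² be open and connected, let A, B : D → Mat₄ₓ₄(ℝ) be continuous maps satisfying A(p)·G₀ + G₀·A(p)ᵀ = 0 and B(p)·G₀ + G₀·B(p)ᵀ = 0 for every p ∈ D, and let 𝓕 : D → Mat₄ₓ₄(ℝ) be a C¹ map satisfying ∂_u 𝓕 = A·𝓕 and ∂_v 𝓕 = B·𝓕 on D. If 𝓕(p₀)·η·𝓕(p₀)ᵀ = G₀ at some point p₀ ∈ D, then 𝓕(p)·η·𝓕(p)ᵀ = G₀ for all p ∈ D; i.e. if the rows of 𝓕 form a pseudo-orthonormal frame of the Minkowski space at one point, they form a pseudo-orthonormal frame at every point of D. -/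
noncomputable section

/-! The defect `Φ = 𝓕 η 𝓕ᵀ - G₀` satisfies `∂_u Φ = A Φ + Φ Aᵀ` and `∂_v Φ = B Φ + Φ Bᵀ`, because
`A G₀ + G₀ Aᵀ = 0 = B G₀ + G₀ Bᵀ`. Along an axis-parallel segment this is a linear ODE, so by
Grönwall's inequality `Φ` vanishes on the whole segment once it vanishes at one end. Any two nearby
points are joined by an L-shaped path of two such segments, so `{Φ = 0}` is open and closed in `D`,
hence all of the connected set `D`. -/

open Matrix Set Filter Topology

theorem HasDerivAt.matrix_transpose {𝕜 E m n : Type*} [NontriviallyNormedField 𝕜]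
    [NormedAddCommGroup E] [NormedSpace 𝕜 E] [Fintype m] [Fintype n]
    {X : 𝕜 → Matrix m n E} {X' : Matrix m n E} {t : 𝕜} (hX : HasDerivAt X X' t) :
    HasDerivAt (fun s => (X s)ᵀ) X'ᵀ t :=
  hasDerivAt_pi.2 fun i => hasDerivAt_pi.2 fun j => hasDerivAt_pi.1 (hasDerivAt_pi.1 hX j) i

theorem fderiv_matrix_apply {𝕜 E V m n : Type*} [NontriviallyNormedField 𝕜]
    [NormedAddCommGroup E] [NormedSpace 𝕜 E] [NormedAddCommGroup V] [NormedSpace 𝕜 V]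
    [Fintype m] [Fintype n] {F : E → Matrix m n V} {q : E} (hF : DifferentiableAt 𝕜 F q)
    (w : E) (i : m) (j : n) : fderiv 𝕜 F q w i j = fderiv 𝕜 (fun x => F x i j) q w := by
  rw [fderiv_apply (differentiableAt_pi.1 hF i) j, fderiv_apply hF i]
  rfl

theorem eq_zero_of_hasDerivAt_mul_add_mul {𝔸 : Type*} [NormedRing 𝔸] [NormedSpace ℝ 𝔸]
    {g N P : ℝ → 𝔸} {a b : ℝ} (hN : ContinuousOn N (Icc a b)) (hP : ContinuousOn P (Icc a b))
    (hg : ∀ t ∈ Icc a b, HasDerivAt g (N t * g t + g t * P t) t) (ha : g a = 0) :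
    ∀ t ∈ Icc a b, g t = 0 := by
  obtain ⟨K, hK⟩ := isCompact_Icc.bddAbove_image (hN.norm.add hP.norm)
  refine eq_zero_of_abs_deriv_le_mul_abs_self_of_eq_zero_right (K := K)
    (fun t ht => (hg t ht).continuousAt.continuousWithinAt)
    (fun t ht => (hg t (Ico_subset_Icc_self ht)).hasDerivWithinAt) ha fun t ht => ?_
  calc ‖N t * g t + g t * P t‖ ≤ ‖N t‖ * ‖g t‖ + ‖g t‖ * ‖P t‖ :=
        (norm_add_le _ _).trans (add_le_add (norm_mul_le _ _) (norm_mul_le _ _))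
    _ = (‖N t‖ + ‖P t‖) * ‖g t‖ := by ring
    _ ≤ K * ‖g t‖ :=
        mul_le_mul_of_nonneg_right (hK (mem_image_of_mem _ (Ico_subset_Icc_self ht)))
          (norm_nonneg _)

section FrobeniusNorm

-- Any submultiplicative norm will do: `HasDerivAt` only sees the (product) topology on matrices.
attribute [local instance] Matrix.frobeniusNormedRing Matrix.frobeniusNormedAlgebra

variable {n : Type*} [Fintype n] [DecidableEq n]

theorem hasDerivAt_mul_mul_transpose_sub {X : ℝ → Matrix n n ℝ} {N η G : Matrix n n ℝ} {t : ℝ}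
    (hX : HasDerivAt X (N * X t) t) (hNG : N * G + G * Nᵀ = 0) :
    HasDerivAt (fun s => X s * η * (X s)ᵀ - G)
      (N * (X t * η * (X t)ᵀ - G) + (X t * η * (X t)ᵀ - G) * Nᵀ) t := by
  refine (((hX.mul_const η).mul hX.matrix_transpose).sub_const G).congr_deriv ?_
  calc N * X t * η * (X t)ᵀ + X t * η * (N * X t)ᵀ
      = N * (X t * η * (X t)ᵀ - G) + (X t * η * (X t)ᵀ - G) * Nᵀ + (N * G + G * Nᵀ) := by
        rw [transpose_mul]; noncomm_ring
    _ = _ := by rw [hNG, add_zero]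

theorem mul_mul_transpose_eq_of_segment {E : Type*} [NormedAddCommGroup E] [NormedSpace ℝ E]
    {D : Set E} {F M : E → Matrix n n ℝ} {η G : Matrix n n ℝ} {p w : E} {c : ℝ}
    (hF : ∀ q ∈ D, DifferentiableAt ℝ F q) (hFw : ∀ q ∈ D, fderiv ℝ F q w = M q * F q)
    (hM : ContinuousOn M D) (hMG : ∀ q ∈ D, M q * G + G * (M q)ᵀ = 0)
    (hseg : segment ℝ p (p + c • w) ⊆ D) (hp : F p * η * (F p)ᵀ = G) :
    F (p + c • w) * η * (F (p + c • w))ᵀ = G := by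
  set γ : ℝ → E := fun t => p + t • c • w
  have hγD : MapsTo γ (Icc 0 1) D := fun t ht =>
    hseg (by rw [segment_eq_image']; exact ⟨t, ht, by simp [γ]⟩)
  have hγ : ∀ t, HasDerivAt γ (c • w) t := fun t => by
    simpa [γ] using ((hasDerivAt_id t).smul_const (c • w)).const_add p
  have hFγ : ∀ t ∈ Icc (0 : ℝ) 1, HasDerivAt (F ∘ γ) ((c • M (γ t)) * F (γ t)) t := by
    intro t ht
    rw [Matrix.smul_mul, ← hFw _ (hγD ht), ← map_smul]
    exact (hF _ (hγD ht)).hasFDerivAt.comp_hasDerivAt t (hγ t)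
  have hMγ : ContinuousOn (fun t => c • M (γ t)) (Icc 0 1) :=
    (hM.comp (by fun_prop) hγD).const_smul c
  have hdefect := eq_zero_of_hasDerivAt_mul_add_mul hMγ
    ((continuous_id.matrix_transpose).comp_continuousOn hMγ)
    (fun t ht => hasDerivAt_mul_mul_transpose_sub (η := η) (G := G) (hFγ t ht) (by
      rw [transpose_smul, Matrix.smul_mul, Matrix.mul_smul, ← smul_add, hMG _ (hγD ht),
        smul_zero]))
    (by simpa [γ, sub_eq_zero] using hp) 1 ⟨zero_le_one, le_rfl⟩
  simpa [γ, sub_eq_zero] using hdefect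

end FrobeniusNorm

theorem eventually_iff_of_axis_segments {D : Set (ℝ × ℝ)} (hD : IsOpen D) {P : ℝ × ℝ → Prop}
    (horiz : ∀ p (c : ℝ), segment ℝ p (p + c • ((1, 0) : ℝ × ℝ)) ⊆ D →
      P p → P (p + c • ((1, 0) : ℝ × ℝ)))
    (vert : ∀ p (c : ℝ), segment ℝ p (p + c • ((0, 1) : ℝ × ℝ)) ⊆ D →
      P p → P (p + c • ((0, 1) : ℝ × ℝ)))
    {q : ℝ × ℝ} (hq : q ∈ D) : ∀ᶠ z in 𝓝 q, (P q ↔ P z) := by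
  obtain ⟨r, hr, hball⟩ := Metric.isOpen_iff.1 hD q hq
  filter_upwards [Metric.ball_mem_nhds q hr] with z hz
  have seg : ∀ x ∈ Metric.ball q r, ∀ y ∈ Metric.ball q r, segment ℝ x y ⊆ D :=
    fun x hx y hy => ((convex_ball q r).segment_subset hx hy).trans hball
  -- `q` and `z` are joined inside the ball by an L-shaped path with corner `m`
  set m : ℝ × ℝ := (z.1, q.2)
  have hm : m ∈ Metric.ball q r := by
    rw [Metric.mem_ball, Prod.dist_eq] at hz ⊢
    simpa [m] using (le_max_left _ _).trans_lt hz
  have hqm : q + (z.1 - q.1) • ((1, 0) : ℝ × ℝ) = m := by ext <;> simp [m]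
  have hmz : m + (z.2 - q.2) • ((0, 1) : ℝ × ℝ) = z := by ext <;> simp [m]
  have hzm : z + (q.2 - z.2) • ((0, 1) : ℝ × ℝ) = m := by ext <;> simp [m]
  have hmq : m + (q.1 - z.1) • ((1, 0) : ℝ × ℝ) = q := by ext <;> simp [m]
  have hq' : q ∈ Metric.ball q r := Metric.mem_ball_self hr
  constructor
  · intro h
    have h := horiz q _ (hqm ▸ seg _ hq' _ hm) h
    rw [hqm] at h
    have h := vert m _ (hmz ▸ seg _ hm _ hz) h
    rwa [hmz] at h
  · intro h
    have h := vert z _ (hzm ▸ seg _ hz _ hm) h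
    rw [hzm] at h
    have h := horiz m _ (hmq ▸ seg _ hm _ hq') h
    rwa [hmq] at h

theorem frame_remains_pseudo_orthonormal_general
    (D : Set (ℝ × ℝ)) (hD : IsOpen D) (hDconn : IsConnected D)
    (η G₀ : Matrix (Fin 4) (Fin 4) ℝ)
    (A B : ℝ × ℝ → Matrix (Fin 4) (Fin 4) ℝ)
    (hAcont : ∀ i j : Fin 4, ContinuousOn (fun q => A q i j) D)
    (hBcont : ∀ i j : Fin 4, ContinuousOn (fun q => B q i j) D)
    (hAskew : ∀ p ∈ D, A p * G₀ + G₀ * (A p).transpose = 0)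
    (hBskew : ∀ p ∈ D, B p * G₀ + G₀ * (B p).transpose = 0)
    (F : ℝ × ℝ → Matrix (Fin 4) (Fin 4) ℝ)
    (hFC1 : ∀ i j : Fin 4, ContDiffOn ℝ 1 (fun q => F q i j) D)
    (hFu : ∀ p ∈ D, ∀ i j : Fin 4, pu (fun q => F q i j) p = (A p * F p) i j)
    (hFv : ∀ p ∈ D, ∀ i j : Fin 4, pv (fun q => F q i j) p = (B p * F p) i j)
    (p₀ : ℝ × ℝ) (hp₀ : p₀ ∈ D)
    (hinit : F p₀ * η * (F p₀).transpose = G₀) :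
    ∀ p ∈ D, F p * η * (F p).transpose = G₀ := by
  have hF : ∀ q ∈ D, DifferentiableAt ℝ F q := fun q hq =>
    differentiableAt_pi.2 fun i => differentiableAt_pi.2 fun j =>
      ((hFC1 i j).differentiableOn one_ne_zero).differentiableAt (hD.mem_nhds hq)
  have hFu' : ∀ q ∈ D, fderiv ℝ F q (1, 0) = A q * F q := fun q hq => by
    ext i j
    rw [fderiv_matrix_apply (hF q hq), ← hFu q hq, pu]
  have hFv' : ∀ q ∈ D, fderiv ℝ F q (0, 1) = B q * F q := fun q hq => by
    ext i j
    rw [fderiv_matrix_apply (hF q hq), ← hFv q hq, pv]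
  have hlocal : ∀ q ∈ D, ∀ᶠ z in 𝓝 q,
      (F q * η * (F q)ᵀ = G₀ ↔ F z * η * (F z)ᵀ = G₀) := fun q hq =>
    eventually_iff_of_axis_segments (P := fun z => F z * η * (F z)ᵀ = G₀) hD
      (fun _ _ hseg => mul_mul_transpose_eq_of_segment hF hFu'
        (continuousOn_pi.2 fun i => continuousOn_pi.2 (hAcont i)) hAskew hseg)
      (fun _ _ hseg => mul_mul_transpose_eq_of_segment hF hFv'
        (continuousOn_pi.2 fun i => continuousOn_pi.2 (hBcont i)) hBskew hseg) hq
  intro p hp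
  exact (hDconn.isPreconnected.induction₂
    (fun x y => F x * η * (F x)ᵀ = G₀ ↔ F y * η * (F y)ᵀ = G₀)
    (fun q hq => nhdsWithin_le_nhds (hlocal q hq))
    (fun _ _ _ _ _ _ => Iff.trans) (fun _ _ _ _ => Iff.symm) hp₀ hp).1 hinit

/-- Preservation of the pseudo-orthonormal frame.  If `A·G₀ + G₀·Aᵀ = 0`
and `B·G₀ + G₀·Bᵀ = 0` on `D` and the C¹ map `𝓕` satisfies `∂_u 𝓕 = A·𝓕`,
`∂_v 𝓕 = B·𝓕` on the open connected set `D`, and the rows of `𝓕` form a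
pseudo-orthonormal frame at one point (`𝓕·η·𝓕ᵀ = G₀` at `p₀`), then they form a
pseudo-orthonormal frame at every point of `D`. -/
theorem frame_remains_pseudo_orthonormal
    (D : Set (ℝ × ℝ)) (hD : IsOpen D) (hDconn : IsConnected D)
    (η G₀ : Matrix (Fin 4) (Fin 4) ℝ)
    (hη : η = Matrix.diagonal ![1, 1, 1, -1])
    (hG₀ : G₀ = !![0, -1, 0, 0;
                   -1, 0, 0, 0;
                   0, 0, 1, 0;
                   0, 0, 0, 1])
    (A B : ℝ × ℝ → Matrix (Fin 4) (Fin 4) ℝ)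
    (hAcont : ∀ i j : Fin 4, ContinuousOn (fun q => A q i j) D)
    (hBcont : ∀ i j : Fin 4, ContinuousOn (fun q => B q i j) D)
    (hAskew : ∀ p ∈ D, A p * G₀ + G₀ * (A p).transpose = 0)
    (hBskew : ∀ p ∈ D, B p * G₀ + G₀ * (B p).transpose = 0)
    (F : ℝ × ℝ → Matrix (Fin 4) (Fin 4) ℝ)
    (hFC1 : ∀ i j : Fin 4, ContDiffOn ℝ 1 (fun q => F q i j) D)
    (hFu : ∀ p ∈ D, ∀ i j : Fin 4, pu (fun q => F q i j) p = (A p * F p) i j)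
    (hFv : ∀ p ∈ D, ∀ i j : Fin 4, pv (fun q => F q i j) p = (B p * F p) i j)
    (p₀ : ℝ × ℝ) (hp₀ : p₀ ∈ D)
    (hinit : F p₀ * η * (F p₀).transpose = G₀) :
    ∀ p ∈ D, F p * η * (F p).transpose = G₀ :=
  frame_remains_pseudo_orthonormal_general D hD hDconn η G₀ A B hAcont hBcont hAskew hBskew F hFC1
    hFu hFv p₀ hp₀ hinit
end
end

section
/- (Uniqueness of the moving frame.) Let D ⊆ ℝ² be open and connected and let A, B : D → Mat₄ₓ₄(ℝ) be continuous. If 𝓕₁, 𝓕₂ : D → Mat₄ₓ₄(ℝ) are C¹ maps both satisfying ∂_u 𝓕ᵢ = A·𝓕ᵢ and ∂_v 𝓕ᵢ = B·𝓕ᵢ on D, and 𝓕₁(p₀) = 𝓕₂(p₀) at some point p₀ ∈ D, then 𝓕₁ = 𝓕₂ on all of D. -/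
noncomputable section

/-!
Restricted to a horizontal (vertical) segment in `D`, both frames solve the linear ODE
`f' = A f` (`f' = B f`) with continuous, hence bounded, coefficients, so by Gronwall-type
uniqueness agreement propagates from one corner of an axis-parallel rectangle inside `D` to the
opposite corner. Every point of the open set `D` reaches a whole neighbourhood by such
rectangles, so the relation "`F₁ x = F₂ x` implies `F₁ y = F₂ y`" holds locally in both
directions, and therefore on all of the connected set `D`.
-/

open Set Metric Filter Topology

-- With the entrywise sup norm, derivatives of matrix-valued maps are those of `m → n → ℝ`.
attribute [local instance] Matrix.normedAddCommGroup Matrix.normedSpace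

theorem ODE_solution_unique_of_mem_uIcc {E : Type*} [NormedAddCommGroup E] [NormedSpace ℝ E]
    {v : ℝ → E → E} {K : NNReal} {f g : ℝ → E} {a c : ℝ}
    (hv : ∀ t ∈ uIcc a c, LipschitzWith K (v t))
    (hf : ∀ t ∈ uIcc a c, HasDerivAt f (v t (f t)) t)
    (hg : ∀ t ∈ uIcc a c, HasDerivAt g (v t (g t)) t)
    (ha : f a = g a) : f c = g c := by
  rcases le_total a c with hac | hca
  · rw [uIcc_of_le hac] at hv hf hg
    exact ODE_solution_unique_of_mem_Icc_right (s := fun _ => univ)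
      (fun t ht => (hv t (Ico_subset_Icc_self ht)).lipschitzOnWith)
      (HasDerivAt.continuousOn hf)
      (fun t ht => (hf t (Ico_subset_Icc_self ht)).hasDerivWithinAt) (fun _ _ => trivial)
      (HasDerivAt.continuousOn hg)
      (fun t ht => (hg t (Ico_subset_Icc_self ht)).hasDerivWithinAt) (fun _ _ => trivial)
      ha (right_mem_Icc.2 hac)
  · rw [uIcc_of_ge hca] at hv hf hg
    exact ODE_solution_unique_of_mem_Icc_left (s := fun _ => univ)
      (fun t ht => (hv t (Ioc_subset_Icc_self ht)).lipschitzOnWith)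
      (HasDerivAt.continuousOn hf)
      (fun t ht => (hf t (Ioc_subset_Icc_self ht)).hasDerivWithinAt) (fun _ _ => trivial)
      (HasDerivAt.continuousOn hg)
      (fun t ht => (hg t (Ioc_subset_Icc_self ht)).hasDerivWithinAt) (fun _ _ => trivial)
      ha (left_mem_Icc.2 hca)

namespace Matrix

theorem hasDerivAt_iff_forall_entry {m n : Type*} [Fintype m] [Fintype n]
    {f : ℝ → Matrix m n ℝ} {f' : Matrix m n ℝ} {t : ℝ} :
    HasDerivAt f f' t ↔ ∀ i j, HasDerivAt (fun s => f s i j) (f' i j) t :=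
  hasDerivAt_pi.trans (forall_congr' fun _ => hasDerivAt_pi)

variable {l m n : Type*} [Fintype l] [Fintype m] [Fintype n]

theorem norm_mul_le_card_mul_norm_mul_norm {α : Type*} [NormedRing α]
    (P : Matrix l m α) (Q : Matrix m n α) : ‖P * Q‖ ≤ Fintype.card m * ‖P‖ * ‖Q‖ := by
  refine (norm_le_iff (by positivity)).2 fun i j => ?_
  calc ‖(P * Q) i j‖ ≤ ∑ k, ‖P i k * Q k j‖ := norm_sum_le _ _
    _ ≤ ∑ _k : m, ‖P‖ * ‖Q‖ := Finset.sum_le_sum fun k _ =>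
        (norm_mul_le _ _).trans (mul_le_mul (norm_entry_le_entrywise_sup_norm P)
          (norm_entry_le_entrywise_sup_norm Q) (norm_nonneg _) (norm_nonneg _))
    _ = Fintype.card m * ‖P‖ * ‖Q‖ := by simp [mul_assoc]

theorem lipschitzWith_mul_left (P : Matrix l m ℝ) :
    LipschitzWith (Fintype.card m * ‖P‖₊) (fun X : Matrix m n ℝ => P * X) := by
  refine LipschitzWith.of_dist_le_mul fun X Y => ?_
  rw [dist_eq_norm, dist_eq_norm, ← Matrix.mul_sub]
  push_cast
  exact norm_mul_le_card_mul_norm_mul_norm P (X - Y)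

theorem eq_of_hasDerivAt_mul_left {M : ℝ → Matrix m m ℝ} {f g : ℝ → Matrix m n ℝ} {a c : ℝ}
    (hM : ContinuousOn M (uIcc a c))
    (hf : ∀ t ∈ uIcc a c, HasDerivAt f (M t * f t) t)
    (hg : ∀ t ∈ uIcc a c, HasDerivAt g (M t * g t) t)
    (ha : f a = g a) : f c = g c := by
  obtain ⟨C, hC⟩ := isCompact_uIcc.exists_bound_of_continuousOn hM
  have hC₀ : 0 ≤ C := (norm_nonneg _).trans (hC a left_mem_uIcc)
  refine ODE_solution_unique_of_mem_uIcc (v := fun t X => M t * X)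
    (K := Fintype.card m * C.toNNReal) (fun t ht => ?_) hf hg ha
  refine (lipschitzWith_mul_left (M t)).weaken ?_
  gcongr
  exact (Real.le_toNNReal_iff_coe_le hC₀).2 (hC t ht)

end Matrix

section Slices

variable {E : Type*} [NormedAddCommGroup E] [NormedSpace ℝ E] {g : ℝ × ℝ → E} {p : ℝ × ℝ}

theorem DifferentiableAt.hasDerivAt_pu (hg : DifferentiableAt ℝ g p) :
    HasDerivAt (fun t => g (t, p.2)) (pu g p) p.1 :=
  hg.hasFDerivAt.comp_hasDerivAt_of_eq p.1
    ((hasDerivAt_id p.1).prodMk (hasDerivAt_const p.1 p.2)) rfl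

theorem DifferentiableAt.hasDerivAt_pv (hg : DifferentiableAt ℝ g p) :
    HasDerivAt (fun s => g (p.1, s)) (pv g p) p.2 :=
  hg.hasFDerivAt.comp_hasDerivAt_of_eq p.2
    ((hasDerivAt_const p.2 p.1).prodMk (hasDerivAt_id p.2)) rfl

end Slices

theorem uIcc_prod_uIcc_subset_ball {x a b : ℝ × ℝ} {r : ℝ} (ha : a ∈ ball x r)
    (hb : b ∈ ball x r) : uIcc a.1 b.1 ×ˢ uIcc a.2 b.2 ⊆ ball x r := by
  rw [← ball_prod_same] at ha hb ⊢
  exact prod_mono ((convex_ball _ _).ordConnected.uIcc_subset ha.1 hb.1)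
    ((convex_ball _ _).ordConnected.uIcc_subset ha.2 hb.2)

theorem eventually_uIcc_prod_uIcc_subset {D : Set (ℝ × ℝ)} (hD : IsOpen D) {x : ℝ × ℝ}
    (hx : x ∈ D) : ∀ᶠ y in 𝓝 x, uIcc x.1 y.1 ×ˢ uIcc x.2 y.2 ⊆ D := by
  obtain ⟨ε, hε, hsub⟩ := isOpen_iff.1 hD x hx
  filter_upwards [ball_mem_nhds x hε] with y hy
  exact (uIcc_prod_uIcc_subset_ball (mem_ball_self hε) hy).trans hsub

section FrameSystem

variable {m n : Type*} [Fintype m] [Fintype n] {D : Set (ℝ × ℝ)}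
  {A B : ℝ × ℝ → Matrix m m ℝ} {F F₁ F₂ : ℝ × ℝ → Matrix m n ℝ}

def SolvesAlongSlices (D : Set (ℝ × ℝ)) (A B : ℝ × ℝ → Matrix m m ℝ)
    (F : ℝ × ℝ → Matrix m n ℝ) : Prop :=
  ∀ p ∈ D, HasDerivAt (fun t => F (t, p.2)) (A p * F p) p.1 ∧
    HasDerivAt (fun s => F (p.1, s)) (B p * F p) p.2

theorem solvesAlongSlices_of_entries (hD : IsOpen D)
    (hF : ∀ i j, ContDiffOn ℝ 1 (fun q => F q i j) D)
    (hFu : ∀ p ∈ D, ∀ i j, pu (fun q => F q i j) p = (A p * F p) i j)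
    (hFv : ∀ p ∈ D, ∀ i j, pv (fun q => F q i j) p = (B p * F p) i j) :
    SolvesAlongSlices D A B F := by
  intro p hp
  have hdiff : ∀ i j, DifferentiableAt ℝ (fun q => F q i j) p := fun i j =>
    ((hF i j).differentiableOn one_ne_zero).differentiableAt (hD.mem_nhds hp)
  exact ⟨Matrix.hasDerivAt_iff_forall_entry.2 fun i j => hFu p hp i j ▸ (hdiff i j).hasDerivAt_pu,
    Matrix.hasDerivAt_iff_forall_entry.2 fun i j => hFv p hp i j ▸ (hdiff i j).hasDerivAt_pv⟩

theorem SolvesAlongSlices.eq_of_uIcc_prod_uIcc_subset (hF₁ : SolvesAlongSlices D A B F₁)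
    (hF₂ : SolvesAlongSlices D A B F₂) (hA : ContinuousOn A D) (hB : ContinuousOn B D)
    {x y : ℝ × ℝ} (hxy : uIcc x.1 y.1 ×ˢ uIcc x.2 y.2 ⊆ D) (hx : F₁ x = F₂ x) :
    F₁ y = F₂ y := by
  have horizontal : ∀ t ∈ uIcc x.1 y.1, (t, x.2) ∈ D := fun t ht => hxy ⟨ht, left_mem_uIcc⟩
  have vertical : ∀ s ∈ uIcc x.2 y.2, (y.1, s) ∈ D := fun s hs => hxy ⟨right_mem_uIcc, hs⟩
  have corner : F₁ (y.1, x.2) = F₂ (y.1, x.2) :=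
    Matrix.eq_of_hasDerivAt_mul_left (f := fun t => F₁ (t, x.2)) (g := fun t => F₂ (t, x.2))
      (hA.comp (by fun_prop) horizontal)
      (fun t ht => (hF₁ _ (horizontal t ht)).1) (fun t ht => (hF₂ _ (horizontal t ht)).1) hx
  exact Matrix.eq_of_hasDerivAt_mul_left (f := fun s => F₁ (y.1, s)) (g := fun s => F₂ (y.1, s))
    (hB.comp (by fun_prop) vertical)
    (fun s hs => (hF₁ _ (vertical s hs)).2) (fun s hs => (hF₂ _ (vertical s hs)).2) corner

end FrameSystem

/-- Uniqueness of the moving frame.  Two C¹ solutions of the linear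
system `∂_u 𝓕 = A·𝓕`, `∂_v 𝓕 = B·𝓕` on an open connected set `D` that agree at one
point agree everywhere on `D`. -/
theorem moving_frame_unique
    (D : Set (ℝ × ℝ)) (hD : IsOpen D) (hDconn : IsConnected D)
    (A B : ℝ × ℝ → Matrix (Fin 4) (Fin 4) ℝ)
    (hAcont : ∀ i j : Fin 4, ContinuousOn (fun q => A q i j) D)
    (hBcont : ∀ i j : Fin 4, ContinuousOn (fun q => B q i j) D)
    (F₁ F₂ : ℝ × ℝ → Matrix (Fin 4) (Fin 4) ℝ)
    (hF₁C1 : ∀ i j : Fin 4, ContDiffOn ℝ 1 (fun q => F₁ q i j) D)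
    (hF₂C1 : ∀ i j : Fin 4, ContDiffOn ℝ 1 (fun q => F₂ q i j) D)
    (hF₁u : ∀ p ∈ D, ∀ i j : Fin 4, pu (fun q => F₁ q i j) p = (A p * F₁ p) i j)
    (hF₁v : ∀ p ∈ D, ∀ i j : Fin 4, pv (fun q => F₁ q i j) p = (B p * F₁ p) i j)
    (hF₂u : ∀ p ∈ D, ∀ i j : Fin 4, pu (fun q => F₂ q i j) p = (A p * F₂ p) i j)
    (hF₂v : ∀ p ∈ D, ∀ i j : Fin 4, pv (fun q => F₂ q i j) p = (B p * F₂ p) i j)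
    (p₀ : ℝ × ℝ) (hp₀ : p₀ ∈ D)
    (hinit : F₁ p₀ = F₂ p₀) :
    ∀ p ∈ D, F₁ p = F₂ p := by
  have hA : ContinuousOn A D := continuousOn_pi.2 fun i => continuousOn_pi.2 (hAcont i)
  have hB : ContinuousOn B D := continuousOn_pi.2 fun i => continuousOn_pi.2 (hBcont i)
  have hF₁ := solvesAlongSlices_of_entries hD hF₁C1 hF₁u hF₁v
  have hF₂ := solvesAlongSlices_of_entries hD hF₂C1 hF₂u hF₂v
  intro p hp
  refine hDconn.isPreconnected.induction₂' (fun x y => F₁ x = F₂ x → F₁ y = F₂ y)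
    (fun x hx => ?_) (fun x y z _ _ _ hxy hyz h => hyz (hxy h)) hp₀ hp hinit
  filter_upwards [nhdsWithin_le_nhds (eventually_uIcc_prod_uIcc_subset hD hx)] with y hy
  refine ⟨hF₁.eq_of_uIcc_prod_uIcc_subset hF₂ hA hB hy,
    hF₁.eq_of_uIcc_prod_uIcc_subset hF₂ hA hB ?_⟩
  rwa [uIcc_comm y.1, uIcc_comm y.2]
end
end

section
/- (Closedness of the differential of the position vector.) Let D ⊆ ℝ² be open, let μ, ν : D → ℝ be smooth with μ nowhere zero, and set γ₁ := −(√|μ|)_u, γ₂ := −(√|μ|)_v. Let x, y, n₁ : D → ℝ⁴ be C¹ maps satisfying ∂_v x = (1/√|μ|)(−γ₂·x − ν·n₁) and ∂_u y = (1/√|μ|)(−γ₁·y − ν·n₁) on D. Then ∂_v(x/√|μ|) = −(ν/|μ|)·n₁ = ∂_u(y/√|μ|) on D; in particular the ℝ⁴-valued 1-form (x/√|μ|)du + (y/√|μ|)dv is closed, which is the integrability condition for the system z_u = x/√|μ|, z_v = y/√|μ| defining the surface in the fundamental theorems. -/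
noncomputable section

/-- Product rule for `q ↦ (f q)⁻¹ • x q`, evaluated at a direction `w`. -/
lemma key_smul_inv {f : ℝ × ℝ → ℝ} {x : ℝ × ℝ → V4} {p : ℝ × ℝ}
    (hf : DifferentiableAt ℝ f p) (hx : DifferentiableAt ℝ x p) (hne : f p ≠ 0)
    (w : ℝ × ℝ) :
    fderiv ℝ (fun q => (f q)⁻¹ • x q) p w =
      (f p)⁻¹ • fderiv ℝ x p w + (-(f p ^ 2)⁻¹ * fderiv ℝ f p w) • x p := by
  have h1 : HasFDerivAt (fun q => (f q)⁻¹)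
      (((ContinuousLinearMap.smulRight (1 : ℝ →L[ℝ] ℝ) (-(f p ^ 2)⁻¹))).comp (fderiv ℝ f p)) p :=
    (hasFDerivAt_inv hne).comp p hf.hasFDerivAt
  have h2 := h1.smul hx.hasFDerivAt
  rw [show (fun q => (f q)⁻¹ • x q) = (fun q => (f q)⁻¹) • x from rfl, h2.fderiv]
  simp [mul_comm]

/-- The common computation for both halves of the statement, in an arbitrary
direction `w`. -/
lemma half_closed
    (D : Set (ℝ × ℝ)) (hD : IsOpen D)
    (μ ν : ℝ × ℝ → ℝ) (hμ : ContDiffOn ℝ (⊤ : ℕ∞) μ D)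
    (hμne : ∀ p ∈ D, μ p ≠ 0)
    (x n₁ : ℝ × ℝ → V4)
    (hx : ContDiffOn ℝ 1 x D)
    (p : ℝ × ℝ) (hp : p ∈ D) (w : ℝ × ℝ) (γ : ℝ)
    (hγ : γ = -(fderiv ℝ (fun q => Real.sqrt |μ q|) p w))
    (hxv : fderiv ℝ x p w = (Real.sqrt |μ p|)⁻¹ • ((-γ) • x p - ν p • n₁ p)) :
    fderiv ℝ (fun q => (Real.sqrt |μ q|)⁻¹ • x q) p w = (-(ν p / |μ p|)) • n₁ p := by
  have hmem := hD.mem_nhds hp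
  have hμd : DifferentiableAt ℝ μ p := (hμ.contDiffAt hmem).differentiableAt (by simp)
  have habs : DifferentiableAt ℝ (fun q => |μ q|) p :=
    (differentiableAt_abs (hμne p hp)).comp p hμd
  have habsne : |μ p| ≠ 0 := abs_ne_zero.mpr (hμne p hp)
  have hfd : DifferentiableAt ℝ (fun q => Real.sqrt |μ q|) p := habs.sqrt habsne
  have hxd : DifferentiableAt ℝ x p := (hx.contDiffAt hmem).differentiableAt one_ne_zero
  have hsne : Real.sqrt |μ p| ≠ 0 := Real.sqrt_ne_zero'.mpr (abs_pos.mpr (hμne p hp))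
  have hs2 : Real.sqrt |μ p| ^ 2 = |μ p| := Real.sq_sqrt (abs_nonneg _)
  rw [key_smul_inv hfd hxd hsne, hxv, ← (by rw [hγ]; ring :
    fderiv ℝ (fun q => Real.sqrt |μ q|) p w = -γ)]
  obtain ⟨s, hs⟩ : ∃ s, Real.sqrt |μ p| = s := ⟨_, rfl⟩
  rw [hs] at hsne hs2 ⊢
  rw [← hs2]
  match_scalars
  all_goals field_simp
  any_goals ring
  all_goals tauto

/-- Closedness of the differential of the position vector.  Under the
equations `∂_v x = (1/√|μ|)(−γ₂x − νn₁)` and `∂_u y = (1/√|μ|)(−γ₁y − νn₁)` one has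
`∂_v(x/√|μ|) = −(ν/|μ|)n₁ = ∂_u(y/√|μ|)` on `D`; hence the `ℝ⁴`-valued 1-form
`(x/√|μ|)du + (y/√|μ|)dv` is closed, which is the integrability condition for the
system `z_u = x/√|μ|`, `z_v = y/√|μ|` defining the surface. -/
theorem position_form_closed
    (D : Set (ℝ × ℝ)) (hD : IsOpen D)
    (μ ν : ℝ × ℝ → ℝ) (hμ : ContDiffOn ℝ (⊤ : ℕ∞) μ D) (hν : ContDiffOn ℝ (⊤ : ℕ∞) ν D)
    (hμne : ∀ p ∈ D, μ p ≠ 0)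
    (γ₁ γ₂ : ℝ × ℝ → ℝ)
    (hγ₁ : ∀ p ∈ D, γ₁ p = -(pu (fun q => Real.sqrt |μ q|) p))
    (hγ₂ : ∀ p ∈ D, γ₂ p = -(pv (fun q => Real.sqrt |μ q|) p))
    (x y n₁ : ℝ × ℝ → V4)
    (hx : ContDiffOn ℝ 1 x D) (hy : ContDiffOn ℝ 1 y D) (hn₁ : ContDiffOn ℝ 1 n₁ D)
    (hxv : ∀ p ∈ D, pv x p = (Real.sqrt |μ p|)⁻¹ • ((-γ₂ p) • x p - ν p • n₁ p))
    (hyu : ∀ p ∈ D, pu y p = (Real.sqrt |μ p|)⁻¹ • ((-γ₁ p) • y p - ν p • n₁ p)) :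
    ∀ p ∈ D,
      pv (fun q => (Real.sqrt |μ q|)⁻¹ • x q) p = (-(ν p / |μ p|)) • n₁ p ∧
      pu (fun q => (Real.sqrt |μ q|)⁻¹ • y q) p = (-(ν p / |μ p|)) • n₁ p := by
  intro p hp
  constructor
  · exact half_closed D hD μ ν hμ hμne x n₁ hx p hp (0, 1) (γ₂ p) (hγ₂ p hp) (hxv p hp)
  · exact half_closed D hD μ ν hμ hμne y n₁ hy p hp (1, 0) (γ₁ p) (hγ₁ p hp) (hyu p hp)
end
end
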